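/- arXiv:1109.6169 — 6 statements merged into one kernel-verified Lean document; each statement's English description precedes it below -/
import Mathlib

section
/- Let G ⊆ (0,∞), h ∈ G with G + h ⊆ G (i.e., g + h ∈ G for all g ∈ G). Let A ⊆ ℝ be a measurable set having positive Lebesgue measure in every nonempty open interval, and suppose A ∩ (A + G) = ∅. Set T = A ∪ (A + G). Then the function x ↦ λ([x, x+h] ∩ T) is strictly increasing on ℝ. -/
open MeasureTheory Set Pointwise

theorem stmt_0 (G : Set ℝ) (hG : G ⊆ Set.Ioi 0) (h : ℝ) (hh : h ∈ G)
    (hGh : (fun g => g + h) '' G ⊆ G)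
    (A : Set ℝ) (hA : MeasurableSet A)
    (hApos : ∀ a b : ℝ, a < b → 0 < volume (A ∩ Set.Ioo a b))
    (hdisj : A ∩ (A + G) = ∅) :
    StrictMono (fun x : ℝ => volume (Set.Icc x (x + h) ∩ (A ∪ (A + G)))) := by
  have hh0 : 0 < h := hG hh
  intro x y hxy
  set T : Set ℝ := A ∪ (A + G) with hTdef
  set μ : Measure ℝ := volume
  -- translation of measure for images
  have himg : ∀ s : Set ℝ, μ ((fun t => t + h) '' s) = μ s := by
    intro s
    rw [Set.image_add_right, measure_preimage_add_right]
  -- T + h ⊆ A + G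
  have hTh : ∀ t ∈ T, t + h ∈ A + G := by
    rintro t (ht | ⟨a, ha, g, hg, rfl⟩)
    · exact Set.add_mem_add ht hh
    · rw [add_assoc]
      exact Set.add_mem_add ha (hGh ⟨g, hg, rfl⟩)
  have hAd : ∀ t ∈ A, t ∉ A + G := by
    intro t ht htg
    exact absurd (Set.mem_inter ht htg) (by rw [hdisj]; exact notMem_empty t)
  -- key inequality
  have key : μ (T ∩ Ico x y) + μ (A ∩ Ioo (x + h) (y + h)) ≤ μ (T ∩ Ico (x + h) (y + h)) := by
    set u : Set ℝ := (fun t => t + h) '' (T ∩ Ico x y) with hu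
    have husub : u ⊆ T ∩ Ico (x + h) (y + h) := by
      rintro _ ⟨t, ⟨htT, ht1, ht2⟩, rfl⟩
      refine ⟨Or.inr (hTh t htT), ?_, ?_⟩
      · show x + h ≤ t + h; linarith
      · show t + h < y + h; linarith
    have hvsub : A ∩ Ioo (x + h) (y + h) ⊆ T ∩ Ico (x + h) (y + h) := by
      rintro t ⟨htA, htI⟩
      exact ⟨Or.inl htA, ⟨le_of_lt htI.1, htI.2⟩⟩
    have hdisj2 : u ∩ A = ∅ := by
      ext t
      simp only [mem_inter_iff, mem_empty_iff_false, iff_false, not_and]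
      rintro ⟨s, ⟨hsT, _⟩, rfl⟩ hsA
      exact hAd _ hsA (hTh s hsT)
    calc μ (T ∩ Ico x y) + μ (A ∩ Ioo (x + h) (y + h))
        = μ u + μ (A ∩ Ioo (x + h) (y + h)) := by rw [hu, himg]
      _ ≤ μ ((u ∪ (A ∩ Ioo (x + h) (y + h))) \ A) + μ ((u ∪ (A ∩ Ioo (x + h) (y + h))) ∩ A) := by
          refine add_le_add (measure_mono ?_) (measure_mono ?_)
          · intro t ht
            refine ⟨Or.inl ht, fun htA => ?_⟩
            have : t ∈ u ∩ A := ⟨ht, htA⟩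
            rw [hdisj2] at this
            exact this
          · rintro t ⟨htA, htI⟩
            exact ⟨Or.inr ⟨htA, htI⟩, htA⟩
      _ = μ (u ∪ (A ∩ Ioo (x + h) (y + h))) := by
          rw [add_comm, measure_inter_add_diff _ hA]
      _ ≤ μ (T ∩ Ico (x + h) (y + h)) := measure_mono (union_subset husub hvsub)
  -- endpoint adjustment : Ico ≤ Ioc + point
  have hIco_Ioc : μ (T ∩ Ico (x + h) (y + h)) ≤ μ (T ∩ Ioc (x + h) (y + h)) := by
    calc μ (T ∩ Ico (x + h) (y + h)) ≤ μ ((T ∩ Ioc (x + h) (y + h)) ∪ {x + h}) := by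
          apply measure_mono
          rintro t ⟨htT, h1, h2⟩
          rcases eq_or_lt_of_le h1 with heq | hlt
          · exact Or.inr (by simp [heq.symm])
          · exact Or.inl ⟨htT, hlt, le_of_lt h2⟩
      _ ≤ μ (T ∩ Ioc (x + h) (y + h)) + μ ({x + h} : Set ℝ) := measure_union_le _ _
      _ = μ (T ∩ Ioc (x + h) (y + h)) := by simp [μ]
  -- splitting equations
  have split1 : μ (Icc x (y + h) ∩ T) = μ (Icc x (x + h) ∩ T) + μ (T ∩ Ioc (x + h) (y + h)) := by
    have := measure_inter_add_diff (μ := μ) (Icc x (y + h) ∩ T) (measurableSet_Icc (a := x) (b := x + h))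
    rw [← this]
    congr 1
    · congr 1
      ext t
      simp only [mem_inter_iff, mem_Icc]
      constructor
      · rintro ⟨⟨⟨h1, h2⟩, hT⟩, h3, h4⟩; exact ⟨⟨h3, h4⟩, hT⟩
      · rintro ⟨⟨h1, h2⟩, hT⟩; exact ⟨⟨⟨h1, by linarith⟩, hT⟩, h1, h2⟩
    · congr 1
      ext t
      simp only [mem_diff, mem_inter_iff, mem_Icc, mem_Ioc, not_and, not_le]
      constructor
      · rintro ⟨⟨⟨h1, h2⟩, hT⟩, h3⟩; exact ⟨hT, h3 h1, h2⟩
      · rintro ⟨hT, h1, h2⟩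
        exact ⟨⟨⟨by linarith, h2⟩, hT⟩, fun _ => h1⟩
  have split2 : μ (Icc x (y + h) ∩ T) = μ (Icc y (y + h) ∩ T) + μ (T ∩ Ico x y) := by
    have := measure_inter_add_diff (μ := μ) (Icc x (y + h) ∩ T) (measurableSet_Icc (a := y) (b := y + h))
    rw [← this]
    congr 1
    · congr 1
      ext t
      simp only [mem_inter_iff, mem_Icc]
      constructor
      · rintro ⟨⟨⟨h1, h2⟩, hT⟩, h3, h4⟩; exact ⟨⟨h3, h4⟩, hT⟩
      · rintro ⟨⟨h1, h2⟩, hT⟩; exact ⟨⟨⟨by linarith, h2⟩, hT⟩, h1, h2⟩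
    · congr 1
      ext t
      simp only [mem_diff, mem_inter_iff, mem_Icc, mem_Ico, not_and, not_le]
      constructor
      · rintro ⟨⟨⟨h1, h2⟩, hT⟩, h3⟩
        by_cases hty : y ≤ t
        · exact absurd (h3 hty) (not_lt.mpr h2)
        · exact ⟨hT, h1, not_le.mp hty⟩
      · rintro ⟨hT, h1, h2⟩
        exact ⟨⟨⟨h1, by linarith⟩, hT⟩, fun hy => absurd h2 (not_lt.mpr hy)⟩
  -- finiteness
  have hfin : μ (T ∩ Ico x y) ≠ ⊤ :=
    ne_top_of_le_ne_top (by simp [μ]) (measure_mono inter_subset_right)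
  have hafin : μ (Icc x (x + h) ∩ T) ≠ ⊤ :=
    ne_top_of_le_ne_top (by simp [μ]) (measure_mono inter_subset_left)
  have heps : 0 < μ (A ∩ Ioo (x + h) (y + h)) := hApos _ _ (by linarith)
  -- conclude
  have main : μ (Icc x (x + h) ∩ T) + μ (A ∩ Ioo (x + h) (y + h)) ≤ μ (Icc y (y + h) ∩ T) := by
    rw [← ENNReal.add_le_add_iff_right hfin]
    calc μ (Icc x (x + h) ∩ T) + μ (A ∩ Ioo (x + h) (y + h)) + μ (T ∩ Ico x y)
        ≤ μ (Icc x (x + h) ∩ T) + μ (T ∩ Ioc (x + h) (y + h)) := by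
          rw [add_assoc]
          gcongr
          rw [add_comm]
          exact key.trans hIco_Ioc
      _ = μ (Icc y (y + h) ∩ T) + μ (T ∩ Ico x y) := by rw [← split1, split2]
  calc μ (Icc x (x + h) ∩ T) < μ (Icc x (x + h) ∩ T) + μ (A ∩ Ioo (x + h) (y + h)) :=
        ENNReal.lt_add_right hafin (ne_of_gt heps)
    _ ≤ μ (Icc y (y + h) ∩ T) := main
end

section
/- For every h > 0 there exists a measurable set T ⊆ ℝ such that for all x ≠ y, λ([x, x+h] ∩ T) ≠ λ([y, y+h] ∩ T). In fact, x ↦ λ([x, x+h] ∩ T) can be made strictly increasing. -/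
open scoped ENNReal NNReal


open MeasureTheory Set

/-- Union of a closed set with empty interior and a set with empty interior
has empty interior. -/
lemma aux_interior_union {A B : Set ℝ} (hA : IsClosed A) (hiA : interior A = ∅)
    (hiB : interior B = ∅) : interior (A ∪ B) = ∅ := by
  rcases Set.eq_empty_or_nonempty (interior (A ∪ B) \ A) with hE | ⟨y, hy⟩
  · have hsub : interior (A ∪ B) ⊆ A := fun z hz => by
      by_contra hzA
      exact Set.eq_empty_iff_forall_notMem.mp hE z ⟨hz, hzA⟩
    have : interior (A ∪ B) ⊆ interior A := interior_maximal hsub isOpen_interior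
    rw [hiA] at this
    exact Set.eq_empty_iff_forall_notMem.mpr fun x hx => this hx
  · exfalso
    have hV : IsOpen (interior (A ∪ B) \ A) := isOpen_interior.sdiff hA
    have hVB : interior (A ∪ B) \ A ⊆ B := fun z hz =>
      (interior_subset hz.1).resolve_left hz.2
    have : y ∈ interior B := interior_maximal hVB hV hy
    rw [hiB] at this
    exact this

/-- In every open interval there is a closed, nowhere dense set of positive measure. -/
lemma aux_exists_closed_nwd (a b : ℝ) (hab : a < b) :
    ∃ K : Set ℝ, K ⊆ Set.Ioo a b ∧ IsClosed K ∧ interior K = ∅ ∧ 0 < volume K := by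
  set δ : ℝ := (b - a) / 16 with hδ
  have hba : 0 < b - a := by linarith
  have hδpos : 0 < δ := by rw [hδ]; positivity
  set e : ℕ → ℚ := fun n => (Denumerable.eqv ℚ).symm n with he
  set U : Set ℝ := ⋃ i : ℕ, Metric.ball ((e i : ℝ)) (δ * (1 / 2) ^ i) with hU
  have hUopen : IsOpen U := isOpen_iUnion fun i => Metric.isOpen_ball
  have hUdense : Dense U := by
    refine Rat.denseRange_cast.mono ?_
    rintro x ⟨q, rfl⟩
    refine Set.mem_iUnion.mpr ⟨Denumerable.eqv ℚ q, ?_⟩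
    rw [he]
    simp only [Equiv.symm_apply_apply, Metric.mem_ball, dist_self]
    positivity
  have hUvol : volume U ≤ ENNReal.ofReal (4 * δ) := by
    calc volume U ≤ ∑' i : ℕ, volume (Metric.ball ((e i : ℝ)) (δ * (1 / 2) ^ i)) :=
          measure_iUnion_le _
      _ = ∑' i : ℕ, ENNReal.ofReal (2 * (δ * (1 / 2) ^ i)) := by
          simp [Real.volume_ball]
      _ = ENNReal.ofReal (∑' i : ℕ, 2 * (δ * (1 / 2) ^ i)) := by
          rw [ENNReal.ofReal_tsum_of_nonneg]
          · intro i; positivity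
          · have : Summable fun i : ℕ => ((1:ℝ) / 2) ^ i := summable_geometric_two
            simpa [mul_assoc] using this.mul_left (2 * δ)
      _ = ENNReal.ofReal (4 * δ) := by
          congr 1
          have hfun : (fun i : ℕ => 2 * (δ * (1 / 2) ^ i)) = fun i : ℕ => (2 * δ) * (1 / 2) ^ i := by
            funext i; ring
          rw [hfun, tsum_mul_left, tsum_geometric_two]; ring
  set a' : ℝ := a + (b - a) / 4 with ha'
  set b' : ℝ := b - (b - a) / 4 with hb'
  have ha'b' : a' < b' := by rw [ha', hb']; linarith
  refine ⟨Set.Icc a' b' \ U, ?_, ?_, ?_, ?_⟩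
  · refine (Set.diff_subset).trans ?_
    exact Set.Icc_subset_Ioo (by rw [ha']; linarith) (by rw [hb']; linarith)
  · exact isClosed_Icc.sdiff hUopen
  · rcases Set.eq_empty_or_nonempty (interior (Set.Icc a' b' \ U)) with hE | hNE
    · exact hE
    · exfalso
      obtain ⟨x, hx⟩ := hUdense.inter_open_nonempty _ isOpen_interior hNE
      exact (interior_subset hx.1).2 hx.2
  · by_contra hK
    push_neg at hK
    have hK0 : volume (Set.Icc a' b' \ U) = 0 := le_antisymm hK zero_le
    have hcover : Set.Icc a' b' ⊆ (Set.Icc a' b' \ U) ∪ U := fun z hz => by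
      by_cases hzU : z ∈ U
      · exact Or.inr hzU
      · exact Or.inl ⟨hz, hzU⟩
    have h1 : volume (Set.Icc a' b') ≤ volume (Set.Icc a' b' \ U) + volume U :=
      (measure_mono hcover).trans (measure_union_le _ _)
    rw [hK0, zero_add, Real.volume_Icc] at h1
    have h2 : ENNReal.ofReal (b' - a') ≤ ENNReal.ofReal (4 * δ) := h1.trans hUvol
    have h3 : b' - a' ≤ 4 * δ := by
      have := (ENNReal.ofReal_le_ofReal_iff (by positivity)).mp h2
      exact this
    rw [ha', hb', hδ] at h3
    linarith

/-- In every open interval, avoiding a given closed nowhere dense set, there is a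
closed nowhere dense set of positive measure. -/
lemma aux_exists_good (a b : ℝ) (hab : a < b) (U : Set ℝ) (hUc : IsClosed U)
    (hUi : interior U = ∅) :
    ∃ K : Set ℝ, K ⊆ Set.Ioo a b ∧ IsClosed K ∧ interior K = ∅ ∧
      Disjoint K U ∧ 0 < volume K := by
  have hopen : IsOpen (Set.Ioo a b \ U) := isOpen_Ioo.sdiff hUc
  have hne : (Set.Ioo a b \ U).Nonempty := by
    by_contra hE
    rw [Set.not_nonempty_iff_eq_empty, Set.diff_eq_empty] at hE
    have : Set.Ioo a b ⊆ interior U := interior_maximal hE isOpen_Ioo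
    rw [hUi] at this
    exact (Set.nonempty_Ioo.mpr hab).ne_empty (Set.subset_empty_iff.mp this)
  obtain ⟨x, hx⟩ := hne
  obtain ⟨ε, hε, hball⟩ := Metric.isOpen_iff.mp hopen x hx
  obtain ⟨K, hK1, hK2, hK3, hK4⟩ := aux_exists_closed_nwd (x - ε) (x + ε) (by linarith)
  have hKsub : K ⊆ Set.Ioo a b \ U := by
    refine hK1.trans ?_
    rw [← Real.ball_eq_Ioo]
    exact hball
  exact ⟨K, hKsub.trans Set.diff_subset, hK2, hK3,
    Set.disjoint_left.mpr fun z hz => (hKsub hz).2, hK4⟩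

noncomputable def auxEnc : ℕ → ℤ × ℚ × ℚ := fun n => (Denumerable.eqv (ℤ × ℚ × ℚ)).symm n

noncomputable def auxTarg (p : ℤ × ℚ × ℚ) : ℝ × ℝ :=
  if 0 ≤ p.2.1 ∧ p.2.1 < p.2.2 ∧ p.2.2 ≤ 1 then ((p.2.1 : ℝ), (p.2.2 : ℝ)) else (0, 1)

lemma auxTarg_lt (p : ℤ × ℚ × ℚ) : (auxTarg p).1 < (auxTarg p).2 := by
  unfold auxTarg
  split
  · rename_i hcond
    dsimp only
    exact_mod_cast hcond.2.1
  · norm_num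

lemma auxTarg_sub (p : ℤ × ℚ × ℚ) :
    Set.Ioo (auxTarg p).1 (auxTarg p).2 ⊆ Set.Ioo (0:ℝ) 1 := by
  unfold auxTarg
  split
  · rename_i hcond
    dsimp only
    refine Set.Ioo_subset_Ioo ?_ ?_
    · exact_mod_cast hcond.1
    · exact_mod_cast hcond.2.2
  · exact subset_rfl

/-- The state: an accumulated closed nowhere dense set. -/
def AuxGoodU : Type := {U : Set ℝ // IsClosed U ∧ interior U = ∅}

noncomputable def auxStep (p : ℤ × ℚ × ℚ) (U : AuxGoodU) : Set ℝ :=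
  (aux_exists_good (auxTarg p).1 (auxTarg p).2 (auxTarg_lt p) U.1 U.2.1 U.2.2).choose

lemma auxStep_spec (p : ℤ × ℚ × ℚ) (U : AuxGoodU) :
    auxStep p U ⊆ Set.Ioo (auxTarg p).1 (auxTarg p).2 ∧ IsClosed (auxStep p U) ∧
      interior (auxStep p U) = ∅ ∧ Disjoint (auxStep p U) U.1 ∧ 0 < volume (auxStep p U) :=
  (aux_exists_good (auxTarg p).1 (auxTarg p).2 (auxTarg_lt p) U.1 U.2.1 U.2.2).choose_spec

noncomputable def auxAcc : ℕ → AuxGoodU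
  | 0 => ⟨∅, isClosed_empty, interior_empty⟩
  | (j+1) => ⟨(auxAcc j).1 ∪ auxStep (auxEnc j) (auxAcc j),
      (auxAcc j).2.1.union (auxStep_spec (auxEnc j) (auxAcc j)).2.1,
      aux_interior_union (auxAcc j).2.1 (auxAcc j).2.2
        (auxStep_spec (auxEnc j) (auxAcc j)).2.2.1⟩

noncomputable def auxB (j : ℕ) : Set ℝ := auxStep (auxEnc j) (auxAcc j)

lemma auxAcc_succ (j : ℕ) : (auxAcc (j+1)).1 = (auxAcc j).1 ∪ auxB j := rfl

lemma auxB_subset (j : ℕ) :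
    auxB j ⊆ Set.Ioo (auxTarg (auxEnc j)).1 (auxTarg (auxEnc j)).2 :=
  (auxStep_spec _ _).1

lemma auxB_closed (j : ℕ) : IsClosed (auxB j) := (auxStep_spec _ _).2.1

lemma auxB_pos (j : ℕ) : 0 < volume (auxB j) := (auxStep_spec _ _).2.2.2.2

lemma auxB_disj_acc (j : ℕ) : Disjoint (auxB j) (auxAcc j).1 := (auxStep_spec _ _).2.2.2.1

lemma auxB_sub01 (j : ℕ) : auxB j ⊆ Set.Ioo (0:ℝ) 1 :=
  (auxB_subset j).trans (auxTarg_sub _)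

lemma auxAcc_mono : Monotone fun j => (auxAcc j).1 := by
  apply monotone_nat_of_le_succ
  intro j
  rw [auxAcc_succ]
  exact Set.subset_union_left

lemma auxB_sub_acc {i j : ℕ} (hij : i < j) : auxB i ⊆ (auxAcc j).1 := by
  have h1 : auxB i ⊆ (auxAcc (i+1)).1 := by
    rw [auxAcc_succ]; exact Set.subset_union_right
  exact h1.trans (auxAcc_mono hij)

lemma auxB_disjoint {i j : ℕ} (hij : i ≠ j) : Disjoint (auxB i) (auxB j) := by
  rcases lt_or_gt_of_ne hij with hlt | hgt
  · exact ((auxB_disj_acc j).mono_right (auxB_sub_acc hlt)).symm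
  · exact (auxB_disj_acc i).mono_right (auxB_sub_acc hgt)

noncomputable def auxA (n : ℤ) : Set ℝ := ⋃ (j : ℕ) (_ : (auxEnc j).1 = n), auxB j

lemma auxA_meas (n : ℤ) : MeasurableSet (auxA n) :=
  MeasurableSet.iUnion fun j => MeasurableSet.iUnion fun _ => (auxB_closed j).measurableSet

lemma auxA_sub (n : ℤ) : auxA n ⊆ Set.Ioo (0:ℝ) 1 :=
  Set.iUnion₂_subset fun j _ => auxB_sub01 j

lemma auxA_disjoint {m n : ℤ} (hmn : m ≠ n) : Disjoint (auxA m) (auxA n) := by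
  rw [Set.disjoint_left]
  intro x hxm hxn
  obtain ⟨i, hi, hxi⟩ := Set.mem_iUnion₂.mp hxm
  obtain ⟨j, hj, hxj⟩ := Set.mem_iUnion₂.mp hxn
  have hij : i ≠ j := by
    rintro rfl; exact hmn (hi ▸ hj ▸ rfl)
  exact Set.disjoint_left.mp (auxB_disjoint hij) hxi hxj

lemma auxA_pos (n : ℤ) {u v : ℝ} (h0 : 0 ≤ u) (huv : u < v) (h1 : v ≤ 1) :
    0 < volume (auxA n ∩ Set.Ioc u v) := by
  obtain ⟨q, hq1, hq2⟩ := exists_rat_btwn huv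
  obtain ⟨r, hr1, hr2⟩ := exists_rat_btwn hq2
  have hqr : (q:ℝ) < (r:ℝ) := hr1
  set j : ℕ := Denumerable.eqv (ℤ × ℚ × ℚ) (n, q, r) with hjdef
  have hEnc : auxEnc j = (n, q, r) := by
    rw [auxEnc, hjdef, Equiv.symm_apply_apply]
  have hcond : (0:ℚ) ≤ q ∧ q < r ∧ r ≤ 1 := by
    refine ⟨?_, ?_, ?_⟩
    · exact_mod_cast (h0.trans hq1.le)
    · exact_mod_cast hqr
    · exact_mod_cast (hr2.le.trans h1)
  have htarg : auxTarg (auxEnc j) = ((q:ℝ), (r:ℝ)) := by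
    rw [hEnc]; unfold auxTarg; rw [if_pos hcond]
  have hBsub : auxB j ⊆ auxA n ∩ Set.Ioc u v := by
    intro x hx
    have hx' := auxB_subset j hx
    rw [htarg] at hx'
    refine ⟨Set.mem_iUnion₂.mpr ⟨j, by rw [hEnc], hx⟩, ?_⟩
    exact ⟨hq1.trans hx'.1, hx'.2.le.trans hr2.le⟩
  exact (auxB_pos j).trans_le (measure_mono hBsub)

theorem stmt_1 (h : ℝ) (hh : 0 < h) :
    ∃ T : Set ℝ, MeasurableSet T ∧
      StrictMono (fun x : ℝ => volume (Set.Icc x (x + h) ∩ T)) := by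
  classical
  set C : ℤ → Set ℝ := fun n => (fun x : ℝ => x / h - (n:ℝ)) ⁻¹' auxA n with hC
  set G : Set ℝ := ⋃ n : ℤ, C n with hG
  set T : Set ℝ := ⋃ m : ℕ, (fun x : ℝ => x - (m:ℝ) * h) ⁻¹' G with hT
  have hφm : ∀ n : ℤ, Measurable (fun x : ℝ => x / h - (n:ℝ)) :=
    fun n => (measurable_id.div_const h).sub_const _
  have hCmeas : ∀ n, MeasurableSet (C n) := fun n => (hφm n) (auxA_meas n)
  have hGmeas : MeasurableSet G := MeasurableSet.iUnion hCmeas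
  have hTmeas : MeasurableSet T :=
    MeasurableSet.iUnion fun m => (measurable_id.sub_const _) hGmeas
  -- two points of G cannot differ by a positive multiple of h
  have hsep : ∀ x : ℝ, x ∈ G → ∀ m : ℕ, x - ((m:ℝ) + 1) * h ∈ G → False := by
    intro x hxG m hmG
    obtain ⟨n, hn⟩ := Set.mem_iUnion.mp hxG
    obtain ⟨n', hn'⟩ := Set.mem_iUnion.mp hmG
    have hn2 : x / h - (n:ℝ) ∈ auxA n := hn
    have hn'2 : (x - ((m:ℝ) + 1) * h) / h - (n':ℝ) ∈ auxA n' := hn'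
    have hval : (x - ((m:ℝ) + 1) * h) / h - (n':ℝ) = x / h - (n':ℝ) - ((m:ℝ) + 1) := by
      field_simp
      ring
    rw [hval] at hn'2
    obtain ⟨l1, u1⟩ := auxA_sub n hn2
    obtain ⟨l2, u2⟩ := auxA_sub n' hn'2
    have hint : ((n' + (m:ℤ) + 1 - n : ℤ) : ℝ)
        = (x / h - (n:ℝ)) - (x / h - (n':ℝ) - ((m:ℝ) + 1)) := by push_cast; ring
    have hlt1 : ((n' + (m:ℤ) + 1 - n : ℤ) : ℝ) < 1 := by rw [hint]; linarith
    have hgt1 : (-1 : ℝ) < ((n' + (m:ℤ) + 1 - n : ℤ) : ℝ) := by rw [hint]; linarith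
    have a1 : n' + (m:ℤ) + 1 - n < 1 := by exact_mod_cast hlt1
    have a2 : -1 < n' + (m:ℤ) + 1 - n := by exact_mod_cast hgt1
    have hzero : n' + (m:ℤ) + 1 - n = 0 := by omega
    have hne : n ≠ n' := by omega
    have hpt : x / h - (n:ℝ) = x / h - (n':ℝ) - ((m:ℝ) + 1) := by
      have hval2 : n = n' + (m:ℤ) + 1 := by omega
      have hcast : (n:ℝ) = (n':ℝ) + (m:ℝ) + 1 := by rw [hval2]; push_cast; ring
      rw [hcast]; ring
    exact Set.disjoint_left.mp (auxA_disjoint hne) hn2 (by rw [hpt]; exact hn'2)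
  have hGsubT : G ⊆ T := fun x hx => Set.mem_iUnion.mpr ⟨0, by simpa using hx⟩
  have hTshift : ∀ x : ℝ, x ∈ T → x + h ∈ T := by
    intro x hx
    obtain ⟨m, hm⟩ := Set.mem_iUnion.mp hx
    refine Set.mem_iUnion.mpr ⟨m + 1, ?_⟩
    show x + h - ((m + 1 : ℕ) : ℝ) * h ∈ G
    push_cast
    rw [show x + h - ((m:ℝ) + 1) * h = x - (m:ℝ) * h from by ring]
    exact hm
  -- key translation inequality
  have hkey : ∀ a b : ℝ, volume (Set.Ioc a b ∩ T) + volume (Set.Ioc (a+h) (b+h) ∩ G)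
      ≤ volume (Set.Ioc (a+h) (b+h) ∩ T) := by
    intro a b
    set S1 : Set ℝ := (fun x : ℝ => x - h) ⁻¹' (Set.Ioc a b ∩ T) with hS1
    have hS1vol : volume S1 = volume (Set.Ioc a b ∩ T) := by
      rw [hS1, show (fun x : ℝ => x - h) = fun x : ℝ => x + (-h) from by funext x; ring]
      exact measure_preimage_add_right volume (-h) _
    have hS1sub : S1 ⊆ Set.Ioc (a+h) (b+h) ∩ T := by
      intro x hx
      have hxI : x - h ∈ Set.Ioc a b := hx.1
      have hxT : x - h ∈ T := hx.2
      refine ⟨⟨by linarith [hxI.1], by linarith [hxI.2]⟩, ?_⟩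
      have := hTshift _ hxT
      simpa using this
    have hS2sub : Set.Ioc (a+h) (b+h) ∩ G ⊆ Set.Ioc (a+h) (b+h) ∩ T :=
      fun x hx => ⟨hx.1, hGsubT hx.2⟩
    have hdisj : Disjoint S1 (Set.Ioc (a+h) (b+h) ∩ G) := by
      rw [Set.disjoint_left]
      intro x hx1 hx2
      obtain ⟨m, hm⟩ := Set.mem_iUnion.mp hx1.2
      refine hsep x hx2.2 m ?_
      show x - ((m:ℝ) + 1) * h ∈ G
      rw [show x - ((m:ℝ) + 1) * h = x - h - (m:ℝ) * h from by ring]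
      exact hm
    calc volume (Set.Ioc a b ∩ T) + volume (Set.Ioc (a+h) (b+h) ∩ G)
        = volume S1 + volume (Set.Ioc (a+h) (b+h) ∩ G) := by rw [hS1vol]
      _ = volume (S1 ∪ (Set.Ioc (a+h) (b+h) ∩ G)) :=
          (measure_union hdisj (measurableSet_Ioc.inter hGmeas)).symm
      _ ≤ volume (Set.Ioc (a+h) (b+h) ∩ T) :=
          measure_mono (Set.union_subset hS1sub hS2sub)
  -- G has positive measure in every interval
  have hGpos : ∀ a b : ℝ, a < b → 0 < volume (Set.Ioc a b ∩ G) := by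
    intro a b hab
    set n : ℤ := ⌊a / h⌋ with hn
    have hfl1 : (n:ℝ) ≤ a / h := Int.floor_le _
    have hfl2 : a / h < (n:ℝ) + 1 := Int.lt_floor_add_one _
    have han : (n:ℝ) * h ≤ a := (le_div_iff₀ hh).mp hfl1
    have han2 : a < ((n:ℝ) + 1) * h := (div_lt_iff₀ hh).mp hfl2
    set c : ℝ := min b ((n:ℝ) * h + h) with hc
    have hac : a < c := lt_min hab (by linarith)
    have hcb : c ≤ b := min_le_left _ _
    have hcn : c ≤ (n:ℝ) * h + h := min_le_right _ _
    set u : ℝ := a / h - (n:ℝ) with hu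
    set v : ℝ := c / h - (n:ℝ) with hv
    have hu0 : 0 ≤ u := by rw [hu]; linarith
    have huv : u < v := by
      rw [hu, hv]
      have : a / h < c / h := (div_lt_div_iff_of_pos_right hh).mpr hac
      linarith
    have hv1 : v ≤ 1 := by
      rw [hv]
      have : c / h ≤ (n:ℝ) + 1 := by rw [div_le_iff₀ hh]; linarith
      linarith
    have hpre : (fun x : ℝ => x / h - (n:ℝ)) ⁻¹' (auxA n ∩ Set.Ioc u v)
        ⊆ Set.Ioc a b ∩ G := by
      intro x hx
      obtain ⟨hxA, hxI⟩ := hx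
      have hxI2 : x / h - (n:ℝ) ∈ Set.Ioc u v := hxI
      have hxa : a < x := by
        have h1 : u < x / h - (n:ℝ) := hxI2.1
        rw [hu] at h1
        have : a / h < x / h := by linarith
        exact (div_lt_div_iff_of_pos_right hh).mp this
      have hxc : x ≤ c := by
        have h1 : x / h - (n:ℝ) ≤ v := hxI2.2
        rw [hv] at h1
        have : x / h ≤ c / h := by linarith
        exact (div_le_div_iff_of_pos_right hh).mp this
      exact ⟨⟨hxa, hxc.trans hcb⟩, Set.mem_iUnion.mpr ⟨n, hxA⟩⟩
    have habs : |(h⁻¹)⁻¹| = h := by rw [inv_inv, abs_of_pos hh]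
    have hveq : volume ((fun x : ℝ => x / h - (n:ℝ)) ⁻¹' (auxA n ∩ Set.Ioc u v))
        = ENNReal.ofReal h * volume (auxA n ∩ Set.Ioc u v) := by
      rw [show (fun x : ℝ => x / h - (n:ℝ))
          = (fun y : ℝ => y + -(n:ℝ)) ∘ (fun x : ℝ => x * h⁻¹) from by
        funext x; rw [Function.comp_apply, div_eq_mul_inv, sub_eq_add_neg]]
      rw [Set.preimage_comp, Real.volume_preimage_mul_right (inv_ne_zero (ne_of_gt hh)),
        measure_preimage_add_right, habs]
    have hApos := auxA_pos n hu0 huv hv1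
    have hofr : (0:ℝ≥0∞) < ENNReal.ofReal h := ENNReal.ofReal_pos.mpr hh
    calc (0:ℝ≥0∞) < ENNReal.ofReal h * volume (auxA n ∩ Set.Ioc u v) :=
          ENNReal.mul_pos (ne_of_gt hofr) (ne_of_gt hApos)
      _ = volume ((fun x : ℝ => x / h - (n:ℝ)) ⁻¹' (auxA n ∩ Set.Ioc u v)) := hveq.symm
      _ ≤ volume (Set.Ioc a b ∩ G) := measure_mono hpre
  -- Icc and Ioc give the same value
  have hIccIoc : ∀ x : ℝ, volume (Set.Icc x (x+h) ∩ T) = volume (Set.Ioc x (x+h) ∩ T) := by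
    intro x
    apply le_antisymm
    · have hsub : Set.Icc x (x+h) ∩ T ⊆ (Set.Ioc x (x+h) ∩ T) ∪ {x} := by
        rintro y ⟨hy, hyT⟩
        rcases eq_or_lt_of_le hy.1 with heq | hlt
        · exact Or.inr (by simp [← heq])
        · exact Or.inl ⟨⟨hlt, hy.2⟩, hyT⟩
      calc volume (Set.Icc x (x+h) ∩ T) ≤ volume ((Set.Ioc x (x+h) ∩ T) ∪ {x}) :=
            measure_mono hsub
        _ ≤ volume (Set.Ioc x (x+h) ∩ T) + volume ({x} : Set ℝ) := measure_union_le _ _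
        _ = volume (Set.Ioc x (x+h) ∩ T) := by rw [Real.volume_singleton, add_zero]
    · exact measure_mono (Set.inter_subset_inter_left _ Set.Ioc_subset_Icc_self)
  have hfin : ∀ a b : ℝ, volume (Set.Ioc a b ∩ T) ≠ ⊤ := fun a b =>
    ne_top_of_le_ne_top (by rw [Real.volume_Ioc]; exact ENNReal.ofReal_ne_top)
      (measure_mono Set.inter_subset_left)
  -- local strict monotonicity
  have hloc : ∀ x y : ℝ, x < y → y ≤ x + h →
      volume (Set.Ioc x (x+h) ∩ T) < volume (Set.Ioc y (y+h) ∩ T) := by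
    intro x y hxy hyxh
    have hsplit1 : Set.Ioc x (x+h) ∩ T = (Set.Ioc x y ∩ T) ∪ (Set.Ioc y (x+h) ∩ T) := by
      rw [← Set.union_inter_distrib_right, Set.Ioc_union_Ioc_eq_Ioc hxy.le hyxh]
    have hsplit2 : Set.Ioc y (y+h) ∩ T = (Set.Ioc y (x+h) ∩ T) ∪ (Set.Ioc (x+h) (y+h) ∩ T) := by
      rw [← Set.union_inter_distrib_right, Set.Ioc_union_Ioc_eq_Ioc hyxh (by linarith)]
    have hd1 : Disjoint (Set.Ioc x y ∩ T) (Set.Ioc y (x+h) ∩ T) :=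
      (Set.Ioc_disjoint_Ioc_of_le le_rfl).mono Set.inter_subset_left Set.inter_subset_left
    have hd2 : Disjoint (Set.Ioc y (x+h) ∩ T) (Set.Ioc (x+h) (y+h) ∩ T) :=
      (Set.Ioc_disjoint_Ioc_of_le le_rfl).mono Set.inter_subset_left Set.inter_subset_left
    have he1 : volume (Set.Ioc x (x+h) ∩ T)
        = volume (Set.Ioc x y ∩ T) + volume (Set.Ioc y (x+h) ∩ T) := by
      rw [hsplit1, measure_union hd1 (measurableSet_Ioc.inter hTmeas)]
    have he2 : volume (Set.Ioc y (y+h) ∩ T)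
        = volume (Set.Ioc y (x+h) ∩ T) + volume (Set.Ioc (x+h) (y+h) ∩ T) := by
      rw [hsplit2, measure_union hd2 (measurableSet_Ioc.inter hTmeas)]
    have hgpos := hGpos (x+h) (y+h) (by linarith)
    have hkxy := hkey x y
    rw [he1, he2]
    have step1 : volume (Set.Ioc x y ∩ T) + volume (Set.Ioc y (x+h) ∩ T)
        < volume (Set.Ioc x y ∩ T) + volume (Set.Ioc y (x+h) ∩ T)
          + volume (Set.Ioc (x+h) (y+h) ∩ G) :=
      ENNReal.lt_add_right (ENNReal.add_ne_top.mpr ⟨hfin _ _, hfin _ _⟩) (ne_of_gt hgpos)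
    have step2 : volume (Set.Ioc x y ∩ T) + volume (Set.Ioc y (x+h) ∩ T)
          + volume (Set.Ioc (x+h) (y+h) ∩ G)
        ≤ volume (Set.Ioc y (x+h) ∩ T) + volume (Set.Ioc (x+h) (y+h) ∩ T) := by
      calc volume (Set.Ioc x y ∩ T) + volume (Set.Ioc y (x+h) ∩ T)
            + volume (Set.Ioc (x+h) (y+h) ∩ G)
          = volume (Set.Ioc y (x+h) ∩ T)
            + (volume (Set.Ioc x y ∩ T) + volume (Set.Ioc (x+h) (y+h) ∩ G)) := by ring
        _ ≤ volume (Set.Ioc y (x+h) ∩ T) + volume (Set.Ioc (x+h) (y+h) ∩ T) :=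
            add_le_add_right hkxy _
    exact lt_of_lt_of_le step1 step2
  -- globalize
  have hglob : ∀ N : ℕ, ∀ x y : ℝ, x < y → y ≤ x + ((N:ℝ) + 1) * h →
      volume (Set.Ioc x (x+h) ∩ T) < volume (Set.Ioc y (y+h) ∩ T) := by
    intro N
    induction N with
    | zero =>
      intro x y hxy hb
      apply hloc x y hxy
      have : ((0:ℕ):ℝ) + 1 = 1 := by norm_num
      rw [this, one_mul] at hb
      exact hb
    | succ N ih =>
      intro x y hxy hb
      by_cases hcase : y ≤ x + h
      · exact hloc x y hxy hcase
      · push_neg at hcase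
        have h1 : volume (Set.Ioc x (x+h) ∩ T) < volume (Set.Ioc (x+h) (x+h+h) ∩ T) :=
          hloc x (x+h) (by linarith) le_rfl
        have h2 : volume (Set.Ioc (x+h) (x+h+h) ∩ T) < volume (Set.Ioc y (y+h) ∩ T) := by
          apply ih (x+h) y hcase
          push_cast at hb ⊢
          linarith
        exact h1.trans h2
  refine ⟨T, hTmeas, ?_⟩
  intro x y hxy
  show volume (Set.Icc x (x + h) ∩ T) < volume (Set.Icc y (y + h) ∩ T)
  rw [hIccIoc x, hIccIoc y]
  obtain ⟨N, hN⟩ := exists_nat_ge ((y - x) / h)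
  apply hglob N x y hxy
  have h1 : y - x ≤ (N:ℝ) * h := by
    rw [div_le_iff₀ hh] at hN; linarith
  have h2 : ((N:ℝ) + 1) * h = (N:ℝ) * h + h := by ring
  linarith
end

section
/- For any locally finite set G ⊆ (0,∞) (i.e., G has finitely many elements in every bounded interval) there exists a measurable set A ⊆ ℝ such that A has positive Lebesgue measure in every nonempty open interval and A ∩ (A + G) = ∅. -/
open MeasureTheory Set Pointwise

namespace Stmt2Aux

noncomputable section

def pq (k : ℕ) : ℚ × ℚ := Denumerable.ofNat (ℚ × ℚ) k

def ctr (k : ℕ) : ℝ := (((pq k).1 : ℝ) + ((pq k).2 : ℝ)) / 2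

def wid (k : ℕ) : ℝ :=
  if (pq k).1 < (pq k).2 then ((pq k).2 : ℝ) - ((pq k).1 : ℝ) else 1

lemma wid_pos (k : ℕ) : 0 < wid k := by
  unfold wid; split
  · rename_i h
    have : ((pq k).1 : ℝ) < ((pq k).2 : ℝ) := by exact_mod_cast h
    linarith
  · norm_num

def del (m : ℝ) (k : ℕ) : ℝ := min (min 1 m) (wid k) / 4

lemma del_pos {m : ℝ} (hm : 0 < m) (k : ℕ) : 0 < del m k := by
  have : (0:ℝ) < min (min 1 m) (wid k) := lt_min (lt_min one_pos hm) (wid_pos k)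
  unfold del; linarith

lemma del_le_quarter (m : ℝ) (k : ℕ) : del m k ≤ 1/4 := by
  have : min (min 1 m) (wid k) ≤ 1 := (min_le_left _ _).trans (min_le_left _ _)
  unfold del; linarith

lemma del_le_m (m : ℝ) (k : ℕ) : del m k ≤ m / 4 := by
  have : min (min 1 m) (wid k) ≤ m := (min_le_left _ _).trans (min_le_right _ _)
  unfold del; linarith

lemma del_le_wid (m : ℝ) (k : ℕ) : del m k ≤ wid k / 4 := by
  have : min (min 1 m) (wid k) ≤ wid k := min_le_right _ _
  unfold del; linarith

def RR (k : ℕ) : ℝ := 2 * ∑ j ∈ Finset.range (k+1), (|ctr j| + 1)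

lemma le_RR {j k : ℕ} (hjk : j < k) : |ctr j| + |ctr k| + 2 ≤ RR k := by
  have hsub : ({j, k} : Finset ℕ) ⊆ Finset.range (k+1) := by
    intro i hi
    simp only [Finset.mem_insert, Finset.mem_singleton] at hi
    rcases hi with h | h <;> simp [h, Finset.mem_range] <;> omega
  have hnonneg : ∀ i ∈ Finset.range (k+1), i ∉ ({j, k} : Finset ℕ) → (0:ℝ) ≤ |ctr i| + 1 := by
    intro i _ _; positivity
  have h1 : ∑ i ∈ ({j, k} : Finset ℕ), (|ctr i| + 1) ≤ ∑ i ∈ Finset.range (k+1), (|ctr i| + 1) :=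
    Finset.sum_le_sum_of_subset_of_nonneg hsub hnonneg
  have h2 : ∑ i ∈ ({j, k} : Finset ℕ), (|ctr i| + 1) = (|ctr j| + 1) + (|ctr k| + 1) :=
    Finset.sum_pair (by omega)
  have h3 : (0:ℝ) ≤ ∑ i ∈ Finset.range (k+1), (|ctr i| + 1) :=
    Finset.sum_nonneg fun i _ => by positivity
  unfold RR; linarith

def DD (G : Set ℝ) (k : ℕ) : ℕ := (G ∩ Icc 0 (RR k)).ncard + 1

lemma one_le_DD (G : Set ℝ) (k : ℕ) : (1:ℝ) ≤ (DD G k : ℝ) := by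
  have : 1 ≤ DD G k := Nat.succ_le_succ (Nat.zero_le _)
  exact_mod_cast this

def ff (G : Set ℝ) (m : ℝ) (k : ℕ) : ℝ := del m k / (8 * DD G k)

lemma ff_pos {G : Set ℝ} {m : ℝ} (hm : 0 < m) (k : ℕ) : 0 < ff G m k := by
  have h1 := del_pos hm k
  have h2 := one_le_DD G k
  unfold ff; positivity

lemma ff_le_one {G : Set ℝ} {m : ℝ} (hm : 0 < m) (k : ℕ) : ff G m k ≤ 1 := by
  have h1 := del_le_quarter m k
  have h2 := one_le_DD G k
  have h3 := del_pos hm k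
  unfold ff
  rw [div_le_one (by linarith)]
  nlinarith

lemma DD_mul_ff_le {G : Set ℝ} {m : ℝ} (hm : 0 < m) (k : ℕ) :
    (DD G k : ℝ) * ff G m k ≤ 1/8 := by
  have h2 := one_le_DD G k
  have h1 := del_le_quarter m k
  unfold ff
  rw [mul_div_assoc']
  rw [div_le_iff₀ (by linarith)]
  have : (DD G k : ℝ) * del m k ≤ (DD G k : ℝ) * (1/4) := by
    apply mul_le_mul_of_nonneg_left h1 (by linarith)
  nlinarith

def eps (G : Set ℝ) (m : ℝ) (k : ℕ) : ℝ := ∏ j ∈ Finset.range (k+1), ff G m j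

lemma eps_pos {G : Set ℝ} {m : ℝ} (hm : 0 < m) (k : ℕ) : 0 < eps G m k :=
  Finset.prod_pos fun j _ => ff_pos hm j

lemma eps_succ (G : Set ℝ) (m : ℝ) (k : ℕ) :
    eps G m (k+1) = eps G m k * ff G m (k+1) := Finset.prod_range_succ _ _

lemma eps_le_ff {G : Set ℝ} {m : ℝ} (hm : 0 < m) (k : ℕ) : eps G m k ≤ ff G m k := by
  have : eps G m k = (∏ j ∈ Finset.range k, ff G m j) * ff G m k := Finset.prod_range_succ _ _
  rw [this]
  have h1 : (∏ j ∈ Finset.range k, ff G m j) ≤ 1 :=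
    Finset.prod_le_one (fun j _ => (ff_pos hm j).le) (fun j _ => ff_le_one hm j)
  have h2 := ff_pos hm k (G := G)
  nlinarith

lemma eps_le_del {G : Set ℝ} {m : ℝ} (hm : 0 < m) (k : ℕ) : eps G m k ≤ del m k := by
  have h1 := eps_le_ff hm k (G := G)
  have h2 := one_le_DD G k
  have h3 := del_pos hm k
  have : ff G m k ≤ del m k := by
    unfold ff
    rw [div_le_iff₀ (by linarith)]
    nlinarith
  linarith

lemma eps_le_one {G : Set ℝ} {m : ℝ} (hm : 0 < m) (k : ℕ) : eps G m k ≤ 1 := by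
  have := eps_le_del hm k (G := G)
  have := del_le_quarter m k
  linarith

lemma eps_lt_m {G : Set ℝ} {m : ℝ} (hm : 0 < m) (k : ℕ) : eps G m k < m := by
  have := eps_le_del hm k (G := G)
  have := del_le_m m k
  linarith

-- key decay estimate
lemma key {G : Set ℝ} {m : ℝ} (hm : 0 < m) :
    ∀ t j : ℕ, (DD G (j+1+t) : ℝ) * eps G m (j+1+t) ≤ eps G m j * (1/8)^(t+1) := by
  intro t
  induction t with
  | zero =>
    intro j
    simp only [Nat.add_zero, zero_add, pow_one]
    rw [eps_succ]
    have h1 := DD_mul_ff_le hm (G := G) (j+1)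
    have h2 := eps_pos hm j (G := G)
    calc (DD G (j+1) : ℝ) * (eps G m j * ff G m (j+1))
        = eps G m j * ((DD G (j+1) : ℝ) * ff G m (j+1)) := by ring
      _ ≤ eps G m j * (1/8) := by nlinarith
  | succ t ih =>
    intro j
    have hidx : j + 1 + (t+1) = (j+1+t) + 1 := by omega
    rw [hidx, eps_succ]
    have h1 := DD_mul_ff_le hm (G := G) (j+1+t+1)
    have h2 := eps_pos hm (j+1+t) (G := G)
    have h3 := ih j
    have h4 := one_le_DD G (j+1+t)
    have h5 : eps G m (j+1+t) ≤ (DD G (j+1+t) : ℝ) * eps G m (j+1+t) := by nlinarith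
    calc (DD G (j+1+t+1) : ℝ) * (eps G m (j+1+t) * ff G m (j+1+t+1))
        = eps G m (j+1+t) * ((DD G (j+1+t+1) : ℝ) * ff G m (j+1+t+1)) := by ring
      _ ≤ eps G m (j+1+t) * (1/8) := by nlinarith
      _ ≤ ((DD G (j+1+t) : ℝ) * eps G m (j+1+t)) * (1/8) := by nlinarith
      _ ≤ (eps G m j * (1/8)^(t+1)) * (1/8) := by nlinarith
      _ = eps G m j * (1/8)^(t+2) := by ring

def II (G : Set ℝ) (m : ℝ) (k : ℕ) : Set ℝ := Icc (ctr k) (ctr k + eps G m k)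

def bad (G : Set ℝ) (m : ℝ) (k : ℕ) : Set ℝ :=
  ⋃ g ∈ G, (Icc (ctr k + g) (ctr k + eps G m k + g) ∪
            Icc (ctr k - g) (ctr k + eps G m k - g))

def UU (G : Set ℝ) (m : ℝ) (j : ℕ) : Set ℝ := ⋃ k, ⋃ (_ : j < k), bad G m k

def AA (G : Set ℝ) (m : ℝ) : Set ℝ := ⋃ j, (II G m j \ UU G m j)

lemma vol_inter_bad_le {G : Set ℝ} (hG : G ⊆ Ioi 0)
    (hloc : ∀ a b : ℝ, (G ∩ Icc a b).Finite) {m : ℝ} (hm : 0 < m)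
    {j k : ℕ} (hjk : j < k) :
    volume (II G m j ∩ bad G m k) ≤ ENNReal.ofReal (2 * (DD G k) * eps G m k) := by
  classical
  set F := (hloc 0 (RR k)).toFinset with hF
  set T : ℝ → Set ℝ := fun g => Icc (ctr k + g) (ctr k + eps G m k + g) ∪
      Icc (ctr k - g) (ctr k + eps G m k - g) with hT
  have hsub : II G m j ∩ bad G m k ⊆ ⋃ g ∈ F, T g := by
    rintro x ⟨hx1, hx2⟩
    simp only [bad, mem_iUnion, exists_prop] at hx2
    obtain ⟨g, hgG, hxg⟩ := hx2
    have hg0 : 0 < g := hG hgG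
    simp only [II, mem_Icc] at hx1
    have hej : eps G m j ≤ 1 := eps_le_one hm j
    have hek : eps G m k ≤ 1 := eps_le_one hm k
    have hR := le_RR hjk
    have habsj : ctr j ≤ |ctr j| := le_abs_self _
    have habsk : -|ctr k| ≤ ctr k := neg_abs_le _
    have habsk' : ctr k ≤ |ctr k| := le_abs_self _
    have habsj' : -|ctr j| ≤ ctr j := neg_abs_le _
    have hepsjpos := eps_pos hm j (G := G)
    have hepskpos := eps_pos hm k (G := G)
    have hgR : g ≤ RR k := by
      rcases hxg with h | h
      · have h1 := h.1
        have h2 := hx1.2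
        linarith
      · have h1 := h.2
        have h2 := hx1.1
        linarith
    have hgF : g ∈ F := by
      rw [hF, Set.Finite.mem_toFinset]
      exact ⟨hgG, hg0.le, hgR⟩
    exact mem_biUnion hgF hxg
  have hepsnn : (0:ℝ) ≤ eps G m k := (eps_pos hm k).le
  have hTvol : ∀ g : ℝ, volume (T g) ≤ ENNReal.ofReal (2 * eps G m k) := by
    intro g
    have h1 : volume (Icc (ctr k + g) (ctr k + eps G m k + g)) = ENNReal.ofReal (eps G m k) := by
      rw [Real.volume_Icc]; congr 1; ring
    have h2 : volume (Icc (ctr k - g) (ctr k + eps G m k - g)) = ENNReal.ofReal (eps G m k) := by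
      rw [Real.volume_Icc]; congr 1; ring
    refine (measure_union_le _ _).trans ?_
    rw [h1, h2, ← ENNReal.ofReal_add hepsnn hepsnn]
    exact ENNReal.ofReal_le_ofReal (by linarith)
  calc volume (II G m j ∩ bad G m k) ≤ volume (⋃ g ∈ F, T g) := measure_mono hsub
    _ ≤ ∑ g ∈ F, volume (T g) := measure_biUnion_finset_le _ _
    _ ≤ ∑ _g ∈ F, ENNReal.ofReal (2 * eps G m k) := Finset.sum_le_sum fun g _ => hTvol g
    _ = (F.card : ENNReal) * ENNReal.ofReal (2 * eps G m k) := by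
        rw [Finset.sum_const, nsmul_eq_mul]
    _ ≤ (DD G k : ENNReal) * ENNReal.ofReal (2 * eps G m k) := by
        gcongr
        have hcard : F.card = (G ∩ Icc 0 (RR k)).ncard :=
          (Set.ncard_eq_toFinset_card _ (hloc 0 (RR k))).symm
        have : F.card ≤ DD G k := by
          rw [hcard, DD]; omega
        exact_mod_cast this
    _ = ENNReal.ofReal (2 * (DD G k) * eps G m k) := by
        rw [← ENNReal.ofReal_natCast (DD G k), ← ENNReal.ofReal_mul (by positivity)]
        congr 1; ring

lemma vol_inter_UU_le {G : Set ℝ} (hG : G ⊆ Ioi 0)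
    (hloc : ∀ a b : ℝ, (G ∩ Icc a b).Finite) {m : ℝ} (hm : 0 < m) (j : ℕ) :
    volume (II G m j ∩ UU G m j) ≤ ENNReal.ofReal (eps G m j / 2) := by
  have hUeq : UU G m j = ⋃ t : ℕ, bad G m (j+1+t) := by
    ext x
    simp only [UU, mem_iUnion]
    constructor
    · rintro ⟨k, hk, hx⟩
      exact ⟨k - j - 1, by rwa [show j+1+(k-j-1) = k by omega]⟩
    · rintro ⟨t, hx⟩
      exact ⟨j+1+t, by omega, hx⟩
  rw [hUeq, inter_iUnion]
  refine (measure_iUnion_le _).trans ?_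
  have hej := eps_pos hm j (G := G)
  have hterm : ∀ t : ℕ, volume (II G m j ∩ bad G m (j+1+t)) ≤
      ENNReal.ofReal (eps G m j / 4) * (ENNReal.ofReal (1/2))^t := by
    intro t
    refine (vol_inter_bad_le hG hloc hm (by omega)).trans ?_
    rw [← ENNReal.ofReal_pow (by norm_num), ← ENNReal.ofReal_mul (by positivity)]
    apply ENNReal.ofReal_le_ofReal
    have hk := key hm t j (G := G)
    have hpow : ((1:ℝ)/8)^t ≤ (1/2)^t := by
      apply pow_le_pow_left₀ <;> norm_num
    have hps : ((1:ℝ)/8)^(t+1) = (1/8) * (1/8)^t := by ring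
    have hp8 : (0:ℝ) < (1/8:ℝ)^t := by positivity
    nlinarith [pow_nonneg (by norm_num : (0:ℝ) ≤ 1/2) t]
  refine (ENNReal.tsum_le_tsum hterm).trans ?_
  rw [ENNReal.tsum_mul_left, ENNReal.tsum_geometric]
  have hhalf : ENNReal.ofReal (1/2) = 2⁻¹ := by
    rw [ENNReal.ofReal_div_of_pos (by norm_num)]
    norm_num
  rw [hhalf, ENNReal.one_sub_inv_two, inv_inv]
  rw [← ENNReal.ofReal_ofNat, ← ENNReal.ofReal_mul (by positivity)]
  apply ENNReal.ofReal_le_ofReal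
  apply le_of_eq
  ring

lemma vol_shaved_pos {G : Set ℝ} (hG : G ⊆ Ioi 0)
    (hloc : ∀ a b : ℝ, (G ∩ Icc a b).Finite) {m : ℝ} (hm : 0 < m) (j : ℕ) :
    0 < volume (II G m j \ UU G m j) := by
  by_contra h
  push_neg at h
  have h0 : volume (II G m j \ UU G m j) = 0 := le_antisymm h zero_le
  have h1 : volume (II G m j) ≤ volume (II G m j ∩ UU G m j) + volume (II G m j \ UU G m j) :=
    measure_le_inter_add_diff _ _ _
  rw [h0, add_zero] at h1
  have h2 := (h1.trans (vol_inter_UU_le hG hloc hm j))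
  have h3 : volume (II G m j) = ENNReal.ofReal (eps G m j) := by
    rw [II, Real.volume_Icc]; congr 1; ring
  rw [h3] at h2
  have hej := eps_pos hm j (G := G)
  have := (ENNReal.ofReal_le_ofReal_iff (by positivity)).1 h2
  linarith

lemma AA_disjoint {G : Set ℝ} {m : ℝ} (hG : G ⊆ Ioi 0) (hm : 0 < m)
    (hmle : ∀ g ∈ G, m ≤ g) : AA G m ∩ (AA G m + G) = ∅ := by
  rw [eq_empty_iff_forall_notMem]
  rintro x ⟨hx, hxadd⟩
  rw [Set.mem_add] at hxadd
  obtain ⟨y, hy, g, hgG, hyg⟩ := hxadd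
  simp only [AA, mem_iUnion] at hx hy
  obtain ⟨l, hxl, hxn⟩ := hx
  obtain ⟨j, hyj, hyn⟩ := hy
  simp only [II, mem_Icc] at hxl hyj
  have hg0 : 0 < g := hG hgG
  have hmg : m ≤ g := hmle g hgG
  rcases lt_trichotomy j l with hjl | hjl | hjl
  · apply hyn
    simp only [UU, mem_iUnion]
    refine ⟨l, hjl, ?_⟩
    simp only [bad, mem_iUnion, exists_prop]
    refine ⟨g, hgG, Or.inr ⟨?_, ?_⟩⟩
    · have := hxl.1; linarith
    · have := hxl.2; linarith
  · subst hjl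
    have h1 := hxl.2
    have h2 := hyj.1
    have he := eps_lt_m hm j (G := G)
    linarith
  · apply hxn
    simp only [UU, mem_iUnion]
    refine ⟨j, hjl, ?_⟩
    simp only [bad, mem_iUnion, exists_prop]
    refine ⟨g, hgG, Or.inl ⟨?_, ?_⟩⟩
    · have := hyj.1; linarith
    · have := hyj.2; linarith

lemma AA_measurable {G : Set ℝ} (hGc : G.Countable) (m : ℝ) :
    MeasurableSet (AA G m) := by
  have hbad : ∀ k, MeasurableSet (bad G m k) := fun k =>
    MeasurableSet.biUnion hGc fun g _ => measurableSet_Icc.union measurableSet_Icc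
  exact MeasurableSet.iUnion fun j =>
    (measurableSet_Icc : MeasurableSet (Icc (ctr j) (ctr j + eps G m j))).diff
      (MeasurableSet.iUnion fun k => MeasurableSet.iUnion fun _ => hbad k)

end

end Stmt2Aux

theorem stmt_2 (G : Set ℝ) (hG : G ⊆ Set.Ioi 0)
    (hloc : ∀ a b : ℝ, (G ∩ Set.Icc a b).Finite) :
    ∃ A : Set ℝ, MeasurableSet A ∧
      (∀ a b : ℝ, a < b → 0 < volume (A ∩ Set.Ioo a b)) ∧
      A ∩ (A + G) = ∅ := by
  rcases G.eq_empty_or_nonempty with hGe | ⟨g₀, hg₀⟩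
  · refine ⟨Set.univ, MeasurableSet.univ, ?_, ?_⟩
    · intro a b hab
      rw [Set.univ_inter, Real.volume_Ioo]
      exact ENNReal.ofReal_pos.2 (by linarith)
    · rw [hGe]
      simp
  · have hg₀pos : (0:ℝ) < g₀ := hG hg₀
    have hfin := hloc 0 g₀
    have hg₀mem : g₀ ∈ hfin.toFinset := by
      rw [Set.Finite.mem_toFinset]; exact ⟨hg₀, hg₀pos.le, le_refl _⟩
    set m := hfin.toFinset.min' ⟨g₀, hg₀mem⟩ with hmdef
    have hmmem : m ∈ hfin.toFinset := Finset.min'_mem _ _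
    rw [Set.Finite.mem_toFinset] at hmmem
    have hm : 0 < m := hG hmmem.1
    have hmle : ∀ g ∈ G, m ≤ g := by
      intro g hg
      by_cases hgle : g ≤ g₀
      · exact Finset.min'_le _ _ (by rw [Set.Finite.mem_toFinset]; exact ⟨hg, (hG hg).le, hgle⟩)
      · have h1 : m ≤ g₀ := Finset.min'_le _ _ hg₀mem
        linarith
    have hGc : G.Countable := by
      have h1 : G ⊆ ⋃ n : ℕ, (G ∩ Set.Icc 0 (n:ℝ)) := by
        intro g hg
        have h0 : 0 < g := hG hg
        exact Set.mem_iUnion.2 ⟨⌈g⌉₊, hg, h0.le, Nat.le_ceil g⟩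
      exact (Set.countable_iUnion fun n : ℕ => (hloc 0 (n:ℝ)).countable).mono h1
    refine ⟨Stmt2Aux.AA G m, Stmt2Aux.AA_measurable hGc m, ?_,
      Stmt2Aux.AA_disjoint hG hm hmle⟩
    intro a b hab
    obtain ⟨p, hap, hpb⟩ := exists_rat_btwn hab
    obtain ⟨q, hpq, hqb⟩ := exists_rat_btwn hpb
    obtain ⟨k, hk⟩ : ∃ k, Stmt2Aux.pq k = (p, q) := by
      obtain ⟨k, hk⟩ := (Denumerable.eqv (ℚ × ℚ)).symm.surjective (p, q)
      exact ⟨k, hk⟩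
    have hpq' : (p:ℝ) < (q:ℝ) := hpq
    have hctr : Stmt2Aux.ctr k = ((p:ℝ) + (q:ℝ))/2 := by rw [Stmt2Aux.ctr, hk]
    have hwid : Stmt2Aux.wid k = (q:ℝ) - (p:ℝ) := by
      rw [Stmt2Aux.wid, hk, if_pos (by exact_mod_cast hpq')]
    have hepspos := Stmt2Aux.eps_pos hm k (G := G)
    have hepsle : Stmt2Aux.eps G m k ≤ Stmt2Aux.wid k / 4 :=
      (Stmt2Aux.eps_le_del hm k).trans (Stmt2Aux.del_le_wid m k)
    have hsub : Stmt2Aux.II G m k ⊆ Set.Ioo a b := by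
      intro x hx
      simp only [Stmt2Aux.II, Set.mem_Icc] at hx
      rw [hctr] at hx
      rw [hwid] at hepsle
      constructor
      · have := hx.1; linarith
      · have := hx.2; linarith
    refine lt_of_lt_of_le (Stmt2Aux.vol_shaved_pos hG hloc hm k) (measure_mono ?_)
    refine Set.subset_inter ?_ ((Set.diff_subset).trans hsub)
    exact (Set.subset_iUnion (fun j => Stmt2Aux.II G m j \ Stmt2Aux.UU G m j) k)
end

section
/- Let U ⊆ ℝ² be a path-connected open set and f : U → ℝ² continuous and injective. Suppose f is (Fréchet) differentiable at points a, b ∈ U with det f'(a) > 0. Then det f'(b) ≥ 0. -/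
open Complex Finset

noncomputable def arcsum (n : ℕ) (γ : ℝ → ℂ) : ℝ :=
  ∑ j ∈ Finset.range n, Complex.arg (γ ((j + 1) / n) / γ (j / n))

def fine (n : ℕ) (γ : ℝ → ℂ) : Prop :=
  ∀ j < n, ∀ x ∈ Set.Icc ((j : ℝ) / n) ((j + 1) / n),
    ∀ y ∈ Set.Icc ((j : ℝ) / n) ((j + 1) / n), ‖γ x - γ y‖ < ‖γ y‖

lemma ne_zero_of_close {z w : ℂ} (h : ‖z - w‖ < ‖w‖) : z ≠ 0 := by
  rintro rfl
  rw [zero_sub, norm_neg] at h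
  exact absurd h (lt_irrefl _)

lemma ratio_re_pos {z w : ℂ} (h : ‖z - w‖ < ‖w‖) : 0 < (z / w).re := by
  have hw : w ≠ 0 := by
    rintro rfl; simp at h
    exact absurd h (not_lt.2 (norm_nonneg _))
  have h1 : ‖z / w - 1‖ < 1 := by
    rw [show z / w - 1 = (z - w) / w by field_simp]
    rw [norm_div]
    rw [div_lt_one (norm_pos_iff.2 hw)]
    exact h
  have h2 : Complex.normSq (z / w - 1) < 1 := by
    have := Complex.sq_norm (z / w - 1)
    have habs : ‖z / w - 1‖ < 1 := h1
    nlinarith [Complex.normSq_nonneg (z / w - 1), norm_nonneg (z / w - 1)]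
  have h3 := Complex.normSq_apply (z / w - 1)
  simp only [Complex.sub_re, Complex.sub_im, Complex.one_re, Complex.one_im] at h3
  nlinarith [sq_nonneg ((z / w).im)]

lemma arg_mul_of_re_pos {A B : ℂ} (hA : 0 < A.re) (hB : 0 < B.re) (hAB : 0 < (A * B).re) :
    (A * B).arg = A.arg + B.arg := by
  have hA0 : A ≠ 0 := fun h => by simp [h] at hA
  have hB0 : B ≠ 0 := fun h => by simp [h] at hB
  rw [Complex.arg_mul_eq_add_arg_iff hA0 hB0]
  have h1 : |A.arg| < Real.pi / 2 := Complex.abs_arg_lt_pi_div_two_iff.2 (Or.inl hA)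
  have h2 : |B.arg| < Real.pi / 2 := Complex.abs_arg_lt_pi_div_two_iff.2 (Or.inl hB)
  rw [abs_lt] at h1 h2
  constructor <;> [linarith; linarith [Real.pi_pos]]

-- telescoping sums of args over a set where γ has small oscillation
lemma sum_arg_tele (γ : ℝ → ℂ) (S : Set ℝ)
    (h : ∀ x ∈ S, ∀ y ∈ S, ‖γ x - γ y‖ < ‖γ y‖) (p : ℕ → ℝ) (k : ℕ)
    (hp : ∀ m ≤ k, p m ∈ S) :
    ∑ m ∈ Finset.range k, Complex.arg (γ (p (m + 1)) / γ (p m)) =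
      Complex.arg (γ (p k) / γ (p 0)) := by
  induction k with
  | zero =>
    simp only [Finset.range_zero, Finset.sum_empty]
    rw [div_self, Complex.arg_one]
    exact ne_zero_of_close (h _ (hp 0 le_rfl) _ (hp 0 le_rfl))
  | succ k ih =>
    have hp' : ∀ m ≤ k, p m ∈ S := fun m hm => hp m (hm.trans k.le_succ)
    rw [Finset.sum_range_succ, ih hp']
    have h0 : γ (p 0) ≠ 0 := ne_zero_of_close (h _ (hp 0 (by omega)) _ (hp 0 (by omega)))
    have hk : γ (p k) ≠ 0 :=
      ne_zero_of_close (h _ (hp k (by omega)) _ (hp k (by omega)))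
    have hk1 : γ (p (k + 1)) ≠ 0 :=
      ne_zero_of_close (h _ (hp (k + 1) le_rfl) _ (hp (k + 1) le_rfl))
    have key : γ (p k) / γ (p 0) * (γ (p (k + 1)) / γ (p k)) = γ (p (k + 1)) / γ (p 0) := by
      field_simp
    rw [← arg_mul_of_re_pos (ratio_re_pos (h _ (hp k (by omega)) _ (hp 0 (by omega))))
      (ratio_re_pos (h _ (hp (k + 1) le_rfl) _ (hp k (by omega))))
      (by rw [key]; exact ratio_re_pos (h _ (hp (k + 1) le_rfl) _ (hp 0 (by omega)))), key]
lemma sum_range_mul_reindex {M : Type*} [AddCommMonoid M] (g : ℕ → M) (n k : ℕ) :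
    ∑ j ∈ Finset.range (n * k), g j = ∑ i ∈ Finset.range n, ∑ m ∈ Finset.range k, g (i * k + m) := by
  induction n with
  | zero => simp
  | succ n ih =>
    rw [Nat.succ_mul, Finset.sum_range_add, ih, Finset.sum_range_succ]

lemma exists_subinterval {n : ℕ} (hn : 0 < n) {t : ℝ} (ht0 : 0 ≤ t) (ht1 : t ≤ 1) :
    ∃ j : ℕ, j < n ∧ t ∈ Set.Icc ((j : ℝ) / n) ((j + 1) / n) := by
  have hnR : (0 : ℝ) < n := by exact_mod_cast hn
  refine ⟨min (n - 1) ⌊t * n⌋₊, by omega, ?_, ?_⟩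
  · rw [div_le_iff₀ hnR]
    have h1 : ((min (n - 1) ⌊t * n⌋₊ : ℕ) : ℝ) ≤ (⌊t * n⌋₊ : ℝ) := by
      exact_mod_cast min_le_right _ _
    have h2 : (⌊t * n⌋₊ : ℝ) ≤ t * n := Nat.floor_le (by positivity)
    linarith
  · rw [le_div_iff₀ hnR]
    rcases min_cases (n - 1) ⌊t * n⌋₊ with ⟨he, hle⟩ | ⟨he, hle⟩
    · rw [he]
      rw [Nat.cast_sub hn]
      push_cast
      nlinarith
    · rw [he]
      have := Nat.lt_floor_add_one (t * n)
      linarith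

lemma fine_ne_zero {n : ℕ} {γ : ℝ → ℂ} (hn : 0 < n) (hf : fine n γ) {t : ℝ}
    (ht : t ∈ Set.Icc (0 : ℝ) 1) : γ t ≠ 0 := by
  obtain ⟨j, hjn, hmem⟩ := exists_subinterval hn ht.1 ht.2
  exact ne_zero_of_close (hf j hjn t hmem t hmem)

lemma arcsum_mul {n k : ℕ} {γ : ℝ → ℂ} (hn : 0 < n) (hk : 0 < k) (hf : fine n γ) :
    arcsum (n * k) γ = arcsum n γ := by
  have hnR : (0 : ℝ) < n := by exact_mod_cast hn
  have hkR : (0 : ℝ) < k := by exact_mod_cast hk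
  set g : ℕ → ℝ := fun j =>
    Complex.arg (γ (((j : ℝ) + 1) / ((n : ℝ) * k)) / γ ((j : ℝ) / ((n : ℝ) * k))) with hg
  have hL : arcsum (n * k) γ = ∑ j ∈ Finset.range (n * k), g j := by
    unfold arcsum
    refine Finset.sum_congr rfl fun j _ => ?_
    rw [hg]; congr 2 <;> push_cast <;> ring
  rw [hL, sum_range_mul_reindex g n k]
  unfold arcsum
  refine Finset.sum_congr rfl fun i hi => ?_
  rw [Finset.mem_range] at hi
  set p : ℕ → ℝ := fun m => ((i : ℝ) * k + m) / ((n : ℝ) * k) with hp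
  have hmem : ∀ m ≤ k, p m ∈ Set.Icc ((i : ℝ) / n) (((i : ℝ) + 1) / n) := by
    intro m hm
    have hmR : (m : ℝ) ≤ k := by exact_mod_cast hm
    constructor
    · rw [hp, div_le_div_iff₀ hnR (by positivity)]
      nlinarith [Nat.cast_nonneg (α := ℝ) m]
    · rw [hp, div_le_div_iff₀ (by positivity) hnR]
      nlinarith
  have tele := sum_arg_tele γ (Set.Icc ((i : ℝ) / n) (((i : ℝ) + 1) / n))
    (fun x hx y hy => hf i hi x hx y hy) p k hmem
  have e1 : ∀ m ∈ Finset.range k, g (i * k + m) = Complex.arg (γ (p (m + 1)) / γ (p m)) := by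
    intro m _
    rw [hg, hp]; congr 2 <;> push_cast <;> ring
  rw [Finset.sum_congr rfl e1, tele]
  simp only [hp]
  have e2 : ((i:ℝ) * k + ((k:ℕ):ℝ)) / ((n:ℝ) * k) = ((i:ℝ) + 1) / n := by
    field_simp
  have e3 : ((i:ℝ) * k + ((0:ℕ):ℝ)) / ((n:ℝ) * k) = (i:ℝ) / n := by
    push_cast; field_simp; ring
  rw [e2, e3]

lemma arcsum_congr_fine {n m : ℕ} {γ : ℝ → ℂ} (hn : 0 < n) (hm : 0 < m)
    (h1 : fine n γ) (h2 : fine m γ) : arcsum n γ = arcsum m γ := by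
  rw [← arcsum_mul hn hm h1, ← arcsum_mul hm hn h2, Nat.mul_comm]

lemma arcsum_loop {n : ℕ} {γ : ℝ → ℂ} (hn : 0 < n) (hf : fine n γ) (hloop : γ 1 = γ 0) :
    ∃ k : ℤ, arcsum n γ = 2 * Real.pi * k := by
  have hnR : (0 : ℝ) < n := by exact_mod_cast hn
  have hne : ∀ j ≤ n, γ ((j : ℝ) / n) ≠ 0 := by
    intro j hj
    apply fine_ne_zero hn hf
    exact ⟨by positivity, by rw [div_le_one hnR]; exact_mod_cast hj⟩
  have h0 : γ 0 ≠ 0 := by have := hne 0 (by omega); simpa using this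
  set z : ℕ → ℂ := fun j => γ (((j : ℝ) + 1) / n) / γ ((j : ℝ) / n) with hz
  have hzne : ∀ j < n, z j ≠ 0 := by
    intro j hj
    apply div_ne_zero
    · have := hne (j + 1) (by omega); push_cast at this; exact this
    · exact hne j (by omega)
  have hprod : ∏ j ∈ Finset.range n, z j = 1 := by
    have tel : ∀ m : ℕ, m ≤ n → ∏ j ∈ Finset.range m, z j = γ ((m : ℝ) / n) / γ 0 := by
      intro m hm
      induction m with
      | zero => simp only [Finset.range_zero, Finset.prod_empty, Nat.cast_zero, zero_div]
                rw [div_self h0]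
      | succ m ih =>
        rw [Finset.prod_range_succ, ih (by omega)]
        simp only [hz]
        have h1 : γ ((m : ℝ) / n) ≠ 0 := hne m (by omega)
        push_cast
        field_simp
    rw [tel n le_rfl, show (n : ℝ) / n = 1 by field_simp, hloop, div_self h0]
  have key : Complex.exp ((arcsum n γ : ℝ) * Complex.I) = 1 := by
    unfold arcsum
    push_cast
    rw [Finset.sum_mul, Complex.exp_sum]
    have e1 : ∀ j ∈ Finset.range n,
        Complex.exp ((Complex.arg (γ (((j : ℝ) + 1) / n) / γ ((j : ℝ) / n)) : ℂ) * Complex.I) =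
        z j / (‖z j‖ : ℂ) := by
      intro j hj
      rw [Finset.mem_range] at hj
      rw [eq_div_iff (by exact_mod_cast norm_ne_zero_iff.2 (hzne j hj))]
      rw [mul_comm]
      exact Complex.norm_mul_exp_arg_mul_I _
    rw [Finset.prod_congr rfl e1, Finset.prod_div_distrib, hprod]
    have habs : ∏ j ∈ Finset.range n, (‖z j‖ : ℂ) = 1 := by
      rw [← Complex.ofReal_prod, ← norm_prod, hprod]
      simp
    rw [habs, div_one]
  rw [Complex.exp_eq_one_iff] at key
  obtain ⟨k, hk⟩ := key
  refine ⟨k, ?_⟩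
  have hI : (Complex.I : ℂ) ≠ 0 := Complex.I_ne_zero
  have hk' : ((arcsum n γ : ℝ) : ℂ) * Complex.I = ((k : ℝ) * (2 * Real.pi) : ℝ) * Complex.I := by
    rw [hk]; push_cast; ring
  have := mul_right_cancel₀ hI hk'
  have h2 : arcsum n γ = (k : ℝ) * (2 * Real.pi) := by exact_mod_cast this
  rw [h2]; ring
lemma const_of_int_valued {g : ℝ → ℝ} (hg : ContinuousOn g (Set.Icc 0 1))
    (hval : ∀ u ∈ Set.Icc (0 : ℝ) 1, ∃ k : ℤ, g u = 2 * Real.pi * k) : g 1 = g 0 := by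
  by_contra hne
  obtain ⟨k0, hk0⟩ := hval 0 (by norm_num)
  obtain ⟨k1, hk1⟩ := hval 1 (by norm_num)
  have hpi := Real.pi_pos
  rcases lt_or_gt_of_ne hne with h | h
  · -- g 1 < g 0 : value 2π k1 + π lies in (g 1, g 0)
    have hk : (k1 : ℝ) < k0 := by nlinarith
    have hkk : k1 + 1 ≤ k0 := by exact_mod_cast Int.add_one_le_iff.2 (by exact_mod_cast hk)
    have hkkR : (k1 : ℝ) + 1 ≤ k0 := by exact_mod_cast hkk
    have hmem : 2 * Real.pi * k1 + Real.pi ∈ Set.Icc (g 1) (g 0) := by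
      constructor <;> [rw [hk1]; rw [hk0]] <;> nlinarith
    obtain ⟨u, hu, hgu⟩ := intermediate_value_Icc' (by norm_num : (0:ℝ) ≤ 1) hg hmem
    obtain ⟨k, hk'⟩ := hval u hu
    rw [hk'] at hgu
    have : (2 * k : ℝ) = 2 * k1 + 1 := by
      have h2 : Real.pi * (2 * (k:ℝ)) = Real.pi * (2 * (k1:ℝ) + 1) := by nlinarith
      exact mul_left_cancel₀ Real.pi_ne_zero h2
    have : (2 * k : ℤ) = 2 * k1 + 1 := by exact_mod_cast this
    omega
  · have hk : (k0 : ℝ) < k1 := by nlinarith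
    have hkk : k0 + 1 ≤ k1 := by exact_mod_cast Int.add_one_le_iff.2 (by exact_mod_cast hk)
    have hkkR : (k0 : ℝ) + 1 ≤ k1 := by exact_mod_cast hkk
    have hmem : 2 * Real.pi * k0 + Real.pi ∈ Set.Icc (g 0) (g 1) := by
      constructor <;> [rw [hk0]; rw [hk1]] <;> nlinarith
    obtain ⟨u, hu, hgu⟩ := intermediate_value_Icc (by norm_num : (0:ℝ) ≤ 1) hg hmem
    obtain ⟨k, hk'⟩ := hval u hu
    rw [hk'] at hgu
    have : (2 * k : ℝ) = 2 * k0 + 1 := by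
      have h2 : Real.pi * (2 * (k:ℝ)) = Real.pi * (2 * (k0:ℝ) + 1) := by nlinarith
      exact mul_left_cancel₀ Real.pi_ne_zero h2
    have : (2 * k : ℤ) = 2 * k0 + 1 := by exact_mod_cast this
    omega

-- uniform fineness for a family
lemma exists_fine_family (H : ℝ → ℝ → ℂ)
    (hH : ContinuousOn (fun p : ℝ × ℝ => H p.1 p.2) (Set.Icc 0 1 ×ˢ Set.Icc 0 1))
    (hne : ∀ s ∈ Set.Icc (0:ℝ) 1, ∀ t ∈ Set.Icc (0:ℝ) 1, H s t ≠ 0) :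
    ∃ n : ℕ, 0 < n ∧ ∀ s ∈ Set.Icc (0:ℝ) 1, fine n (H s) := by
  have hK : IsCompact (Set.Icc (0:ℝ) 1 ×ˢ Set.Icc (0:ℝ) 1) :=
    IsCompact.prod isCompact_Icc isCompact_Icc
  have hKne : (Set.Icc (0:ℝ) 1 ×ˢ Set.Icc (0:ℝ) 1).Nonempty :=
    ⟨(0, 0), by norm_num⟩
  obtain ⟨p₀, hp₀, hmin⟩ := hK.exists_isMinOn hKne (hH.norm)
  set m : ℝ := ‖H p₀.1 p₀.2‖ with hm
  have hmpos : 0 < m := norm_pos_iff.2 (hne p₀.1 hp₀.1 p₀.2 hp₀.2)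
  have hmle : ∀ s ∈ Set.Icc (0:ℝ) 1, ∀ t ∈ Set.Icc (0:ℝ) 1, m ≤ ‖H s t‖ := by
    intro s hs t ht
    exact hmin (Set.mk_mem_prod hs ht)
  have huc := hK.uniformContinuousOn_of_continuous hH
  rw [Metric.uniformContinuousOn_iff] at huc
  obtain ⟨δ, hδ, hd⟩ := huc m hmpos
  obtain ⟨n, hn⟩ := exists_nat_one_div_lt hδ
  refine ⟨n + 1, Nat.succ_pos n, ?_⟩
  intro s hs j hj x hx y hy
  rw [show (((n+1:ℕ)):ℝ) = (n:ℝ)+1 by push_cast; ring] at hx hy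
  have hsub : Set.Icc ((j:ℝ)/(n+1)) (((j:ℝ)+1)/(n+1)) ⊆ Set.Icc (0:ℝ) 1 := by
    apply Set.Icc_subset_Icc
    · positivity
    · rw [div_le_one (by positivity)]
      have : (j:ℝ) + 1 ≤ (n:ℝ) + 1 := by
        have : (j:ℝ) ≤ n := by exact_mod_cast Nat.lt_succ_iff.1 hj
        linarith
      push_cast
      linarith
  have hx1 := hsub hx
  have hy1 := hsub hy
  have hdist : dist ((s, x) : ℝ × ℝ) (s, y) < δ := by
    rw [Prod.dist_eq]
    simp only [dist_self]
    rw [max_lt_iff]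
    refine ⟨hδ, ?_⟩
    rw [Real.dist_eq, abs_lt]
    obtain ⟨hx2, hx3⟩ := hx
    obtain ⟨hy2, hy3⟩ := hy
    have hgap : ((j:ℝ)+1)/(n+1) - (j:ℝ)/(n+1) = 1/((n:ℝ)+1) := by
      field_simp
      ring
    constructor <;> nlinarith [hn]
  have := hd (s, x) (Set.mk_mem_prod hs hx1) (s, y) (Set.mk_mem_prod hs hy1) hdist
  calc ‖H s x - H s y‖ = dist (H s x) (H s y) := (dist_eq_norm _ _).symm
    _ < m := this
    _ ≤ ‖H s y‖ := hmle s hs y hy1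

def Wind (γ : ℝ → ℂ) (w : ℝ) : Prop := ∃ n : ℕ, 0 < n ∧ fine n γ ∧ arcsum n γ = w

lemma Wind.unique {γ : ℝ → ℂ} {w w' : ℝ} (h : Wind γ w) (h' : Wind γ w') : w = w' := by
  obtain ⟨n, hn, hf, hs⟩ := h
  obtain ⟨n', hn', hf', hs'⟩ := h'
  rw [← hs, ← hs']
  exact arcsum_congr_fine hn hn' hf hf'

lemma wind_homotopy (H : ℝ → ℝ → ℂ)
    (hH : ContinuousOn (fun p : ℝ × ℝ => H p.1 p.2) (Set.Icc 0 1 ×ˢ Set.Icc 0 1))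
    (hne : ∀ s ∈ Set.Icc (0:ℝ) 1, ∀ t ∈ Set.Icc (0:ℝ) 1, H s t ≠ 0)
    (hloop : ∀ s ∈ Set.Icc (0:ℝ) 1, H s 1 = H s 0)
    {w : ℝ} (h0 : Wind (H 0) w) : Wind (H 1) w := by
  obtain ⟨n, hn, hfam⟩ := exists_fine_family H hH hne
  have h01 : (0:ℝ) ∈ Set.Icc (0:ℝ) 1 := by norm_num
  have h11 : (1:ℝ) ∈ Set.Icc (0:ℝ) 1 := by norm_num
  set g : ℝ → ℝ := fun s => arcsum n (H s) with hg
  have hpart : ∀ j : ℕ, j < n → ((j:ℝ)/n) ∈ Set.Icc (0:ℝ) 1 ∧ (((j:ℝ)+1)/n) ∈ Set.Icc (0:ℝ) 1 := by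
    intro j hj
    have hnR : (0:ℝ) < n := by exact_mod_cast hn
    have hjR : (j:ℝ) + 1 ≤ n := by exact_mod_cast hj
    constructor
    · exact ⟨by positivity, by rw [div_le_one hnR]; linarith⟩
    · exact ⟨by positivity, by rw [div_le_one hnR]; linarith⟩
  have hgc : ContinuousOn g (Set.Icc 0 1) := by
    simp only [hg, arcsum]
    apply continuousOn_finset_sum
    intro j hj
    rw [Finset.mem_range] at hj
    obtain ⟨hj1, hj2⟩ := hpart j hj
    have hc1 : ContinuousOn (fun s => H s (((j:ℝ)+1)/n)) (Set.Icc 0 1) := by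
      have := hH.comp (Continuous.continuousOn
        (by continuity : Continuous fun s : ℝ => (s, ((j:ℝ)+1)/n)))
        (fun s hs => Set.mk_mem_prod hs hj2)
      exact this
    have hc2 : ContinuousOn (fun s => H s ((j:ℝ)/n)) (Set.Icc 0 1) := by
      have := hH.comp (Continuous.continuousOn
        (by continuity : Continuous fun s : ℝ => (s, (j:ℝ)/n)))
        (fun s hs => Set.mk_mem_prod hs hj1)
      exact this
    intro s hs
    have hfine := hfam s hs
    have hle : (j:ℝ)/n ≤ ((j:ℝ)+1)/n := by
      have hnR : (0:ℝ) < n := by exact_mod_cast hn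
      apply (div_le_div_iff_of_pos_right hnR).2
      linarith
    have hclose := hfine j hj (((j:ℝ)+1)/n) ⟨hle, le_rfl⟩ ((j:ℝ)/n) ⟨le_rfl, hle⟩
    have hslit : H s (((j:ℝ)+1)/n) / H s ((j:ℝ)/n) ∈ Complex.slitPlane :=
      Complex.mem_slitPlane_iff.2 (Or.inl (ratio_re_pos hclose))
    exact ContinuousAt.comp_continuousWithinAt (g := Complex.arg)
      (f := fun u => H u (((j:ℝ)+1)/n) / H u ((j:ℝ)/n))
      (Complex.continuousAt_arg hslit)
      ((hc1 s hs).div (hc2 s hs) (hne s hs _ hj1))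
  have hval : ∀ u ∈ Set.Icc (0:ℝ) 1, ∃ k : ℤ, g u = 2 * Real.pi * k :=
    fun u hu => arcsum_loop hn (hfam u hu) (hloop u hu)
  have heq : g 1 = g 0 := const_of_int_valued hgc hval
  obtain ⟨n₀, hn₀, hf₀, hs₀⟩ := h0
  refine ⟨n, hn, hfam 1 h11, ?_⟩
  show g 1 = w
  rw [heq]
  rw [← hs₀]
  exact arcsum_congr_fine hn hn₀ (hfam 0 h01) hf₀
lemma exists_fine (γ : ℝ → ℂ) (hγ : ContinuousOn γ (Set.Icc 0 1))
    (hne : ∀ t ∈ Set.Icc (0:ℝ) 1, γ t ≠ 0) : ∃ n : ℕ, 0 < n ∧ fine n γ := by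
  have hH : ContinuousOn (fun p : ℝ × ℝ => γ p.2) (Set.Icc 0 1 ×ˢ Set.Icc 0 1) := by
    have := hγ.comp continuous_snd.continuousOn
      (fun p (hp : p ∈ Set.Icc (0:ℝ) 1 ×ˢ Set.Icc (0:ℝ) 1) => hp.2)
    exact this
  obtain ⟨n, hn, hfam⟩ := exists_fine_family (fun _ t => γ t) hH
    (fun s _ t ht => hne t ht)
  exact ⟨n, hn, hfam 0 (by norm_num)⟩

lemma wind_rouche {γ₀ γ₁ : ℝ → ℂ} (h₀ : ContinuousOn γ₀ (Set.Icc 0 1))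
    (h₁ : ContinuousOn γ₁ (Set.Icc 0 1))
    (hl₀ : γ₀ 1 = γ₀ 0) (hl₁ : γ₁ 1 = γ₁ 0)
    (hclose : ∀ t ∈ Set.Icc (0:ℝ) 1, ‖γ₁ t - γ₀ t‖ < ‖γ₀ t‖)
    {w : ℝ} (h : Wind γ₀ w) : Wind γ₁ w := by
  set H : ℝ → ℝ → ℂ := fun s t => γ₀ t + (s : ℂ) * (γ₁ t - γ₀ t) with hH
  have hH0 : H 0 = γ₀ := by funext t; simp [hH]
  have hH1 : H 1 = γ₁ := by funext t; simp [hH]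
  have hcont : ContinuousOn (fun p : ℝ × ℝ => H p.1 p.2) (Set.Icc 0 1 ×ˢ Set.Icc 0 1) := by
    simp only [hH]
    have hsnd : ∀ (g : ℝ → ℂ), ContinuousOn g (Set.Icc 0 1) →
        ContinuousOn (fun p : ℝ × ℝ => g p.2) (Set.Icc 0 1 ×ˢ Set.Icc 0 1) := by
      intro g hg
      have := hg.comp continuous_snd.continuousOn
        (fun p (hp : p ∈ Set.Icc (0:ℝ) 1 ×ˢ Set.Icc (0:ℝ) 1) => hp.2)
      exact this
    apply ContinuousOn.add (hsnd γ₀ h₀)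
    apply ContinuousOn.mul
    · exact Complex.continuous_ofReal.comp continuous_fst |>.continuousOn
    · exact (hsnd _ (h₁.sub h₀))
  have hne : ∀ s ∈ Set.Icc (0:ℝ) 1, ∀ t ∈ Set.Icc (0:ℝ) 1, H s t ≠ 0 := by
    intro s hs t ht hzero
    have h1 : ‖H s t - γ₀ t‖ < ‖γ₀ t‖ := by
      simp only [hH]
      rw [add_sub_cancel_left, norm_mul]
      calc ‖(s:ℂ)‖ * ‖γ₁ t - γ₀ t‖ ≤ 1 * ‖γ₁ t - γ₀ t‖ := by
            apply mul_le_mul_of_nonneg_right _ (norm_nonneg _)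
            rw [Complex.norm_real, Real.norm_eq_abs, abs_le]
            exact ⟨by linarith [hs.1], hs.2⟩
        _ = ‖γ₁ t - γ₀ t‖ := one_mul _
        _ < ‖γ₀ t‖ := hclose t ht
    rw [hzero] at h1
    rw [zero_sub, norm_neg] at h1
    exact absurd h1 (lt_irrefl _)
  have hloop : ∀ s ∈ Set.Icc (0:ℝ) 1, H s 1 = H s 0 := by
    intro s _
    simp only [hH, hl₀, hl₁]
  have := wind_homotopy H hcont hne hloop (w := w) (by rw [hH0]; exact h)
  rwa [hH1] at this

lemma wind_const_mul {γ : ℝ → ℂ} {c : ℂ} (hc : c ≠ 0) {w : ℝ} (h : Wind γ w) :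
    Wind (fun t => c * γ t) w := by
  obtain ⟨n, hn, hf, hs⟩ := h
  refine ⟨n, hn, ?_, ?_⟩
  · intro j hj x hx y hy
    have := hf j hj x hx y hy
    rw [← mul_sub, norm_mul, norm_mul]
    exact mul_lt_mul_of_pos_left this (norm_pos_iff.2 hc)
  · rw [← hs]
    unfold arcsum
    refine Finset.sum_congr rfl fun j _ => ?_
    rw [mul_div_mul_left _ _ hc]

lemma wind_exp (θ : ℝ) (hθ : |θ| ≤ 2 * Real.pi) :
    Wind (fun t => Complex.exp ((θ * t : ℝ) * Complex.I)) θ := by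
  have hpi := Real.pi_pos
  have habs : ∀ x : ℝ, ‖Complex.exp ((x : ℝ) * Complex.I)‖ = 1 :=
    Complex.norm_exp_ofReal_mul_I
  refine ⟨16, by norm_num, ?_, ?_⟩
  · intro j hj x hx y hy
    have hxy : |x - y| ≤ 1 / 16 := by
      obtain ⟨hx1, hx2⟩ := hx
      obtain ⟨hy1, hy2⟩ := hy
      rw [abs_le]
      constructor <;> nlinarith
    have key : Complex.exp ((θ * x : ℝ) * Complex.I) - Complex.exp ((θ * y : ℝ) * Complex.I) =
        Complex.exp ((θ * y : ℝ) * Complex.I) *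
          (Complex.exp ((θ * (x - y) : ℝ) * Complex.I) - 1) := by
      rw [mul_sub, mul_one, ← Complex.exp_add]
      congr 2
      push_cast
      ring
    rw [key, norm_mul]
    have h1 : ‖Complex.exp ((θ * y : ℝ) * Complex.I)‖ = 1 := habs _
    rw [h1, one_mul]
    have h2 : ‖((θ * (x - y) : ℝ) : ℂ) * Complex.I‖ ≤ 2 * Real.pi / 16 := by
      rw [norm_mul, Complex.norm_I, mul_one, Complex.norm_real, Real.norm_eq_abs, abs_mul]
      calc |θ| * |x - y| ≤ (2 * Real.pi) * (1 / 16) := by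
            apply mul_le_mul hθ hxy (abs_nonneg _) (by positivity)
        _ = 2 * Real.pi / 16 := by ring
    have h3 : ‖((θ * (x - y) : ℝ) : ℂ) * Complex.I‖ ≤ 1 := by
      calc ‖((θ * (x - y) : ℝ) : ℂ) * Complex.I‖ ≤ 2 * Real.pi / 16 := h2
        _ ≤ 1 := by nlinarith [Real.pi_lt_d2]
    have h4 := Complex.norm_exp_sub_one_le h3
    calc ‖Complex.exp ((θ * (x - y) : ℝ) * Complex.I) - 1‖
        ≤ 2 * ‖((θ * (x - y) : ℝ) : ℂ) * Complex.I‖ := h4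
      _ ≤ 2 * (2 * Real.pi / 16) := by linarith
      _ < 1 := by nlinarith [Real.pi_lt_d2]
  · unfold arcsum
    have hterm : ∀ j ∈ Finset.range 16,
        Complex.arg (Complex.exp ((θ * (((j:ℝ) + 1) / 16) : ℝ) * Complex.I) /
          Complex.exp ((θ * ((j:ℝ) / 16) : ℝ) * Complex.I)) = θ / 16 := by
      intro j _
      rw [← Complex.exp_sub]
      have e1 : ((θ * (((j:ℝ) + 1) / 16) : ℝ) : ℂ) * Complex.I -
          ((θ * ((j:ℝ) / 16) : ℝ) : ℂ) * Complex.I = ((θ / 16 : ℝ) : ℂ) * Complex.I := by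
        push_cast
        ring
      rw [e1, Complex.exp_mul_I]
      apply Complex.arg_cos_add_sin_mul_I
      constructor
      · rw [abs_le] at hθ
        nlinarith
      · rw [abs_le] at hθ
        nlinarith
    simp only [Nat.cast_ofNat]
    rw [Finset.sum_congr rfl hterm]
    rw [Finset.sum_const, Finset.card_range]
    simp
    ring
lemma cont_e : Continuous fun t : ℝ => Complex.exp ((2 * Real.pi * t : ℝ) * Complex.I) := by
  apply Complex.continuous_exp.comp
  exact (Complex.continuous_ofReal.comp (continuous_const.mul continuous_id)).mul continuous_const

noncomputable def cAlpha (A : ℂ →L[ℝ] ℂ) : ℂ := (A 1 - Complex.I * A Complex.I) / 2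
noncomputable def cBeta (A : ℂ →L[ℝ] ℂ) : ℂ := (A 1 + Complex.I * A Complex.I) / 2

lemma conj_eq' (z : ℂ) : (starRingEnd ℂ) z = (z.re : ℂ) - (z.im : ℂ) * Complex.I := by
  nth_rewrite 1 [← Complex.re_add_im z]
  rw [map_add, map_mul, Complex.conj_ofReal, Complex.conj_ofReal, Complex.conj_I]
  ring

lemma cApply (A : ℂ →L[ℝ] ℂ) (z : ℂ) :
    A z = cAlpha A * z + cBeta A * (starRingEnd ℂ) z := by
  have hz : A z = (z.re : ℂ) * A 1 + (z.im : ℂ) * A Complex.I := by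
    nth_rewrite 1 [show z = z.re • (1 : ℂ) + z.im • Complex.I by
      rw [Complex.real_smul, Complex.real_smul, mul_one]; exact (Complex.re_add_im z).symm]
    rw [map_add, map_smul, map_smul, Complex.real_smul, Complex.real_smul]
  rw [hz, conj_eq']
  set x := z.re with hx
  set y := z.im with hy
  have hzz : z = (x : ℂ) + (y : ℂ) * Complex.I := (Complex.re_add_im z).symm
  rw [hzz]
  unfold cAlpha cBeta
  linear_combination (y : ℂ) * A Complex.I * Complex.I_sq

lemma cDet (A : ℂ →L[ℝ] ℂ) :
    LinearMap.det (A : ℂ →ₗ[ℝ] ℂ) =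
      Complex.normSq (cAlpha A) - Complex.normSq (cBeta A) := by
  rw [← LinearMap.det_toMatrix Complex.basisOneI, Matrix.det_fin_two]
  simp only [LinearMap.toMatrix_apply, Complex.coe_basisOneI_repr, Complex.coe_basisOneI,
    Matrix.cons_val_zero, Matrix.cons_val_one, Matrix.head_cons,
    ContinuousLinearMap.coe_coe]
  unfold cAlpha cBeta
  rw [map_div₀ Complex.normSq, map_div₀ Complex.normSq]
  have h2 : Complex.normSq 2 = 4 := by
    simp [Complex.normSq_apply]
    norm_num
  rw [h2]
  simp only [Complex.normSq_apply, Complex.sub_re, Complex.sub_im, Complex.add_re,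
    Complex.add_im, Complex.mul_re, Complex.mul_im, Complex.I_re, Complex.I_im]
  ring

lemma abs_lt_abs_of_normSq {x y : ℂ} (h : Complex.normSq x < Complex.normSq y) :
    ‖x‖ < ‖y‖ := by
  have h1 := Complex.sq_norm x
  have h2 := Complex.sq_norm y
  nlinarith [norm_nonneg x, norm_nonneg y]

lemma wind_linear_pos (A : ℂ →L[ℝ] ℂ)
    (h : Complex.normSq (cBeta A) < Complex.normSq (cAlpha A)) :
    Wind (fun t => A (Complex.exp ((2 * Real.pi * t : ℝ) * Complex.I))) (2 * Real.pi) := by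
  have hπ := Real.pi_pos
  have hαβ : ‖cBeta A‖ < ‖cAlpha A‖ := abs_lt_abs_of_normSq h
  have hα : cAlpha A ≠ 0 := by
    intro h0
    rw [h0, norm_zero] at hαβ
    exact absurd hαβ (not_lt.2 (norm_nonneg _))
  have base : Wind (fun t => cAlpha A * Complex.exp ((2 * Real.pi * t : ℝ) * Complex.I))
      (2 * Real.pi) :=
    wind_const_mul hα (wind_exp (2 * Real.pi) (by rw [abs_of_pos (by positivity)]))
  apply wind_rouche (γ₀ := fun t => cAlpha A * Complex.exp ((2 * Real.pi * t : ℝ) * Complex.I))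
    (γ₁ := fun t => A (Complex.exp ((2 * Real.pi * t : ℝ) * Complex.I)))
  · exact (continuous_const.mul cont_e).continuousOn
  · exact (A.continuous.comp cont_e).continuousOn
  · norm_num
  · norm_num
  · intro t _
    rw [cApply A (Complex.exp ((2 * Real.pi * t : ℝ) * Complex.I))]
    have he : ‖Complex.exp ((2 * Real.pi * t : ℝ) * Complex.I)‖ = 1 :=
      Complex.norm_exp_ofReal_mul_I _
    have hec : ‖(starRingEnd ℂ) (Complex.exp ((2 * Real.pi * t : ℝ) * Complex.I))‖ = 1 := by
      rw [Complex.norm_conj]; exact he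
    rw [add_sub_cancel_left]
    show ‖_‖ < ‖_‖
    rw [norm_mul, norm_mul, he, hec, mul_one, mul_one]
    exact hαβ
  · exact base
lemma wind_linear_neg (A : ℂ →L[ℝ] ℂ)
    (h : Complex.normSq (cAlpha A) < Complex.normSq (cBeta A)) :
    Wind (fun t => A (Complex.exp ((2 * Real.pi * t : ℝ) * Complex.I))) (-(2 * Real.pi)) := by
  have hπ := Real.pi_pos
  have hαβ : ‖cAlpha A‖ < ‖cBeta A‖ := abs_lt_abs_of_normSq h
  have hβ : cBeta A ≠ 0 := by
    intro h0
    rw [h0, norm_zero] at hαβ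
    exact absurd hαβ (not_lt.2 (norm_nonneg _))
  have hfun : (fun t : ℝ => cBeta A * (starRingEnd ℂ) (Complex.exp ((2 * Real.pi * t : ℝ) * Complex.I)))
      = fun t : ℝ => cBeta A * Complex.exp (((-(2 * Real.pi)) * t : ℝ) * Complex.I) := by
    funext t
    congr 1
    rw [← Complex.exp_conj]
    congr 1
    rw [map_mul, Complex.conj_ofReal, Complex.conj_I]
    push_cast
    ring
  have base : Wind (fun t => cBeta A * (starRingEnd ℂ) (Complex.exp ((2 * Real.pi * t : ℝ) * Complex.I)))
      (-(2 * Real.pi)) := by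
    rw [hfun]
    exact wind_const_mul hβ (wind_exp (-(2 * Real.pi)) (by rw [abs_neg, abs_of_pos (by positivity)]))
  apply wind_rouche
    (γ₀ := fun t => cBeta A * (starRingEnd ℂ) (Complex.exp ((2 * Real.pi * t : ℝ) * Complex.I)))
    (γ₁ := fun t => A (Complex.exp ((2 * Real.pi * t : ℝ) * Complex.I)))
  · have : Continuous fun t : ℝ => Complex.exp (((-(2 * Real.pi)) * t : ℝ) * Complex.I) := by
      apply Complex.continuous_exp.comp
      exact (Complex.continuous_ofReal.comp (continuous_const.mul continuous_id)).mul
        continuous_const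
    rw [hfun]
    exact (continuous_const.mul this).continuousOn
  · exact (A.continuous.comp cont_e).continuousOn
  · norm_num
  · norm_num
  · intro t _
    rw [cApply A (Complex.exp ((2 * Real.pi * t : ℝ) * Complex.I))]
    have he : ‖Complex.exp ((2 * Real.pi * t : ℝ) * Complex.I)‖ = 1 :=
      Complex.norm_exp_ofReal_mul_I _
    have hec : ‖(starRingEnd ℂ) (Complex.exp ((2 * Real.pi * t : ℝ) * Complex.I))‖ = 1 := by
      rw [Complex.norm_conj]; exact he
    rw [add_sub_cancel_right]
    show ‖_‖ < ‖_‖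
    rw [norm_mul, norm_mul, he, hec, mul_one, mul_one]
    exact hαβ
  · exact base

lemma local_wind (U : Set ℂ) (hU : IsOpen U) (f : ℂ → ℂ) (hcont : ContinuousOn f U)
    {a : ℂ} (ha : a ∈ U) (A : ℂ →L[ℝ] ℂ) (hA : HasFDerivAt f A a)
    (hd : Complex.normSq (cBeta A) ≠ Complex.normSq (cAlpha A)) {r : ℝ} (hr : 0 < r) :
    ∃ ε : ℝ, 0 < ε ∧ ε ≤ r ∧
      Wind (fun t => f (a + (ε : ℂ) * Complex.exp ((2 * Real.pi * t : ℝ) * Complex.I)) - f a)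
        (if Complex.normSq (cBeta A) < Complex.normSq (cAlpha A) then 2 * Real.pi
          else -(2 * Real.pi)) := by
  have hπ := Real.pi_pos
  set c : ℝ := |‖cAlpha A‖ - ‖cBeta A‖| with hc
  have hcpos : 0 < c := by
    rw [hc, abs_pos, sub_ne_zero]
    intro heq
    apply hd
    rw [← Complex.sq_norm, ← Complex.sq_norm, heq]
  have hlow : ∀ z : ℂ, ‖z‖ = 1 → c * 1 ≤ ‖A z‖ := by
    intro z hz
    rw [mul_one, cApply A z]
    have h1 : ‖cAlpha A * z‖ = ‖cAlpha A‖ := by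
      show ‖_‖ = _
      rw [norm_mul, hz, mul_one]
    have h2 : ‖cBeta A * (starRingEnd ℂ) z‖ = ‖cBeta A‖ := by
      show ‖_‖ = _
      rw [norm_mul, Complex.norm_conj, hz, mul_one]
    have t1 : ‖cAlpha A * z‖ - ‖-(cBeta A * (starRingEnd ℂ) z)‖ ≤
        ‖cAlpha A * z - -(cBeta A * (starRingEnd ℂ) z)‖ := norm_sub_norm_le _ _
    have t2 : ‖cBeta A * (starRingEnd ℂ) z‖ - ‖-(cAlpha A * z)‖ ≤
        ‖cBeta A * (starRingEnd ℂ) z - -(cAlpha A * z)‖ := norm_sub_norm_le _ _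
    rw [sub_neg_eq_add, norm_neg] at t1 t2
    rw [hc]
    apply abs_le.2
    constructor
    · rw [neg_le, neg_sub]
      calc ‖cBeta A‖ - ‖cAlpha A‖
          ≤ ‖cBeta A * (starRingEnd ℂ) z + cAlpha A * z‖ := by rw [← h1, ← h2]; exact t2
        _ = ‖cAlpha A * z + cBeta A * (starRingEnd ℂ) z‖ := by rw [add_comm]
    · rw [← h1, ← h2]
      exact t1
  rw [hasFDerivAt_iff_isLittleO_nhds_zero] at hA
  have hev := Asymptotics.isLittleO_iff.mp hA (show (0:ℝ) < c / 2 by positivity)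
  rw [Metric.eventually_nhds_iff] at hev
  obtain ⟨δ, hδ, hball⟩ := hev
  obtain ⟨r', hr', hball'⟩ := Metric.isOpen_iff.mp hU a ha
  set ε : ℝ := min r (min (δ / 2) (r' / 2)) with hε
  have hεpos : 0 < ε := by
    rw [hε]
    apply lt_min hr (lt_min (by positivity) (by positivity))
  have hεr : ε ≤ r := min_le_left _ _
  have hεδ : ε < δ := lt_of_le_of_lt ((min_le_right _ _).trans (min_le_left _ _)) (by linarith)
  have hεr' : ε < r' := lt_of_le_of_lt ((min_le_right _ _).trans (min_le_right _ _)) (by linarith)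
  refine ⟨ε, hεpos, hεr, ?_⟩
  set e : ℝ → ℂ := fun t => Complex.exp ((2 * Real.pi * t : ℝ) * Complex.I) with he
  have habse : ∀ t, ‖e t‖ = 1 := fun t => Complex.norm_exp_ofReal_mul_I _
  have hnorm : ∀ t, ‖(ε : ℂ) * e t‖ = ε := by
    intro t
    show ‖_‖ = ε
    rw [norm_mul, Complex.norm_real, Real.norm_eq_abs, habse, mul_one, abs_of_pos hεpos]
  have hmem : ∀ t : ℝ, a + (ε : ℂ) * e t ∈ U := by
    intro t
    apply hball'
    rw [Metric.mem_ball, dist_eq_norm, add_sub_cancel_left, hnorm]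
    exact hεr'
  have hloopE : e 1 = e 0 := by
    rw [he]
    simp only [mul_one, mul_zero]
    rw [show ((2 * Real.pi : ℝ) : ℂ) * Complex.I = 2 * Real.pi * Complex.I by push_cast; ring]
    rw [Complex.exp_two_pi_mul_I]
    norm_num
  set γ₁ : ℝ → ℂ := fun t => A ((ε : ℂ) * e t) with hγ₁
  have hγ₁eq : γ₁ = fun t => (ε : ℂ) * A (e t) := by
    funext t
    simp only [hγ₁]
    have : (ε : ℂ) * e t = ε • e t := (Complex.real_smul).symm
    rw [this, map_smul, Complex.real_smul]
  have hwind₁ : Wind γ₁ (if Complex.normSq (cBeta A) < Complex.normSq (cAlpha A) then 2 * Real.pi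
      else -(2 * Real.pi)) := by
    rw [hγ₁eq]
    have hεC : (ε : ℂ) ≠ 0 := by exact_mod_cast ne_of_gt hεpos
    split_ifs with hlt
    · exact wind_const_mul hεC (wind_linear_pos A hlt)
    · exact wind_const_mul hεC
        (wind_linear_neg A (lt_of_le_of_ne (le_of_not_gt hlt) hd.symm))
  apply wind_rouche (γ₀ := γ₁)
    (γ₁ := fun t => f (a + (ε : ℂ) * e t) - f a)
  · rw [hγ₁eq]
    apply Continuous.continuousOn
    apply Continuous.mul continuous_const
    exact A.continuous.comp (by rw [he]; exact cont_e)
  · apply ContinuousOn.sub _ continuousOn_const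
    apply hcont.comp
    · apply Continuous.continuousOn
      rw [he]
      exact continuous_const.add (continuous_const.mul cont_e)
    · intro t _
      exact hmem t
  · simp only [hγ₁, hloopE]
  · rw [hloopE]
  · intro t _
    have hdist : dist ((ε : ℂ) * e t) 0 < δ := by
      rw [dist_eq_norm, sub_zero, hnorm]
      exact hεδ
    have hb := hball hdist
    have hAe : c * ε ≤ ‖A ((ε : ℂ) * e t)‖ := by
      have := hlow (e t) (habse t)
      calc c * ε = ε * (c * 1) := by ring
        _ ≤ ε * ‖A (e t)‖ := by
            apply mul_le_mul_of_nonneg_left this (le_of_lt hεpos)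
        _ = ‖(ε : ℂ) * A (e t)‖ := by
            rw [norm_mul, Complex.norm_real, Real.norm_eq_abs, abs_of_pos hεpos]
        _ = ‖A ((ε : ℂ) * e t)‖ := by
            congr 1
            have : (ε : ℂ) * e t = ε • e t := (Complex.real_smul).symm
            rw [this, map_smul, Complex.real_smul]
    calc ‖(f (a + (ε : ℂ) * e t) - f a) - γ₁ t‖
        = ‖f (a + (ε : ℂ) * e t) - f a - A ((ε : ℂ) * e t)‖ := by simp only [hγ₁]
      _ ≤ c / 2 * ‖(ε : ℂ) * e t‖ := hb
      _ = c / 2 * ε := by rw [hnorm]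
      _ < c * ε := by nlinarith
      _ ≤ ‖A ((ε : ℂ) * e t)‖ := hAe
      _ = ‖γ₁ t‖ := by simp only [hγ₁]
  · exact hwind₁
theorem main_complex (U : Set ℂ) (hU : IsOpen U) (hconn : IsPathConnected U)
    (f : ℂ → ℂ) (hcont : ContinuousOn f U) (hinj : Set.InjOn f U)
    (a b : ℂ) (ha : a ∈ U) (hb : b ∈ U) (A B : ℂ →L[ℝ] ℂ)
    (hA : HasFDerivAt f A a) (hB : HasFDerivAt f B b)
    (hdetA : 0 < LinearMap.det (A : ℂ →ₗ[ℝ] ℂ)) :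
    0 ≤ LinearMap.det (B : ℂ →ₗ[ℝ] ℂ) := by
  have hπ := Real.pi_pos
  by_contra hneg
  push_neg at hneg
  rw [cDet] at hdetA hneg
  have hdA : Complex.normSq (cBeta A) < Complex.normSq (cAlpha A) := by linarith
  have hdB : Complex.normSq (cAlpha B) < Complex.normSq (cBeta B) := by linarith
  obtain ⟨p, hp⟩ := hconn.joinedIn a ha b hb
  set q : ℝ → ℂ := ⇑p.extend with hq
  have hqc : Continuous q := p.continuous_extend
  have hqU : ∀ s ∈ Set.Icc (0:ℝ) 1, q s ∈ U := by
    intro s hs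
    rw [hq, Path.extend_apply p hs]
    exact hp _
  have hK : IsCompact (q '' Set.Icc 0 1) := isCompact_Icc.image hqc
  have hKU : q '' Set.Icc 0 1 ⊆ U := by rintro _ ⟨s, hs, rfl⟩; exact hqU s hs
  obtain ⟨δ₀, hδ₀, hth⟩ := hK.exists_thickening_subset_open hU hKU
  have hballs : ∀ s ∈ Set.Icc (0:ℝ) 1, Metric.ball (q s) δ₀ ⊆ U := by
    intro s hs x hx
    apply hth
    rw [Metric.mem_thickening_iff]
    exact ⟨q s, ⟨s, hs, rfl⟩, hx⟩
  obtain ⟨εa, hεa, hεar, hwa⟩ :=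
    local_wind U hU f hcont ha A hA (ne_of_lt hdA) (half_pos hδ₀)
  obtain ⟨εb, hεb, hεbr, hwb⟩ :=
    local_wind U hU f hcont hb B hB (ne_of_gt hdB) (half_pos hδ₀)
  rw [if_pos hdA] at hwa
  rw [if_neg (not_lt.2 (le_of_lt hdB))] at hwb
  set eps : ℝ → ℝ := fun s => εa + s * (εb - εa) with heps
  have hepsc : Continuous eps := by
    rw [heps]
    exact continuous_const.add (continuous_id.mul continuous_const)
  have hepspos : ∀ s ∈ Set.Icc (0:ℝ) 1, 0 < eps s := by
    intro s hs
    obtain ⟨h1, h2⟩ := hs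
    rw [heps]
    simp only
    nlinarith [mul_nonneg h1 (le_of_lt hεb), mul_nonneg (sub_nonneg.2 h2) (le_of_lt hεa)]
  have hepsle : ∀ s ∈ Set.Icc (0:ℝ) 1, eps s ≤ δ₀ / 2 := by
    intro s hs
    obtain ⟨h1, h2⟩ := hs
    rw [heps]
    simp only
    nlinarith [mul_nonneg h1 (sub_nonneg.2 hεbr), mul_nonneg (sub_nonneg.2 h2) (sub_nonneg.2 hεar)]
  set e : ℝ → ℂ := fun t => Complex.exp ((2 * Real.pi * t : ℝ) * Complex.I) with he
  have hec : Continuous e := by rw [he]; exact cont_e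
  have habse : ∀ t, ‖e t‖ = 1 := fun t => Complex.norm_exp_ofReal_mul_I _
  have hene : ∀ t, e t ≠ 0 := by
    intro t h0
    have := habse t
    rw [h0] at this
    simp at this
  have hloopE : e 1 = e 0 := by
    rw [he]
    simp only [mul_one, mul_zero]
    rw [show ((2 * Real.pi : ℝ) : ℂ) * Complex.I = 2 * Real.pi * Complex.I by push_cast; ring]
    rw [Complex.exp_two_pi_mul_I]
    norm_num
  set H : ℝ → ℝ → ℂ := fun s t => f (q s + (eps s : ℂ) * e t) - f (q s) with hH
  have hmem : ∀ s ∈ Set.Icc (0:ℝ) 1, ∀ t : ℝ, q s + (eps s : ℂ) * e t ∈ U := by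
    intro s hs t
    apply hballs s hs
    rw [Metric.mem_ball, dist_eq_norm, add_sub_cancel_left, norm_mul, Complex.norm_real,
      Real.norm_eq_abs, abs_of_pos (hepspos s hs)]
    have : ‖e t‖ = 1 := habse t
    rw [this, mul_one]
    exact lt_of_le_of_lt (hepsle s hs) (half_lt_self hδ₀)
  have hHcont : ContinuousOn (fun pr : ℝ × ℝ => H pr.1 pr.2) (Set.Icc 0 1 ×ˢ Set.Icc 0 1) := by
    simp only [hH]
    have hinner : Continuous fun pr : ℝ × ℝ => q pr.1 + (eps pr.1 : ℂ) * e pr.2 := by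
      apply Continuous.add (hqc.comp continuous_fst)
      exact ((Complex.continuous_ofReal.comp (hepsc.comp continuous_fst)).mul
        (hec.comp continuous_snd))
    apply ContinuousOn.sub
    · apply hcont.comp hinner.continuousOn
      rintro ⟨s, t⟩ ⟨hs, _⟩
      exact hmem s hs t
    · apply hcont.comp (hqc.comp continuous_fst).continuousOn
      rintro ⟨s, t⟩ ⟨hs, _⟩
      exact hqU s hs
  have hHne : ∀ s ∈ Set.Icc (0:ℝ) 1, ∀ t ∈ Set.Icc (0:ℝ) 1, H s t ≠ 0 := by
    intro s hs t _
    simp only [hH]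
    rw [sub_ne_zero]
    intro hfe
    have hxy := hinj (hmem s hs t) (hqU s hs) hfe
    have : (eps s : ℂ) * e t = 0 := by
      have := congrArg (fun z => z - q s) hxy
      simpa using this
    rcases mul_eq_zero.mp this with h | h
    · have : eps s = 0 := by exact_mod_cast h
      exact absurd this (ne_of_gt (hepspos s hs))
    · exact hene t h
  have hHloop : ∀ s ∈ Set.Icc (0:ℝ) 1, H s 1 = H s 0 := by
    intro s _
    simp only [hH, hloopE]
  have hH0 : H 0 = fun t => f (a + (εa : ℂ) * e t) - f a := by
    funext t
    have hq0 : q 0 = a := p.extend_zero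
    have heps0 : eps 0 = εa := by rw [heps]; simp
    simp only [hH, hq0, heps0]
  have hH1 : H 1 = fun t => f (b + (εb : ℂ) * e t) - f b := by
    funext t
    have hq1 : q 1 = b := p.extend_one
    have heps1 : eps 1 = εb := by rw [heps]; simp
    simp only [hH, hq1, heps1]
  have hw0 : Wind (H 0) (2 * Real.pi) := by rw [hH0]; exact hwa
  have hw1 := wind_homotopy H hHcont hHne hHloop hw0
  rw [hH1] at hw1
  have := Wind.unique hw1 hwb
  linarith
noncomputable def psiE : EuclideanSpace ℝ (Fin 2) ≃ₗ[ℝ] ℂ :=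
  LinearEquiv.ofFinrankEq _ _
    (by rw [finrank_euclideanSpace_fin, Complex.finrank_real_complex])

noncomputable def phiE : EuclideanSpace ℝ (Fin 2) ≃L[ℝ] ℂ := psiE.toContinuousLinearEquiv

open MeasureTheory

theorem stmt_4 (U : Set (EuclideanSpace ℝ (Fin 2))) (hU : IsOpen U)
    (hconn : IsPathConnected U)
    (f : EuclideanSpace ℝ (Fin 2) → EuclideanSpace ℝ (Fin 2))
    (hcont : ContinuousOn f U) (hinj : Set.InjOn f U)
    (a b : EuclideanSpace ℝ (Fin 2)) (ha : a ∈ U) (hb : b ∈ U)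
    (fa fb : EuclideanSpace ℝ (Fin 2) →L[ℝ] EuclideanSpace ℝ (Fin 2))
    (hfa : HasFDerivAt f fa a) (hfb : HasFDerivAt f fb b)
    (hdeta : 0 < LinearMap.det (fa : EuclideanSpace ℝ (Fin 2) →ₗ[ℝ] EuclideanSpace ℝ (Fin 2))) :
    0 ≤ LinearMap.det (fb : EuclideanSpace ℝ (Fin 2) →ₗ[ℝ] EuclideanSpace ℝ (Fin 2)) := by
  set ψ := psiE with hψ
  set φ := phiE with hφ
  set U' : Set ℂ := ⇑φ '' U with hU'
  set g : ℂ → ℂ := fun z => φ (f (φ.symm z)) with hg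
  have hφsymm : ∀ x : EuclideanSpace ℝ (Fin 2), φ.symm (φ x) = x := fun x => φ.symm_apply_apply x
  have hmemU' : ∀ x ∈ U, φ x ∈ U' := fun x hx => ⟨x, hx, rfl⟩
  have hsymmU : ∀ z ∈ U', φ.symm z ∈ U := by
    rintro z ⟨x, hx, rfl⟩
    rw [hφsymm]
    exact hx
  have hU'open : IsOpen U' := φ.toHomeomorph.isOpenMap U hU
  have hU'conn : IsPathConnected U' := hconn.image φ.continuous
  have hgcont : ContinuousOn g U' := by
    apply φ.continuous.comp_continuousOn
    exact hcont.comp φ.symm.continuous.continuousOn hsymmU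
  have hginj : Set.InjOn g U' := by
    intro z hz w hw hzw
    have h1 : f (φ.symm z) = f (φ.symm w) := φ.injective hzw
    have h2 : φ.symm z = φ.symm w := hinj (hsymmU z hz) (hsymmU w hw) h1
    have := congrArg (⇑φ) h2
    rwa [φ.apply_symm_apply, φ.apply_symm_apply] at this
  -- derivatives
  have hderiv : ∀ (x : EuclideanSpace ℝ (Fin 2)) (A : EuclideanSpace ℝ (Fin 2) →L[ℝ] EuclideanSpace ℝ (Fin 2)), HasFDerivAt f A x →
      HasFDerivAt g (((φ : EuclideanSpace ℝ (Fin 2) →L[ℝ] ℂ).comp A).comp (φ.symm : ℂ →L[ℝ] EuclideanSpace ℝ (Fin 2))) (φ x) := by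
    intro x A hx
    have h1 : HasFDerivAt (⇑φ.symm) (φ.symm : ℂ →L[ℝ] EuclideanSpace ℝ (Fin 2)) (φ x) :=
      φ.symm.toContinuousLinearMap.hasFDerivAt
    have h2 : HasFDerivAt f A (φ.symm (φ x)) := by rwa [hφsymm]
    have h3 : HasFDerivAt (⇑φ) (φ : EuclideanSpace ℝ (Fin 2) →L[ℝ] ℂ) (f (φ.symm (φ x))) :=
      φ.toContinuousLinearMap.hasFDerivAt
    exact (h3.comp (φ x) (h2.comp (φ x) h1) : _)
  have hdet : ∀ A : EuclideanSpace ℝ (Fin 2) →L[ℝ] EuclideanSpace ℝ (Fin 2),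
      LinearMap.det ((((φ : EuclideanSpace ℝ (Fin 2) →L[ℝ] ℂ).comp A).comp (φ.symm : ℂ →L[ℝ] EuclideanSpace ℝ (Fin 2)) : ℂ →L[ℝ] ℂ) : ℂ →ₗ[ℝ] ℂ)
        = LinearMap.det (A : EuclideanSpace ℝ (Fin 2) →ₗ[ℝ] EuclideanSpace ℝ (Fin 2)) := by
    intro A
    have : ((((φ : EuclideanSpace ℝ (Fin 2) →L[ℝ] ℂ).comp A).comp (φ.symm : ℂ →L[ℝ] EuclideanSpace ℝ (Fin 2)) : ℂ →L[ℝ] ℂ) : ℂ →ₗ[ℝ] ℂ)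
        = (ψ : EuclideanSpace ℝ (Fin 2) →ₗ[ℝ] ℂ) ∘ₗ (A : EuclideanSpace ℝ (Fin 2) →ₗ[ℝ] EuclideanSpace ℝ (Fin 2)) ∘ₗ (ψ.symm : ℂ →ₗ[ℝ] EuclideanSpace ℝ (Fin 2)) := by
      ext z
      simp [hφ, phiE, hψ]
    rw [this]
    exact LinearMap.det_conj (A : EuclideanSpace ℝ (Fin 2) →ₗ[ℝ] EuclideanSpace ℝ (Fin 2)) ψ
  have hA := hderiv a fa hfa
  have hB := hderiv b fb hfb
  have := main_complex U' hU'open hU'conn g hgcont hginj (φ a) (φ b)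
    (hmemU' a ha) (hmemU' b hb) _ _ hA hB (by rw [hdet fa]; exact hdeta)
  rw [hdet fb] at this
  exact this
end

section
/- For any pair of measurable sets A, B ⊆ ℝ there exist two distinct closed intervals I and I', each of length greater than 1, such that λ(I ∩ A) = λ(I' ∩ A) and λ(I ∩ B) = λ(I' ∩ B). -/
open MeasureTheory Set Filter Topology
open scoped ENNReal

noncomputable def mss (S : Set ℝ) (x y : ℝ) : ℝ := (volume (S ∩ Set.Ioc x y)).toReal

lemma mss_ne_top (S : Set ℝ) (x y : ℝ) : volume (S ∩ Set.Ioc x y) ≠ ⊤ := by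
  apply ne_top_of_le_ne_top _ (measure_mono (Set.inter_subset_right))
  simp [Real.volume_Ioc]

lemma mss_nonneg (S : Set ℝ) (x y : ℝ) : 0 ≤ mss S x y := ENNReal.toReal_nonneg

lemma vol_eq_ofReal_mss (S : Set ℝ) (x y : ℝ) :
    volume (S ∩ Set.Ioc x y) = ENNReal.ofReal (mss S x y) := by
  rw [mss, ENNReal.ofReal_toReal (mss_ne_top S x y)]

lemma mss_mono_set {S T : Set ℝ} (h : S ⊆ T) (x y : ℝ) : mss S x y ≤ mss T x y := by
  apply ENNReal.toReal_mono (mss_ne_top T x y)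
  exact measure_mono (Set.inter_subset_inter_left _ h)

lemma mss_le_length (S : Set ℝ) {x y : ℝ} (h : x ≤ y) : mss S x y ≤ y - x := by
  rw [mss]
  have : volume (S ∩ Set.Ioc x y) ≤ ENNReal.ofReal (y - x) := by
    rw [← Real.volume_Ioc]; exact measure_mono Set.inter_subset_right
  calc (volume (S ∩ Set.Ioc x y)).toReal ≤ (ENNReal.ofReal (y - x)).toReal :=
        ENNReal.toReal_mono (by simp) this
    _ = y - x := ENNReal.toReal_ofReal (by linarith)

lemma mss_empty (S : Set ℝ) {x y : ℝ} (h : y ≤ x) : mss S x y = 0 := by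
  rw [mss, Set.Ioc_eq_empty (by exact not_lt.mpr h), Set.inter_empty]
  simp

lemma mss_add {S : Set ℝ} (hS : MeasurableSet S) {x y z : ℝ} (hxy : x ≤ y) (hyz : y ≤ z) :
    mss S x y + mss S y z = mss S x z := by
  rw [mss, mss, mss, ← ENNReal.toReal_add (mss_ne_top S x y) (mss_ne_top S y z)]
  congr 1
  have hd : Disjoint (S ∩ Set.Ioc x y) (S ∩ Set.Ioc y z) := by
    refine (Set.disjoint_left.mpr (fun a ha hb => ?_)).mono
      Set.inter_subset_right Set.inter_subset_right
    exact (not_lt.mpr ha.2) hb.1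
  rw [← measure_union hd (hS.inter measurableSet_Ioc),
    ← Set.inter_union_distrib_left, Set.Ioc_union_Ioc_eq_Ioc hxy hyz]

lemma mss_mono_right (S : Set ℝ) {x y z : ℝ} (hxy : x ≤ y) (hyz : y ≤ z) :
    mss S x y ≤ mss S x z := by
  have h1 : volume (S ∩ Set.Ioc x y) ≤ volume (S ∩ Set.Ioc x z) :=
    measure_mono (Set.inter_subset_inter_right _ (Set.Ioc_subset_Ioc le_rfl hyz))
  exact ENNReal.toReal_mono (mss_ne_top S x z) h1

lemma mss_mono_left {S : Set ℝ} (hS : MeasurableSet S) {x y z : ℝ} (hxy : x ≤ y) :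
    mss S y z ≤ mss S x z := by
  apply ENNReal.toReal_mono (mss_ne_top S x z)
  exact measure_mono (Set.inter_subset_inter_right _ (Set.Ioc_subset_Ioc hxy le_rfl))

/-- Lipschitz in the right endpoint. -/
lemma mss_lip_right {S : Set ℝ} (hS : MeasurableSet S) (x y z : ℝ) :
    |mss S x y - mss S x z| ≤ |y - z| := by
  wlog h : z ≤ y generalizing y z
  · rw [abs_sub_comm, abs_sub_comm y z]; exact this _ _ (le_of_not_ge h)
  rcases le_or_gt z x with hzx | hxz
  · rw [mss_empty S hzx, sub_zero]
    rcases le_or_gt y x with hyx | hxy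
    · rw [mss_empty S hyx]; simpa using abs_nonneg _
    · rw [abs_of_nonneg (mss_nonneg S x y), abs_of_nonneg (by linarith)]
      calc mss S x y ≤ y - x := mss_le_length S hxy.le
        _ ≤ y - z := by linarith
  · rw [← mss_add hS hxz.le h]
    have h1 := mss_nonneg S z y
    have h2 := mss_le_length S h
    rw [abs_of_nonneg (by linarith), abs_of_nonneg (by linarith)]
    linarith

/-- Lipschitz in the left endpoint. -/
lemma mss_lip_left {S : Set ℝ} (hS : MeasurableSet S) (x y z : ℝ) :
    |mss S x z - mss S y z| ≤ |x - y| := by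
  wlog h : x ≤ y generalizing x y
  · rw [abs_sub_comm, abs_sub_comm x y]; exact this _ _ (le_of_not_ge h)
  rcases le_or_gt z x with hzx | hxz
  · rw [mss_empty S hzx, mss_empty S (by linarith)]; simpa using abs_nonneg _
  · rcases le_or_gt z y with hzy | hyz
    · rw [mss_empty S hzy, sub_zero, abs_of_nonneg (mss_nonneg S x z),
        abs_of_nonpos (by linarith)]
      calc mss S x z ≤ z - x := mss_le_length S hxz.le
        _ ≤ -(x - y) := by linarith
    · rw [← mss_add hS h hyz.le]
      have h1 := mss_nonneg S x y
      have h2 := mss_le_length S h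
      rw [abs_of_nonneg (by linarith), abs_of_nonpos (by linarith)]
      linarith

lemma mss_cont_right {S : Set ℝ} (hS : MeasurableSet S) (x : ℝ) :
    Continuous (fun y => mss S x y) := by
  have : LipschitzWith 1 (fun y => mss S x y) := by
    apply LipschitzWith.of_dist_le_mul
    intro a b
    rw [Real.dist_eq, Real.dist_eq, NNReal.coe_one, one_mul]
    exact mss_lip_right hS x a b
  exact this.continuous

lemma mss_pos_of_vol_ne_zero {S : Set ℝ} {x y : ℝ} (h : volume (S ∩ Set.Ioc x y) ≠ 0) :
    0 < mss S x y := ENNReal.toReal_pos h (mss_ne_top S x y)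

lemma vol_ne_zero_of_mss_pos {S : Set ℝ} {x y : ℝ} (h : 0 < mss S x y) :
    volume (S ∩ Set.Ioc x y) ≠ 0 := by
  intro h0
  rw [mss, h0] at h
  simp at h

/-- IVT helper: get a subinterval with exactly a prescribed mass. -/
lemma exists_mss_eq {S : Set ℝ} (hS : MeasurableSet S) {u v t : ℝ} (hu : u ≤ v)
    (ht : 0 < t) (h : t ≤ mss S u v) : ∃ e, u < e ∧ e ≤ v ∧ mss S u e = t := by
  have hc : ContinuousOn (fun y => mss S u y) (Set.Icc u v) :=
    (mss_cont_right hS u).continuousOn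
  have h0 : mss S u u = 0 := mss_empty S le_rfl
  have : t ∈ Set.Icc (mss S u u) (mss S u v) := by rw [h0]; exact ⟨ht.le, h⟩
  obtain ⟨e, he, hev⟩ := intermediate_value_Icc hu hc this
  change mss S u e = t at hev
  refine ⟨e, ?_, he.2, hev⟩
  by_contra hle
  push_neg at hle
  rw [mss_empty S hle] at hev
  linarith

def Concl (A B : Set ℝ) : Prop :=
  ∃ x y x' y' : ℝ, 1 < y - x ∧ 1 < y' - x' ∧ (x, y) ≠ (x', y') ∧
    volume (Set.Icc x y ∩ A) = volume (Set.Icc x' y' ∩ A) ∧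
    volume (Set.Icc x y ∩ B) = volume (Set.Icc x' y' ∩ B)

lemma icc_inter_vol (S : Set ℝ) {x y : ℝ} (h : x ≤ y) :
    volume (Set.Icc x y ∩ S) = volume (S ∩ Set.Ioc x y) := by
  apply le_antisymm
  · calc volume (Set.Icc x y ∩ S) ≤ volume ({x} ∪ (S ∩ Set.Ioc x y)) := by
          apply measure_mono
          rintro z ⟨⟨hz1, hz2⟩, hzS⟩
          rcases eq_or_lt_of_le hz1 with h1 | h1
          · exact Or.inl (by simp [h1.symm])
          · exact Or.inr ⟨hzS, h1, hz2⟩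
      _ ≤ volume ({x} : Set ℝ) + volume (S ∩ Set.Ioc x y) := measure_union_le _ _
      _ = volume (S ∩ Set.Ioc x y) := by simp
  · exact measure_mono (fun z hz => ⟨⟨hz.2.1.le, hz.2.2⟩, hz.1⟩)

/-- Assembly: two disjoint intervals with equal mass vectors, separated by a gap `> 1`,
give the conclusion. -/
lemma assemble {A B : Set ℝ} (hA : MeasurableSet A) (hB : MeasurableSet B)
    {a b c d : ℝ} (hab : a < b) (hbc : b + 1 < c) (hcd : c < d)
    (h1 : mss A a b = mss A c d) (h2 : mss B a b = mss B c d) : Concl A B := by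
  refine ⟨a, c, b, d, by linarith, by linarith, ?_, ?_, ?_⟩
  · intro h
    rw [Prod.mk.injEq] at h
    exact absurd h.1 hab.ne
  · rw [icc_inter_vol A (by linarith), icc_inter_vol A (by linarith),
      vol_eq_ofReal_mss, vol_eq_ofReal_mss]
    congr 1
    rw [← mss_add hA (by linarith : a ≤ b) (by linarith : b ≤ c),
      ← mss_add hA (by linarith : b ≤ c) (by linarith : c ≤ d), h1]
    ring
  · rw [icc_inter_vol B (by linarith), icc_inter_vol B (by linarith),
      vol_eq_ofReal_mss, vol_eq_ofReal_mss]
    congr 1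
    rw [← mss_add hB (by linarith : a ≤ b) (by linarith : b ≤ c),
      ← mss_add hB (by linarith : b ≤ c) (by linarith : c ≤ d), h2]
    ring

/-- The easy case: an interval null for both `A` and `B` (wiggle the endpoint). -/
lemma wiggle {A B : Set ℝ} {u v : ℝ} (huv : u < v)
    (h1 : mss A u v = 0) (h2 : mss B u v = 0) : Concl A B := by
  have key : ∀ S : Set ℝ, mss S u v = 0 →
      volume (Set.Icc (u-2) v ∩ S) = volume (Set.Icc (u-2) ((u+v)/2) ∩ S) := by
    intro S hS0
    rw [icc_inter_vol S (by linarith), icc_inter_vol S (by linarith)]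
    have hv0 : volume (S ∩ Set.Ioc u v) = 0 := by
      rw [vol_eq_ofReal_mss, hS0]; simp
    apply le_antisymm
    · calc volume (S ∩ Set.Ioc (u-2) v)
          ≤ volume ((S ∩ Set.Ioc (u-2) ((u+v)/2)) ∪ (S ∩ Set.Ioc u v)) := by
            apply measure_mono
            rintro z ⟨hzS, hz1, hz2⟩
            rcases le_or_gt z ((u+v)/2) with h | h
            · exact Or.inl ⟨hzS, hz1, h⟩
            · exact Or.inr ⟨hzS, by linarith, hz2⟩
        _ ≤ volume (S ∩ Set.Ioc (u-2) ((u+v)/2)) + volume (S ∩ Set.Ioc u v) :=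
            measure_union_le _ _
        _ = volume (S ∩ Set.Ioc (u-2) ((u+v)/2)) := by rw [hv0, add_zero]
    · exact measure_mono (Set.inter_subset_inter_right _
        (Set.Ioc_subset_Ioc le_rfl (by linarith)))
  exact ⟨u - 2, v, u - 2, (u+v)/2, by linarith, by linarith,
    by
      intro h
      rw [Prod.mk.injEq] at h
      have := h.2
      linarith,
    key A h1, key B h2⟩

lemma mss_mono_right' (S : Set ℝ) {x y z : ℝ} (hyz : y ≤ z) :
    mss S x y ≤ mss S x z := by
  rcases le_or_gt x y with h | h
  · exact mss_mono_right S h hyz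
  · rw [mss_empty S h.le]; exact mss_nonneg S x z

/-- Core matching lemma. -/
lemma match_window {A B : Set ℝ} (hA : MeasurableSet A) (hB : MeasurableSet B)
    {w α t : ℝ} (hα : 0 < α)
    (hmono : ∀ u v, w ≤ u → u < v → v ≤ w + 2 → 0 < mss A u v)
    (hcap : ∀ c, w ≤ c → c ≤ w + 1 → α < mss A c (c + 1))
    {xlo xhi : ℝ} (hlo1 : xlo ∈ Set.Icc w (w+1)) (hhi1 : xhi ∈ Set.Icc w (w+1))
    (hlo : ∀ e, xlo < e → mss A xlo e = α → mss B xlo e < t)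
    (hhi : ∀ e, xhi < e → mss A xhi e = α → t < mss B xhi e) :
    ∃ c e, w ≤ c ∧ c ≤ w + 1 ∧ c < e ∧ e ≤ c + 1 ∧ mss A c e = α ∧ mss B c e = t := by
  classical
  set D := Set.Icc w (w+1) with hD
  set Sc : ℝ → Set ℝ := fun c => {y | y ∈ Set.Icc c (c+1) ∧ α ≤ mss A c y} with hSc
  set E : ℝ → ℝ := fun c => sInf (Sc c) with hE
  have hne : ∀ c ∈ D, (Sc c).Nonempty := by
    intro c hc
    exact ⟨c+1, ⟨by linarith, le_rfl⟩, (hcap c hc.1 hc.2).le⟩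
  have hbdd : ∀ c, BddBelow (Sc c) := by
    intro c
    exact ⟨c, fun y hy => hy.1.1⟩
  have hclosed : ∀ c, IsClosed (Sc c) := by
    intro c
    have : Sc c = Set.Icc c (c+1) ∩ (fun y => mss A c y) ⁻¹' (Set.Ici α) := by
      ext y; simp [hSc, Set.mem_Icc, and_comm]
    rw [this]
    exact isClosed_Icc.inter ((isClosed_Ici).preimage (mss_cont_right hA c))
  have hmem : ∀ c ∈ D, E c ∈ Sc c := fun c hc => (hclosed c).csInf_mem (hne c hc) (hbdd c)
  have hEge : ∀ c ∈ D, c ≤ E c := fun c hc => (hmem c hc).1.1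
  have hEle : ∀ c ∈ D, E c ≤ c + 1 := fun c hc => (hmem c hc).1.2
  have hEgt : ∀ c ∈ D, c < E c := by
    intro c hc
    rcases eq_or_lt_of_le (hEge c hc) with h | h
    · exfalso
      have := (hmem c hc).2
      rw [← h, mss_empty A le_rfl] at this
      linarith
    · exact h
  have hEeq : ∀ c ∈ D, mss A c (E c) = α := by
    intro c hc
    by_contra hne'
    have hgt : α < mss A c (E c) := lt_of_le_of_ne (hmem c hc).2 (Ne.symm hne')
    set δ := min (mss A c (E c) - α) (E c - c) with hδ
    have hδpos : 0 < δ := lt_min (by linarith) (by linarith [hEgt c hc])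
    have hy : E c - δ ∈ Sc c := by
      constructor
      · constructor
        · have : δ ≤ E c - c := min_le_right _ _
          linarith
        · have := hEle c hc
          linarith
      · have hl := mss_lip_right hA c (E c - δ) (E c)
        have h1 : |E c - δ - E c| = δ := by
          rw [show E c - δ - E c = -δ by ring, abs_neg, abs_of_pos hδpos]
        rw [h1] at hl
        have h2 : δ ≤ mss A c (E c) - α := min_le_left _ _
        have := abs_le.mp hl
        linarith [this.1]
    have hcontr : E c ≤ E c - δ := csInf_le (hbdd c) hy
    linarith
  have hElt : ∀ c ∈ D, E c < c + 1 := by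
    intro c hc
    rcases eq_or_lt_of_le (hEle c hc) with h | h
    · exfalso
      have h1 := hEeq c hc
      have h2 := hcap c hc.1 hc.2
      rw [h] at h1
      linarith
    · exact h
  -- continuity of E on D
  have hEcont : ContinuousOn E D := by
    rw [Metric.continuousOn_iff]
    intro c0 hc0 ε hε
    set e0 := E c0 with he0
    have he0gt : c0 < e0 := hEgt c0 hc0
    have he0lt : e0 < c0 + 1 := hElt c0 hc0
    set ε' := min (min (ε/2) ((e0 - c0)/2)) ((c0 + 1 - e0)/2) with hε'
    have hε'pos : 0 < ε' := by
      apply lt_min (lt_min (by linarith) (by linarith)) (by linarith)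
    have hε'a : ε' ≤ ε/2 := le_trans (min_le_left _ _) (min_le_left _ _)
    have hε'b : ε' ≤ (e0 - c0)/2 := le_trans (min_le_left _ _) (min_le_right _ _)
    have hε'c : ε' ≤ (c0 + 1 - e0)/2 := min_le_right _ _
    have hw2 : e0 + ε' ≤ w + 2 := by
      have := hc0.2
      linarith
    have hetaP : 0 < mss A e0 (e0 + ε') := by
      apply hmono e0 (e0 + ε') (by linarith [hc0.1]) (by linarith) hw2
    have hetaM : 0 < mss A (e0 - ε') e0 := by
      apply hmono (e0 - ε') e0 (by linarith [hc0.1]) (by linarith) (by linarith [hc0.2])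
    set δ := min (min (mss A e0 (e0 + ε') / 2) (mss A (e0 - ε') e0 / 2)) ε' with hδ
    have hδpos : 0 < δ := lt_min (lt_min (by linarith) (by linarith)) hε'pos
    refine ⟨δ, hδpos, fun c hc hdist => ?_⟩
    rw [Real.dist_eq] at hdist ⊢
    have hδa : δ ≤ mss A e0 (e0 + ε') / 2 := le_trans (min_le_left _ _) (min_le_left _ _)
    have hδb : δ ≤ mss A (e0 - ε') e0 / 2 := le_trans (min_le_left _ _) (min_le_right _ _)
    have hδc : δ ≤ ε' := min_le_right _ _
    have hccb := abs_le.mp hdist.le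
    -- upper bound : E c ≤ e0 + ε'
    have hub : E c ≤ e0 + ε' := by
      have hmem' : e0 + ε' ∈ Sc c := by
        constructor
        · constructor
          · linarith [hccb.1, hccb.2]
          · linarith [hccb.1, hccb.2]
        · have hl := mss_lip_left hA c c0 (e0 + ε')
          have h1 : mss A c0 (e0 + ε') = α + mss A e0 (e0 + ε') := by
            rw [← mss_add hA (le_of_lt he0gt) (by linarith), hEeq c0 hc0]
          have := abs_le.mp hl
          have h2 : |c - c0| ≤ δ := hdist.le
          nlinarith [this.1, this.2]
      exact csInf_le (hbdd c) hmem'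
    -- lower bound : e0 - ε' < E c
    have hlb : e0 - ε' < E c := by
      by_contra hcon
      push_neg at hcon
      have hcD : c ∈ D := hc
      have h1 : mss A c (E c) = α := hEeq c hcD
      have h2 : mss A c0 (e0 - ε') = α - mss A (e0 - ε') e0 := by
        have := mss_add hA (by linarith : c0 ≤ e0 - ε') (by linarith : e0 - ε' ≤ e0)
        have h3 := hEeq c0 hc0
        rw [← he0] at h3
        linarith
      have hl := mss_lip_left hA c c0 (E c)
      have h4 : mss A c0 (E c) ≤ mss A c0 (e0 - ε') := mss_mono_right' A hcon
      have := abs_le.mp hl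
      nlinarith [this.1, this.2]
    have h5 : E c - E c0 ≤ ε' := by rw [← he0]; linarith
    have h6 : -(ε') ≤ E c - E c0 := by rw [← he0]; linarith
    rw [abs_lt]
    constructor <;> linarith
  -- β and IVT
  set W : ℝ → ℝ := fun y => mss B (w - 1) y with hW
  have hβrepr : ∀ c ∈ D, mss B c (E c) = W (E c) - W c := by
    intro c hc
    have := mss_add hB (show w - 1 ≤ c by linarith [hc.1]) (hEge c hc)
    rw [hW]
    simp only []
    linarith
  set β : ℝ → ℝ := fun c => W (E c) - W c with hβ
  have hβcont : ContinuousOn β D := by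
    apply ContinuousOn.sub
    · exact ((mss_cont_right hB (w-1)).comp_continuousOn hEcont)
    · exact (mss_cont_right hB (w-1)).continuousOn
  have hsub : Set.uIcc xlo xhi ⊆ D := by
    rw [Set.uIcc_eq_union]
    apply Set.union_subset
    · exact Set.Icc_subset_Icc hlo1.1 hhi1.2
    · exact Set.Icc_subset_Icc hhi1.1 hlo1.2
  have hβlo : β xlo < t := by
    rw [hβ]
    simp only []
    rw [← hβrepr xlo hlo1]
    exact hlo (E xlo) (hEgt xlo hlo1) (hEeq xlo hlo1)
  have hβhi : t < β xhi := by
    rw [hβ]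
    simp only []
    rw [← hβrepr xhi hhi1]
    exact hhi (E xhi) (hEgt xhi hhi1) (hEeq xhi hhi1)
  have hmemt : t ∈ Set.uIcc (β xlo) (β xhi) := by
    rw [Set.uIcc_of_le (by linarith)]
    exact ⟨hβlo.le, hβhi.le⟩
  obtain ⟨c, hcmem, hct⟩ := intermediate_value_uIcc (hβcont.mono hsub) hmemt
  have hcD : c ∈ D := hsub hcmem
  refine ⟨c, E c, hcD.1, hcD.2, hEgt c hcD, hEle c hcD, hEeq c hcD, ?_⟩
  rw [hβrepr c hcD]
  exact hct

/-- From a set of positive mass in a window, extract a one-sided density point,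
with quantitative lower bound for `S` and upper bound for a disjoint set `U`. -/
lemma exists_good_point {S U : Set ℝ} (hS : MeasurableSet S) (hU : MeasurableSet U)
    (hdisj : S ∩ U = ∅) {a b : ℝ} (hpos : 0 < mss S a b) :
    ∃ x ∈ Set.Ioc a b, ∃ r0 > 0, ∀ h, 0 < h → h ≤ r0 →
      3*h/4 ≤ mss S x (x+h) ∧ mss U x (x+h) ≤ h/4 := by
  have ae1 := Besicovitch.ae_tendsto_measure_inter_div_of_measurableSet volume hS
  have ae2 := Besicovitch.ae_tendsto_measure_inter_div_of_measurableSet volume hU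
  obtain ⟨N, hN0, hNprop⟩ : ∃ N : Set ℝ, volume N = 0 ∧ ∀ x ∉ N,
      (Tendsto (fun r => volume (S ∩ Metric.closedBall x r) / volume (Metric.closedBall x r))
        (𝓝[>] 0) (𝓝 (S.indicator 1 x)) ∧
       Tendsto (fun r => volume (U ∩ Metric.closedBall x r) / volume (Metric.closedBall x r))
        (𝓝[>] 0) (𝓝 (U.indicator 1 x))) := by
    have h12 := ae1.and ae2
    rw [MeasureTheory.ae_iff] at h12
    exact ⟨_, h12, fun x hx => not_not.mp hx⟩
  have hvol : volume ((S ∩ Set.Ioc a b) \ N) ≠ 0 := by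
    rw [measure_diff_null hN0]
    exact vol_ne_zero_of_mss_pos hpos
  obtain ⟨x, hx⟩ := nonempty_of_measure_ne_zero hvol
  obtain ⟨⟨hxS, hxab⟩, hxN⟩ := hx
  have hxU : x ∉ U := fun hxU => by
    have : x ∈ S ∩ U := ⟨hxS, hxU⟩
    rw [hdisj] at this
    exact this
  obtain ⟨h1, h2⟩ := hNprop x hxN
  rw [Set.indicator_of_mem hxS] at h1
  rw [Set.indicator_of_notMem hxU] at h2

  have e1 : ∀ᶠ r in 𝓝[>] (0:ℝ),
      ENNReal.ofReal (7/8) < volume (S ∩ Metric.closedBall x r) / volume (Metric.closedBall x r) :=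
    h1.eventually (lt_mem_nhds (by norm_num [ENNReal.ofReal_lt_one] : ENNReal.ofReal (7/8) < (1:ℝ≥0∞)))
  have e2 : ∀ᶠ r in 𝓝[>] (0:ℝ),
      volume (U ∩ Metric.closedBall x r) / volume (Metric.closedBall x r) < ENNReal.ofReal (1/8) :=
    h2.eventually (gt_mem_nhds (ENNReal.ofReal_pos.mpr (by norm_num)))
  obtain ⟨r0, hr0, hr0p⟩ := mem_nhdsGT_iff_exists_Ioc_subset.mp (e1.and e2)
  refine ⟨x, ⟨hxab.1, hxab.2⟩, r0, hr0, fun h hh hhr0 => ?_⟩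
  obtain ⟨b1, b2⟩ := hr0p (show h ∈ Set.Ioc (0:ℝ) r0 from ⟨hh, hhr0⟩)
  have hcb : volume (Metric.closedBall x h) = ENNReal.ofReal (2*h) := Real.volume_closedBall x h
  have hcbne : volume (Metric.closedBall x h) ≠ 0 := by
    rw [hcb]
    simp only [ne_eq, ENNReal.ofReal_eq_zero, not_le]
    linarith
  have hcbtop : volume (Metric.closedBall x h) ≠ ⊤ := by rw [hcb]; exact ENNReal.ofReal_ne_top
  constructor
  · -- lower bound for S
    have hlow : ENNReal.ofReal (7/8) * volume (Metric.closedBall x h)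
        < volume (S ∩ Metric.closedBall x h) := by
      rw [← ENNReal.lt_div_iff_mul_lt (Or.inl hcbne) (Or.inl hcbtop)]
      exact b1
    have hlow2 : ENNReal.ofReal (7*h/4) ≤ volume (S ∩ Metric.closedBall x h) := by
      rw [hcb] at hlow
      rw [← ENNReal.ofReal_mul (by norm_num : (0:ℝ) ≤ 7/8)] at hlow
      calc ENNReal.ofReal (7*h/4) = ENNReal.ofReal (7/8*(2*h)) := by ring_nf
        _ ≤ _ := hlow.le
    have hsplit : volume (S ∩ Metric.closedBall x h)
        ≤ ENNReal.ofReal (mss S x (x+h)) + ENNReal.ofReal h := by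
      rw [← vol_eq_ofReal_mss]
      calc volume (S ∩ Metric.closedBall x h)
          ≤ volume ((S ∩ Set.Ioc x (x+h)) ∪ Set.Icc (x-h) x) := by
            apply measure_mono
            rintro z ⟨hzS, hz⟩
            rw [Real.closedBall_eq_Icc] at hz
            rcases le_or_gt z x with hle | hlt
            · exact Or.inr ⟨hz.1, hle⟩
            · exact Or.inl ⟨hzS, hlt, hz.2⟩
        _ ≤ volume (S ∩ Set.Ioc x (x+h)) + volume (Set.Icc (x-h) x) := measure_union_le _ _
        _ = volume (S ∩ Set.Ioc x (x+h)) + ENNReal.ofReal h := by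
            rw [Real.volume_Icc]
            norm_num
    have : ENNReal.ofReal (7*h/4) ≤ ENNReal.ofReal (mss S x (x+h) + h) := by
      calc ENNReal.ofReal (7*h/4) ≤ _ := hlow2
        _ ≤ _ := hsplit
        _ = ENNReal.ofReal (mss S x (x+h) + h) := by
            rw [ENNReal.ofReal_add (mss_nonneg S x (x+h)) hh.le]
    rw [ENNReal.ofReal_le_ofReal_iff (by linarith [mss_nonneg S x (x+h)])] at this
    linarith
  · -- upper bound for U
    have hup : volume (U ∩ Metric.closedBall x h) < ENNReal.ofReal (1/8) * volume (Metric.closedBall x h) := by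
      rw [← ENNReal.div_lt_iff (Or.inl hcbne) (Or.inl hcbtop)]
      exact b2
    have : ENNReal.ofReal (mss U x (x+h)) ≤ ENNReal.ofReal (h/4) := by
      rw [← vol_eq_ofReal_mss]
      calc volume (U ∩ Set.Ioc x (x+h)) ≤ volume (U ∩ Metric.closedBall x h) := by
            apply measure_mono
            apply Set.inter_subset_inter_right
            rw [Real.closedBall_eq_Icc]
            exact fun z hz => ⟨by linarith [hz.1], hz.2⟩
        _ ≤ ENNReal.ofReal (1/8) * ENNReal.ofReal (2*h) := by rw [← hcb]; exact hup.le
        _ = ENNReal.ofReal (1/8*(2*h)) := (ENNReal.ofReal_mul (by norm_num)).symm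
        _ = ENNReal.ofReal (h/4) := by ring_nf
    rw [ENNReal.ofReal_le_ofReal_iff (by linarith)] at this
    exact this

lemma mss_subadd {S T V : Set ℝ} (hsub : V ⊆ S ∪ T) (x y : ℝ) :
    mss V x y ≤ mss S x y + mss T x y := by
  have h1 : volume (V ∩ Set.Ioc x y) ≤ volume (S ∩ Set.Ioc x y) + volume (T ∩ Set.Ioc x y) := by
    calc volume (V ∩ Set.Ioc x y) ≤ volume ((S ∩ Set.Ioc x y) ∪ (T ∩ Set.Ioc x y)) := by
          apply measure_mono
          rintro z ⟨hzV, hz⟩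
          rcases hsub hzV with h | h
          · exact Or.inl ⟨h, hz⟩
          · exact Or.inr ⟨h, hz⟩
      _ ≤ _ := measure_union_le _ _
  have h2 := ENNReal.toReal_mono (a := volume (V ∩ Set.Ioc x y)) ?_ h1
  · rw [ENNReal.toReal_add (mss_ne_top S x y) (mss_ne_top T x y)] at h2
    exact h2
  · exact ENNReal.add_ne_top.mpr ⟨mss_ne_top S x y, mss_ne_top T x y⟩

/-- positive minimum of `c ↦ mss A c (c+1)` over a window. -/
lemma window_min {A : Set ℝ} (hA : MeasurableSet A) {w : ℝ}
    (hmono : ∀ u v, w ≤ u → u < v → v ≤ w + 2 → 0 < mss A u v) :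
    ∃ m > 0, ∀ c ∈ Set.Icc w (w+1), m ≤ mss A c (c+1) := by
  set f : ℝ → ℝ := fun c => mss A (w-1) (c+1) - mss A (w-1) c with hf
  have hfc : ContinuousOn f (Set.Icc w (w+1)) := by
    apply ContinuousOn.sub
    · exact ((mss_cont_right hA (w-1)).comp (continuous_id.add continuous_const)).continuousOn
    · exact (mss_cont_right hA (w-1)).continuousOn
  obtain ⟨c0, hc0mem, hc0min'⟩ := (isCompact_Icc).exists_isMinOn
    (Set.nonempty_Icc.mpr (by linarith)) hfc
  have hc0min : ∀ c ∈ Set.Icc w (w+1), f c0 ≤ f c := fun c hc => hc0min' hc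
  have hfeq : ∀ c ∈ Set.Icc w (w+1), f c = mss A c (c+1) := by
    intro c hc
    have := mss_add hA (show w - 1 ≤ c by linarith [hc.1]) (show c ≤ c + 1 by linarith)
    rw [hf]
    simp only []
    linarith
  refine ⟨f c0, ?_, fun c hc => ?_⟩
  · rw [hfeq c0 hc0mem]
    exact hmono c0 (c0+1) hc0mem.1 (by linarith) (by linarith [hc0mem.2])
  · rw [← hfeq c hc]
    exact hc0min c hc

/-- p-type point: A-density 1, B-density 0. -/
lemma lo_pack {A B : Set ℝ} (hA : MeasurableSet A) (hB : MeasurableSet B) {w : ℝ}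
    (hpos : 0 < mss (A \ B) w (w+1)) :
    ∃ x ∈ Set.Icc w (w+1), ∃ θ > 0, ∀ α, 0 < α → α ≤ θ →
      ∀ e, x < e → mss A x e = α → mss B x e ≤ (1/3)*α := by
  obtain ⟨x, hx, r0, hr0, hbd⟩ :=
    exists_good_point (hA.diff hB) hB (by ext z; simp) hpos
  refine ⟨x, ⟨hx.1.le, hx.2⟩, 3*r0/8, by linarith, fun α hα hαθ e he hme => ?_⟩
  have hd := hbd r0 hr0 le_rfl
  have hle : e ≤ x + r0 := by
    by_contra hcon
    push_neg at hcon
    have : mss A x e ≥ 3*r0/4 := by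
      calc mss A x e ≥ mss A x (x + r0) := mss_mono_right' A hcon.le
        _ ≥ mss (A \ B) x (x + r0) := mss_mono_set Set.diff_subset _ _
        _ ≥ 3*r0/4 := hd.1
    rw [hme] at this
    linarith
  set h := e - x with hh
  have hhe : e = x + h := by rw [hh]; ring
  have hhpos : 0 < h := by rw [hh]; linarith
  have hhr0 : h ≤ r0 := by rw [hh]; linarith
  obtain ⟨hd1, hd2⟩ := hbd h hhpos hhr0
  rw [← hhe] at hd1 hd2
  have h43 : h ≤ 4*α/3 := by
    have : mss A x e ≥ mss (A \ B) x e := mss_mono_set Set.diff_subset _ _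
    rw [hme] at this
    linarith
  linarith

/-- r-type point: A-density 1, B-density 1 (via A ∩ B). -/
lemma mid_pack {A B : Set ℝ} (hA : MeasurableSet A) (hB : MeasurableSet B) {w : ℝ}
    (hpos : 0 < mss (A ∩ B) w (w+1)) :
    ∃ x ∈ Set.Icc w (w+1), ∃ θ > 0, ∀ α, 0 < α → α ≤ θ →
      ∀ e, x < e → mss A x e = α → (3/4)*α ≤ mss B x e ∧ mss B x e ≤ (4/3)*α := by
  obtain ⟨x, hx, r0, hr0, hbd⟩ :=
    exists_good_point (hA.inter hB) MeasurableSet.empty (by simp) hpos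
  refine ⟨x, ⟨hx.1.le, hx.2⟩, 3*r0/8, by linarith, fun α hα hαθ e he hme => ?_⟩
  have hd := hbd r0 hr0 le_rfl
  have hle : e ≤ x + r0 := by
    by_contra hcon
    push_neg at hcon
    have : mss A x e ≥ 3*r0/4 := by
      calc mss A x e ≥ mss A x (x + r0) := mss_mono_right' A hcon.le
        _ ≥ mss (A ∩ B) x (x + r0) := mss_mono_set Set.inter_subset_left _ _
        _ ≥ 3*r0/4 := hd.1
    rw [hme] at this
    linarith
  set h := e - x with hh
  have hhe : e = x + h := by rw [hh]; ring
  have hhpos : 0 < h := by rw [hh]; linarith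
  have hhr0 : h ≤ r0 := by rw [hh]; linarith
  obtain ⟨hd1, _⟩ := hbd h hhpos hhr0
  rw [← hhe] at hd1
  have hαh : α ≤ h := by
    rw [← hme]
    have := mss_le_length A (x := x) (y := e) (by linarith)
    linarith
  have h43 : h ≤ 4*α/3 := by
    have : mss A x e ≥ mss (A ∩ B) x e := mss_mono_set Set.inter_subset_left _ _
    rw [hme] at this
    linarith
  constructor
  · calc (3/4)*α ≤ (3/4)*h := by linarith
      _ ≤ mss (A ∩ B) x e := by linarith
      _ ≤ mss B x e := mss_mono_set Set.inter_subset_right _ _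
  · calc mss B x e ≤ e - x := mss_le_length B (by linarith)
      _ = h := by rw [hh]
      _ ≤ (4/3)*α := by linarith

/-- q-type point: A-density 0, B-density 1. -/
lemma hi_pack {A B : Set ℝ} (hA : MeasurableSet A) (hB : MeasurableSet B) {w : ℝ}
    (hmono : ∀ u v, w ≤ u → u < v → v ≤ w + 2 → 0 < mss A u v)
    (hpos : 0 < mss (B \ A) w (w+1)) :
    ∃ x ∈ Set.Icc w (w+1), ∃ θ > 0, ∀ α, 0 < α → α ≤ θ →
      ∀ e, x < e → mss A x e = α → 3*α ≤ mss B x e := by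
  obtain ⟨x, hx, r1, hr1, hbd1⟩ :=
    exists_good_point (hB.diff hA) hA (by ext z; simp) hpos
  set r0 := min r1 1 with hr0def
  have hr0 : 0 < r0 := lt_min hr1 one_pos
  have hbd : ∀ h, 0 < h → h ≤ r0 → 3*h/4 ≤ mss (B \ A) x (x+h) ∧ mss A x (x+h) ≤ h/4 :=
    fun h hh hhr0 => hbd1 h hh (le_trans hhr0 (min_le_left _ _))
  have hκ : 0 < mss A x (x + r0) := by
    apply hmono x (x + r0) hx.1.le (by linarith)
    have := hx.2
    have : r0 ≤ 1 := min_le_right _ _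
    linarith [hx.2]
  refine ⟨x, ⟨hx.1.le, hx.2⟩, mss A x (x + r0) / 2, by linarith, fun α hα hαθ e he hme => ?_⟩
  have hle : e ≤ x + r0 := by
    by_contra hcon
    push_neg at hcon
    have : mss A x e ≥ mss A x (x + r0) := mss_mono_right' A hcon.le
    rw [hme] at this
    linarith
  set h := e - x with hh
  have hhe : e = x + h := by rw [hh]; ring
  have hhpos : 0 < h := by rw [hh]; linarith
  have hhr0 : h ≤ r0 := by rw [hh]; linarith
  obtain ⟨hd1, hd2⟩ := hbd h hhpos hhr0
  rw [← hhe] at hd1 hd2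
  have h4α : 4*α ≤ h := by
    rw [hme] at hd2
    linarith
  calc 3*α ≤ (3/4)*h := by linarith
    _ ≤ mss (B \ A) x e := by linarith
    _ ≤ mss B x e := mss_mono_set Set.diff_subset _ _

lemma concl_swap {A B : Set ℝ} (h : Concl B A) : Concl A B := by
  obtain ⟨x, y, x', y', h1, h2, h3, h4, h5⟩ := h
  exact ⟨x, y, x', y', h1, h2, h3, h5, h4⟩

/-- Two far-apart windows, each with a low point and a high point, give the conclusion. -/
lemma pair_from_pts {A B : Set ℝ} (hA : MeasurableSet A) (hB : MeasurableSet B)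
    {w1 w2 Lfac tfac Hfac : ℝ} (h5 : w1 + 5 ≤ w2)
    (hLt : Lfac < tfac) (htH : tfac < Hfac)
    (hmono1 : ∀ u v, w1 ≤ u → u < v → v ≤ w1 + 2 → 0 < mss A u v)
    (hmono2 : ∀ u v, w2 ≤ u → u < v → v ≤ w2 + 2 → 0 < mss A u v)
    (pack1 : ∃ xlo ∈ Set.Icc w1 (w1+1), ∃ xhi ∈ Set.Icc w1 (w1+1), ∃ θ > 0,
      ∀ α, 0 < α → α ≤ θ →
        (∀ e, xlo < e → mss A xlo e = α → mss B xlo e ≤ Lfac*α) ∧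
        (∀ e, xhi < e → mss A xhi e = α → Hfac*α ≤ mss B xhi e))
    (pack2 : ∃ xlo ∈ Set.Icc w2 (w2+1), ∃ xhi ∈ Set.Icc w2 (w2+1), ∃ θ > 0,
      ∀ α, 0 < α → α ≤ θ →
        (∀ e, xlo < e → mss A xlo e = α → mss B xlo e ≤ Lfac*α) ∧
        (∀ e, xhi < e → mss A xhi e = α → Hfac*α ≤ mss B xhi e)) :
    Concl A B := by
  obtain ⟨xlo1, hxlo1, xhi1, hxhi1, θ1, hθ1, hpk1⟩ := pack1
  obtain ⟨xlo2, hxlo2, xhi2, hxhi2, θ2, hθ2, hpk2⟩ := pack2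
  obtain ⟨m1, hm1, hmin1⟩ := window_min hA hmono1
  obtain ⟨m2, hm2, hmin2⟩ := window_min hA hmono2
  set α := min (min θ1 θ2) (min (m1/2) (m2/2)) with hα
  have hαpos : 0 < α := lt_min (lt_min hθ1 hθ2) (lt_min (by linarith) (by linarith))
  have hαθ1 : α ≤ θ1 := le_trans (min_le_left _ _) (min_le_left _ _)
  have hαθ2 : α ≤ θ2 := le_trans (min_le_left _ _) (min_le_right _ _)
  have hαm1 : α ≤ m1/2 := le_trans (min_le_right _ _) (min_le_left _ _)
  have hαm2 : α ≤ m2/2 := le_trans (min_le_right _ _) (min_le_right _ _)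
  set t := tfac * α with ht
  obtain ⟨hlo1, hhi1⟩ := hpk1 α hαpos hαθ1
  obtain ⟨hlo2, hhi2⟩ := hpk2 α hαpos hαθ2
  obtain ⟨c1, e1, hc1a, hc1b, hc1e, he1, hmA1, hmB1⟩ :=
    match_window hA hB (t := t) hαpos hmono1
      (fun c hc1 hc2 => lt_of_le_of_lt hαm1 (lt_of_lt_of_le (by linarith : m1/2 < m1)
        (hmin1 c ⟨hc1, hc2⟩)))
      hxlo1 hxhi1
      (fun e he hm => lt_of_le_of_lt (hlo1 e he hm) (by rw [ht]; nlinarith))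
      (fun e he hm => lt_of_lt_of_le (by rw [ht]; nlinarith) (hhi1 e he hm))
  obtain ⟨c2, e2, hc2a, hc2b, hc2e, he2, hmA2, hmB2⟩ :=
    match_window hA hB (t := t) hαpos hmono2
      (fun c hc1 hc2 => lt_of_le_of_lt hαm2 (lt_of_lt_of_le (by linarith : m2/2 < m2)
        (hmin2 c ⟨hc1, hc2⟩)))
      hxlo2 hxhi2
      (fun e he hm => lt_of_le_of_lt (hlo2 e he hm) (by rw [ht]; nlinarith))
      (fun e he hm => lt_of_lt_of_le (by rw [ht]; nlinarith) (hhi2 e he hm))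
  apply assemble hA hB (a := c1) (b := e1) (c := c2) (d := e2) hc1e (by linarith) hc2e
  · rw [hmA1, hmA2]
  · rw [hmB1, hmB2]

/-- Both windows see only `A ∩ B` : match masses directly. -/
lemma ff_case {A B : Set ℝ} (hA : MeasurableSet A) (hB : MeasurableSet B)
    {w1 w2 : ℝ} (h5 : w1 + 5 ≤ w2)
    (hm1 : 0 < mss A w1 (w1+1)) (hm2 : 0 < mss A w2 (w2+1))
    (hp1 : mss (A \ B) w1 (w1+1) = 0) (hq1 : mss (B \ A) w1 (w1+1) = 0)
    (hp2 : mss (A \ B) w2 (w2+1) = 0) (hq2 : mss (B \ A) w2 (w2+1) = 0) :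
    Concl A B := by
  set t0 := min (mss A w1 (w1+1)) (mss A w2 (w2+1)) / 2 with ht0
  have ht0pos : 0 < t0 := by
    rw [ht0]
    have := lt_min hm1 hm2
    linarith [lt_min hm1 hm2]
  obtain ⟨e1, he1a, he1b, he1m⟩ := exists_mss_eq hA (show w1 ≤ w1 + 1 by linarith) ht0pos
    (by rw [ht0]; linarith [min_le_left (mss A w1 (w1+1)) (mss A w2 (w2+1))])
  obtain ⟨e2, he2a, he2b, he2m⟩ := exists_mss_eq hA (show w2 ≤ w2 + 1 by linarith) ht0pos
    (by rw [ht0]; linarith [min_le_right (mss A w1 (w1+1)) (mss A w2 (w2+1))])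
  have key : ∀ w e, w < e → e ≤ w + 1 → mss (A \ B) w (w+1) = 0 → mss (B \ A) w (w+1) = 0 →
      mss B w e = mss A w e := by
    intro w e hwe hew hp hq
    have hpe : mss (A \ B) w e = 0 := by
      have h1 : mss (A \ B) w e ≤ mss (A \ B) w (w+1) := mss_mono_right' _ hew
      have h2 := mss_nonneg (A \ B) w e
      linarith
    have hqe : mss (B \ A) w e = 0 := by
      have h1 : mss (B \ A) w e ≤ mss (B \ A) w (w+1) := mss_mono_right' _ hew
      have h2 := mss_nonneg (B \ A) w e
      linarith
    have hsub1 : mss A w e ≤ mss (A ∩ B) w e + mss (A \ B) w e :=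
      mss_subadd (fun z hz => by by_cases hzB : z ∈ B
                                 · exact Or.inl ⟨hz, hzB⟩
                                 · exact Or.inr ⟨hz, hzB⟩) w e
    have hsub2 : mss B w e ≤ mss (A ∩ B) w e + mss (B \ A) w e :=
      mss_subadd (fun z hz => by by_cases hzA : z ∈ A
                                 · exact Or.inl ⟨hzA, hz⟩
                                 · exact Or.inr ⟨hz, hzA⟩) w e
    have hAB_le_A : mss (A ∩ B) w e ≤ mss A w e := mss_mono_set Set.inter_subset_left _ _
    have hAB_le_B : mss (A ∩ B) w e ≤ mss B w e := mss_mono_set Set.inter_subset_right _ _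
    rw [hpe] at hsub1
    rw [hqe] at hsub2
    linarith
  apply assemble hA hB (a := w1) (b := e1) (c := w2) (d := e2) he1a (by linarith) he2a
  · rw [he1m, he2m]
  · rw [key w1 e1 he1a he1b hp1 hq1, key w2 e2 he2a he2b hp2 hq2, he1m, he2m]

/-- Two far-apart A-null intervals (with B positive there) give the conclusion. -/
lemma two_nulls {A B : Set ℝ} (hA : MeasurableSet A) (hB : MeasurableSet B)
    {a b u v : ℝ} (hab : a < b) (hgap : b + 1 < u) (huv : u < v)
    (h1 : mss A a b = 0) (h2 : mss A u v = 0)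
    (hB1 : 0 < mss B a b) (hB2 : 0 < mss B u v) : Concl A B := by
  set t0 := min (mss B a b) (mss B u v) / 2 with ht0
  have ht0pos : 0 < t0 := by
    rw [ht0]
    linarith [lt_min hB1 hB2]
  obtain ⟨e1, he1a, he1b, he1m⟩ := exists_mss_eq hB hab.le ht0pos
    (by rw [ht0]; linarith [min_le_left (mss B a b) (mss B u v)])
  obtain ⟨e2, he2a, he2b, he2m⟩ := exists_mss_eq hB huv.le ht0pos
    (by rw [ht0]; linarith [min_le_right (mss B a b) (mss B u v)])
  have hA1 : mss A a e1 = 0 := by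
    have := mss_mono_right' A (x := a) he1b
    have := mss_nonneg A a e1
    linarith
  have hA2 : mss A u e2 = 0 := by
    have := mss_mono_right' A (x := u) he2b
    have := mss_nonneg A u e2
    linarith
  apply assemble hA hB (a := a) (b := e1) (c := u) (d := e2) he1a (by linarith) he2a
  · rw [hA1, hA2]
  · rw [he1m, he2m]

theorem main_concl (A B : Set ℝ) (hA : MeasurableSet A) (hB : MeasurableSet B) : Concl A B := by
  classical
  by_cases h0 : ∃ u v : ℝ, u < v ∧ mss A u v = 0 ∧ mss B u v = 0
  · obtain ⟨u, v, huv, h1, h2⟩ := h0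
    exact wiggle huv h1 h2
  push_neg at h0
  have hposB : ∀ u v : ℝ, u < v → mss A u v = 0 → 0 < mss B u v := by
    intro u v h h1
    rcases eq_or_lt_of_le (mss_nonneg B u v) with hh | hh
    · exact absurd hh.symm (h0 u v h h1)
    · exact hh
  have hposA : ∀ u v : ℝ, u < v → mss B u v = 0 → 0 < mss A u v := by
    intro u v h h1
    rcases eq_or_lt_of_le (mss_nonneg A u v) with hh | hh
    · exact absurd h1 (h0 u v h hh.symm)
    · exact hh
  by_cases hFPA : ∃ a b u v : ℝ, a < b ∧ b + 1 < u ∧ u < v ∧ mss A a b = 0 ∧ mss A u v = 0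
  · obtain ⟨a, b, u, v, hab, hgap, huv, h1, h2⟩ := hFPA
    exact two_nulls hA hB hab hgap huv h1 h2 (hposB a b hab h1) (hposB u v huv h2)
  by_cases hFPB : ∃ a b u v : ℝ, a < b ∧ b + 1 < u ∧ u < v ∧ mss B a b = 0 ∧ mss B u v = 0
  · obtain ⟨a, b, u, v, hab, hgap, huv, h1, h2⟩ := hFPB
    exact concl_swap (two_nulls hB hA hab hgap huv h1 h2 (hposA a b hab h1) (hposA u v huv h2))
  push_neg at hFPA hFPB
  have hcAex : ∃ cA : ℝ, ∀ u v, cA ≤ u → u < v → 0 < mss A u v := by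
    by_cases hex : ∃ a b : ℝ, a < b ∧ mss A a b = 0
    · obtain ⟨a0, b0, hab0, h0'⟩ := hex
      refine ⟨b0 + 2, fun u v hu huv => ?_⟩
      rcases eq_or_lt_of_le (mss_nonneg A u v) with hh | hh
      · exact absurd hh.symm (hFPA a0 b0 u v hab0 (by linarith) huv h0')
      · exact hh
    · push_neg at hex
      refine ⟨0, fun u v _ huv => ?_⟩
      rcases eq_or_lt_of_le (mss_nonneg A u v) with hh | hh
      · exact absurd hh.symm (hex u v huv)
      · exact hh
  have hcBex : ∃ cB : ℝ, ∀ u v, cB ≤ u → u < v → 0 < mss B u v := by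
    by_cases hex : ∃ a b : ℝ, a < b ∧ mss B a b = 0
    · obtain ⟨a0, b0, hab0, h0'⟩ := hex
      refine ⟨b0 + 2, fun u v hu huv => ?_⟩
      rcases eq_or_lt_of_le (mss_nonneg B u v) with hh | hh
      · exact absurd hh.symm (hFPB a0 b0 u v hab0 (by linarith) huv h0')
      · exact hh
    · push_neg at hex
      refine ⟨0, fun u v _ huv => ?_⟩
      rcases eq_or_lt_of_le (mss_nonneg B u v) with hh | hh
      · exact absurd hh.symm (hex u v huv)
      · exact hh
  obtain ⟨cA, hcA⟩ := hcAex
  obtain ⟨cB, hcB⟩ := hcBex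
  set c0 := max cA cB with hc0
  have hmA : ∀ u v : ℝ, c0 ≤ u → u < v → 0 < mss A u v :=
    fun u v hu huv => hcA u v (le_trans (le_max_left _ _) hu) huv
  have hmB : ∀ u v : ℝ, c0 ≤ u → u < v → 0 < mss B u v :=
    fun u v hu huv => hcB u v (le_trans (le_max_right _ _) hu) huv
  set W : Fin 5 → ℝ := fun k => c0 + 5 * ((k : ℕ) : ℝ) with hW
  set f : Fin 5 → Bool × Bool := fun k =>
    (if 0 < mss (A \ B) (W k) (W k + 1) then true else false,
     if 0 < mss (B \ A) (W k) (W k + 1) then true else false) with hf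
  obtain ⟨k, k', hkk', hfeq⟩ := Fintype.exists_ne_map_eq_of_card_lt f (by simp)
  obtain ⟨i, j, hij, hfij⟩ : ∃ i j : Fin 5, i < j ∧ f i = f j := by
    rcases lt_or_gt_of_ne hkk' with hlt | hgt
    · exact ⟨k, k', hlt, hfeq⟩
    · exact ⟨k', k, hgt, hfeq.symm⟩
  set w1 := W i with hw1
  set w2 := W j with hw2
  have h5 : w1 + 5 ≤ w2 := by
    rw [hw1, hw2, hW]
    simp only []
    have hij' : (i : ℕ) + 1 ≤ (j : ℕ) := hij
    have : ((i : ℕ) : ℝ) + 1 ≤ ((j : ℕ) : ℝ) := by exact_mod_cast hij'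
    linarith
  have hc0w1 : c0 ≤ w1 := by
    rw [hw1, hW]
    simp only []
    have : (0:ℝ) ≤ ((i : ℕ) : ℝ) := Nat.cast_nonneg _
    linarith
  have hc0w2 : c0 ≤ w2 := by
    rw [hw2, hW]
    simp only []
    have : (0:ℝ) ≤ ((j : ℕ) : ℝ) := Nat.cast_nonneg _
    linarith
  have hmono1 : ∀ u v, w1 ≤ u → u < v → v ≤ w1 + 2 → 0 < mss A u v :=
    fun u v hu huv _ => hmA u v (le_trans hc0w1 hu) huv
  have hmono2 : ∀ u v, w2 ≤ u → u < v → v ≤ w2 + 2 → 0 < mss A u v :=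
    fun u v hu huv _ => hmA u v (le_trans hc0w2 hu) huv
  have hAw1 : 0 < mss A w1 (w1+1) := hmA w1 (w1+1) hc0w1 (by linarith)
  have hAw2 : 0 < mss A w2 (w2+1) := hmA w2 (w2+1) hc0w2 (by linarith)
  have hBw1 : 0 < mss B w1 (w1+1) := hmB w1 (w1+1) hc0w1 (by linarith)
  have hBw2 : 0 < mss B w2 (w2+1) := hmB w2 (w2+1) hc0w2 (by linarith)
  have hfst : (if 0 < mss (A \ B) w1 (w1 + 1) then true else false)
      = (if 0 < mss (A \ B) w2 (w2 + 1) then true else false) := congrArg Prod.fst hfij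
  have hsnd : (if 0 < mss (B \ A) w1 (w1 + 1) then true else false)
      = (if 0 < mss (B \ A) w2 (w2 + 1) then true else false) := congrArg Prod.snd hfij
  have hsubB : B ⊆ (A ∩ B) ∪ (B \ A) := by
    intro z hz
    by_cases hzA : z ∈ A
    · exact Or.inl ⟨hzA, hz⟩
    · exact Or.inr ⟨hz, hzA⟩
  have hsubA : A ⊆ (A ∩ B) ∪ (A \ B) := by
    intro z hz
    by_cases hzB : z ∈ B
    · exact Or.inl ⟨hz, hzB⟩
    · exact Or.inr ⟨hz, hzB⟩
  by_cases hP1 : 0 < mss (A \ B) w1 (w1+1) <;>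
    by_cases hQ1 : 0 < mss (B \ A) w1 (w1+1)
  · -- pattern (T,T) : P and Q positive in both windows
    have hP2 : 0 < mss (A \ B) w2 (w2+1) := by
      by_contra hcon
      simp [hP1, hcon] at hfst
    have hQ2 : 0 < mss (B \ A) w2 (w2+1) := by
      by_contra hcon
      simp [hQ1, hcon] at hsnd
    obtain ⟨xlo1, hxlo1, θl1, hθl1, hl1⟩ := lo_pack hA hB hP1
    obtain ⟨xhi1, hxhi1, θh1, hθh1, hh1⟩ := hi_pack hA hB hmono1 hQ1
    obtain ⟨xlo2, hxlo2, θl2, hθl2, hl2⟩ := lo_pack hA hB hP2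
    obtain ⟨xhi2, hxhi2, θh2, hθh2, hh2⟩ := hi_pack hA hB hmono2 hQ2
    apply pair_from_pts hA hB (Lfac := 1/3) (tfac := 1) (Hfac := 3) h5
      (by norm_num) (by norm_num) hmono1 hmono2
    · exact ⟨xlo1, hxlo1, xhi1, hxhi1, min θl1 θh1, lt_min hθl1 hθh1, fun α h1 h2 =>
        ⟨fun e he hm => by
          have := hl1 α h1 (le_trans h2 (min_le_left _ _)) e he hm
          linarith,
         fun e he hm => by
          have := hh1 α h1 (le_trans h2 (min_le_right _ _)) e he hm
          linarith⟩⟩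
    · exact ⟨xlo2, hxlo2, xhi2, hxhi2, min θl2 θh2, lt_min hθl2 hθh2, fun α h1 h2 =>
        ⟨fun e he hm => by
          have := hl2 α h1 (le_trans h2 (min_le_left _ _)) e he hm
          linarith,
         fun e he hm => by
          have := hh2 α h1 (le_trans h2 (min_le_right _ _)) e he hm
          linarith⟩⟩
  · -- pattern (T,F) : P positive, Q null, hence A∩B positive
    have hP2 : 0 < mss (A \ B) w2 (w2+1) := by
      by_contra hcon
      simp [hP1, hcon] at hfst
    have hQ2 : ¬ (0 < mss (B \ A) w2 (w2+1)) := by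
      intro hcon
      simp [hQ1, hcon] at hsnd
    have hQ1z : mss (B \ A) w1 (w1+1) = 0 :=
      le_antisymm (not_lt.mp hQ1) (mss_nonneg _ _ _)
    have hQ2z : mss (B \ A) w2 (w2+1) = 0 :=
      le_antisymm (not_lt.mp hQ2) (mss_nonneg _ _ _)
    have hR1 : 0 < mss (A ∩ B) w1 (w1+1) := by
      have := mss_subadd hsubB w1 (w1+1)
      rw [hQ1z] at this
      linarith
    have hR2 : 0 < mss (A ∩ B) w2 (w2+1) := by
      have := mss_subadd hsubB w2 (w2+1)
      rw [hQ2z] at this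
      linarith
    obtain ⟨xlo1, hxlo1, θl1, hθl1, hl1⟩ := lo_pack hA hB hP1
    obtain ⟨xhi1, hxhi1, θh1, hθh1, hh1⟩ := mid_pack hA hB hR1
    obtain ⟨xlo2, hxlo2, θl2, hθl2, hl2⟩ := lo_pack hA hB hP2
    obtain ⟨xhi2, hxhi2, θh2, hθh2, hh2⟩ := mid_pack hA hB hR2
    apply pair_from_pts hA hB (Lfac := 1/3) (tfac := 1/2) (Hfac := 3/4) h5
      (by norm_num) (by norm_num) hmono1 hmono2
    · exact ⟨xlo1, hxlo1, xhi1, hxhi1, min θl1 θh1, lt_min hθl1 hθh1, fun α h1 h2 =>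
        ⟨fun e he hm => by
          have := hl1 α h1 (le_trans h2 (min_le_left _ _)) e he hm
          linarith,
         fun e he hm => by
          have := (hh1 α h1 (le_trans h2 (min_le_right _ _)) e he hm).1
          linarith⟩⟩
    · exact ⟨xlo2, hxlo2, xhi2, hxhi2, min θl2 θh2, lt_min hθl2 hθh2, fun α h1 h2 =>
        ⟨fun e he hm => by
          have := hl2 α h1 (le_trans h2 (min_le_left _ _)) e he hm
          linarith,
         fun e he hm => by
          have := (hh2 α h1 (le_trans h2 (min_le_right _ _)) e he hm).1
          linarith⟩⟩
  · -- pattern (F,T) : P null, Q positive, hence A∩B positive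
    have hP2 : ¬ (0 < mss (A \ B) w2 (w2+1)) := by
      intro hcon
      simp [hP1, hcon] at hfst
    have hQ2 : 0 < mss (B \ A) w2 (w2+1) := by
      by_contra hcon
      simp [hQ1, hcon] at hsnd
    have hP1z : mss (A \ B) w1 (w1+1) = 0 :=
      le_antisymm (not_lt.mp hP1) (mss_nonneg _ _ _)
    have hP2z : mss (A \ B) w2 (w2+1) = 0 :=
      le_antisymm (not_lt.mp hP2) (mss_nonneg _ _ _)
    have hR1 : 0 < mss (A ∩ B) w1 (w1+1) := by
      have := mss_subadd hsubA w1 (w1+1)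
      rw [hP1z] at this
      linarith
    have hR2 : 0 < mss (A ∩ B) w2 (w2+1) := by
      have := mss_subadd hsubA w2 (w2+1)
      rw [hP2z] at this
      linarith
    obtain ⟨xlo1, hxlo1, θl1, hθl1, hl1⟩ := mid_pack hA hB hR1
    obtain ⟨xhi1, hxhi1, θh1, hθh1, hh1⟩ := hi_pack hA hB hmono1 hQ1
    obtain ⟨xlo2, hxlo2, θl2, hθl2, hl2⟩ := mid_pack hA hB hR2
    obtain ⟨xhi2, hxhi2, θh2, hθh2, hh2⟩ := hi_pack hA hB hmono2 hQ2
    apply pair_from_pts hA hB (Lfac := 4/3) (tfac := 2) (Hfac := 3) h5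
      (by norm_num) (by norm_num) hmono1 hmono2
    · exact ⟨xlo1, hxlo1, xhi1, hxhi1, min θl1 θh1, lt_min hθl1 hθh1, fun α h1 h2 =>
        ⟨fun e he hm => by
          have := (hl1 α h1 (le_trans h2 (min_le_left _ _)) e he hm).2
          linarith,
         fun e he hm => by
          have := hh1 α h1 (le_trans h2 (min_le_right _ _)) e he hm
          linarith⟩⟩
    · exact ⟨xlo2, hxlo2, xhi2, hxhi2, min θl2 θh2, lt_min hθl2 hθh2, fun α h1 h2 =>
        ⟨fun e he hm => by
          have := (hl2 α h1 (le_trans h2 (min_le_left _ _)) e he hm).2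
          linarith,
         fun e he hm => by
          have := hh2 α h1 (le_trans h2 (min_le_right _ _)) e he hm
          linarith⟩⟩
  · -- pattern (F,F) : both P and Q null in both windows
    have hP2 : ¬ (0 < mss (A \ B) w2 (w2+1)) := by
      intro hcon
      simp [hP1, hcon] at hfst
    have hQ2 : ¬ (0 < mss (B \ A) w2 (w2+1)) := by
      intro hcon
      simp [hQ1, hcon] at hsnd
    exact ff_case hA hB h5 hAw1 hAw2
      (le_antisymm (not_lt.mp hP1) (mss_nonneg _ _ _))
      (le_antisymm (not_lt.mp hQ1) (mss_nonneg _ _ _))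
      (le_antisymm (not_lt.mp hP2) (mss_nonneg _ _ _))
      (le_antisymm (not_lt.mp hQ2) (mss_nonneg _ _ _))

theorem stmt_5 (A B : Set ℝ) (hA : MeasurableSet A) (hB : MeasurableSet B) :
    ∃ x y x' y' : ℝ, 1 < y - x ∧ 1 < y' - x' ∧ (x, y) ≠ (x', y') ∧
      volume (Set.Icc x y ∩ A) = volume (Set.Icc x' y' ∩ A) ∧
      volume (Set.Icc x y ∩ B) = volume (Set.Icc x' y' ∩ B) := by
  exact main_concl A B hA hB
end

section
/- Let Φ : [0,1] → (0,1) be a C¹ function with Φ' > 0, and let δ > 0. Then there exists a finite union of intervals T ⊆ [0,1] such that |∫_a^b (χ_T - Φ)| ≤ δ for all a, b ∈ [0,1], and ∫_0^1 (χ_T - Φ) = 0. -/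
open MeasureTheory intervalIntegral

theorem stmt_8 (Φ : ℝ → ℝ) (hΦ : ContDiffOn ℝ 1 Φ (Set.Icc 0 1))
    (hΦmem : ∀ x ∈ Set.Icc (0:ℝ) 1, Φ x ∈ Set.Ioo (0:ℝ) 1)
    (hΦ' : ∀ x ∈ Set.Icc (0:ℝ) 1, 0 < derivWithin Φ (Set.Icc 0 1) x)
    (δ : ℝ) (hδ : 0 < δ) :
    ∃ (n : ℕ) (c d : Fin n → ℝ) (T : Set ℝ),
      T = ⋃ i, Set.Icc (c i) (d i) ∧ T ⊆ Set.Icc 0 1 ∧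
      (∀ a ∈ Set.Icc (0:ℝ) 1, ∀ b ∈ Set.Icc (0:ℝ) 1,
        |∫ x in a..b, (T.indicator (fun _ => (1:ℝ)) x - Φ x)| ≤ δ) ∧
      (∫ x in (0:ℝ)..1, (T.indicator (fun _ => (1:ℝ)) x - Φ x)) = 0 := by
  obtain ⟨N0, hN0⟩ := exists_nat_ge (2/δ)
  set N : ℕ := N0 + 1 with hNdef
  have hNpos : (0:ℝ) < N := by positivity
  have hNge : 2/δ ≤ (N:ℝ) := hN0.trans (by exact_mod_cast Nat.le_succ N0)
  have h2N : 2/(N:ℝ) ≤ δ := by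
    rw [div_le_iff₀ hNpos]
    rw [div_le_iff₀ hδ] at hNge
    nlinarith
  set xg : ℕ → ℝ := fun i => (i:ℝ) / N with hxg
  have hx0 : xg 0 = 0 := by simp [hxg]
  have hxN : xg N = 1 := by simp only [hxg]; exact div_self hNpos.ne'
  have hxmono : ∀ i j : ℕ, i ≤ j → xg i ≤ xg j := by
    intro i j h
    simp only [hxg]
    gcongr
    try exact_mod_cast h
  have hstep : ∀ i : ℕ, xg (i+1) = xg i + 1/N := by
    intro i
    simp only [hxg]
    push_cast
    rw [add_div]
  have hxmem : ∀ i, i ≤ N → xg i ∈ Set.Icc (0:ℝ) 1 := by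
    intro i hi
    constructor
    · rw [← hx0]; exact hxmono 0 i (Nat.zero_le _)
    · rw [← hxN]; exact hxmono i N hi
  have hΦint : ∀ a ∈ Set.Icc (0:ℝ) 1, ∀ b ∈ Set.Icc (0:ℝ) 1,
      IntervalIntegrable Φ volume a b := by
    intro a ha b hb
    apply ContinuousOn.intervalIntegrable
    apply hΦ.continuousOn.mono
    have ha' : a ∈ Set.uIcc (0:ℝ) 1 := by
      rw [Set.uIcc_of_le (by norm_num : (0:ℝ) ≤ 1)]; exact ha
    have hb' : b ∈ Set.uIcc (0:ℝ) 1 := by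
      rw [Set.uIcc_of_le (by norm_num : (0:ℝ) ≤ 1)]; exact hb
    rw [← Set.uIcc_of_le (by norm_num : (0:ℝ) ≤ 1)]
    exact Set.uIcc_subset_uIcc ha' hb'
  set L : ℕ → ℝ := fun i => ∫ x in xg i..xg (i+1), Φ x with hLdef
  have hsubI : ∀ i, i + 1 ≤ N → Set.Icc (xg i) (xg (i+1)) ⊆ Set.Icc (0:ℝ) 1 := by
    intro i hi
    exact Set.Icc_subset_Icc (hxmem i (by omega)).1 (hxmem (i+1) hi).2
  have hL0 : ∀ i, i + 1 ≤ N → 0 ≤ L i := by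
    intro i hi
    apply intervalIntegral.integral_nonneg (hxmono i (i+1) (Nat.le_succ i))
    intro u hu
    exact (hΦmem u (hsubI i hi hu)).1.le
  have hL1 : ∀ i, i + 1 ≤ N → L i ≤ 1/N := by
    intro i hi
    have h1 : L i ≤ ∫ x in xg i..xg (i+1), (1:ℝ) := by
      apply intervalIntegral.integral_mono_on (hxmono i (i+1) (Nat.le_succ i))
        (hΦint _ (hxmem i (by omega)) _ (hxmem (i+1) hi)) intervalIntegrable_const
      intro x hx
      exact (hΦmem x (hsubI i hi hx)).2.le
    have h2 : ∫ x in xg i..xg (i+1), (1:ℝ) = 1/N := by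
      rw [intervalIntegral.integral_const, smul_eq_mul, mul_one, hstep i]
      ring
    linarith
  set T : Set ℝ := ⋃ i : Fin N, Set.Icc (xg i) (xg i + L i) with hTdef
  have hTsub : T ⊆ Set.Icc (0:ℝ) 1 := by
    rw [hTdef]
    apply Set.iUnion_subset
    intro i
    apply Set.Icc_subset_Icc (hxmem i (le_of_lt i.isLt)).1
    have h1 := hL1 i i.isLt
    have h2 := (hxmem (i+1) i.isLt).2
    rw [hstep i] at h2
    linarith
  have hTmeas : MeasurableSet T := by
    rw [hTdef]; exact MeasurableSet.iUnion fun i => measurableSet_Icc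
  have hindInt : Integrable (T.indicator fun _ => (1:ℝ)) volume := by
    rw [integrable_indicator_iff hTmeas]
    apply (integrableOn_const_iff (C := (1:ℝ))).mpr
    right
    calc volume T ≤ volume (Set.Icc (0:ℝ) 1) := measure_mono hTsub
      _ < ⊤ := by simp [Real.volume_Icc]
  set f : ℝ → ℝ := fun x => T.indicator (fun _ => (1:ℝ)) x - Φ x with hfdef
  have hfint : ∀ a ∈ Set.Icc (0:ℝ) 1, ∀ b ∈ Set.Icc (0:ℝ) 1,
      IntervalIntegrable f volume a b := by
    intro a ha b hb
    exact hindInt.intervalIntegrable.sub (hΦint a ha b hb)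
  -- key : integral of indicator over each subinterval is L i
  have key : ∀ i, i + 1 ≤ N →
      ∫ x in xg i..xg (i+1), T.indicator (fun _ => (1:ℝ)) x = L i := by
    intro i hi
    have hle : xg i ≤ xg (i+1) := hxmono _ _ (Nat.le_succ i)
    have hne : ∀ᵐ x : ℝ, x ≠ xg (i+1) := by
      rw [MeasureTheory.ae_iff]
      have : {x : ℝ | ¬ x ≠ xg (i+1)} = {xg (i+1)} := by
        ext y; simp
      rw [this]
      exact Real.volume_singleton
    have hcongr : ∫ x in xg i..xg (i+1), T.indicator (fun _ => (1:ℝ)) x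
        = ∫ x in xg i..xg (i+1), (Set.Ioc (xg i) (xg i + L i)).indicator (fun _ => (1:ℝ)) x := by
      apply intervalIntegral.integral_congr_ae
      filter_upwards [hne] with x hx hxI
      rw [Set.uIoc_of_le hle] at hxI
      obtain ⟨hx1, hx2⟩ := hxI
      have hx2' : x < xg (i+1) := lt_of_le_of_ne hx2 hx
      by_cases hxT : x ∈ T
      · have hxmem2 : x ∈ Set.Ioc (xg i) (xg i + L i) := by
          rw [hTdef, Set.mem_iUnion] at hxT
          obtain ⟨j, hj1, hj2⟩ := hxT
          have hji : (j:ℕ) = i := by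
            by_contra hji
            rcases lt_or_gt_of_ne hji with h | h
            · have hL := hL1 j (by omega)
              have h1 : xg ((j:ℕ)+1) ≤ xg i := hxmono _ _ h
              rw [hstep (j:ℕ)] at h1
              linarith
            · have h1 : xg (i+1) ≤ xg j := hxmono _ _ h
              linarith
          rw [hji] at hj1 hj2
          exact ⟨hx1, hj2⟩
        rw [Set.indicator_of_mem hxT, Set.indicator_of_mem hxmem2]
      · rw [Set.indicator_of_notMem hxT, Set.indicator_of_notMem]
        intro hmem
        apply hxT
        rw [hTdef, Set.mem_iUnion]
        exact ⟨⟨i, by omega⟩, Set.Ioc_subset_Icc_self hmem⟩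
    rw [hcongr, intervalIntegral.integral_of_le hle,
      MeasureTheory.integral_indicator measurableSet_Ioc,
      Measure.restrict_restrict measurableSet_Ioc]
    have hinter : Set.Ioc (xg i) (xg i + L i) ∩ Set.Ioc (xg i) (xg (i+1))
        = Set.Ioc (xg i) (xg i + L i) := by
      have hmin : (xg i + L i) ⊓ xg (i+1) = xg i + L i := by
        apply inf_eq_left.mpr
        rw [hstep i]
        linarith [hL1 i hi]
      rw [Set.Ioc_inter_Ioc, sup_idem, hmin]
    rw [hinter, setIntegral_const, Real.volume_real_Ioc_of_le (by linarith [hL0 i hi]), smul_eq_mul, mul_one]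
    ring
  -- F x_i = 0
  have hF : ∀ i, i ≤ N → ∫ x in (0:ℝ)..(xg i), f x = 0 := by
    intro i
    induction i with
    | zero => intro _; rw [hx0, intervalIntegral.integral_same]
    | succ k ih =>
      intro hk
      have h0 : (0:ℝ) ∈ Set.Icc (0:ℝ) 1 := by norm_num
      have hadd : ∫ x in (0:ℝ)..xg (k+1), f x
          = (∫ x in (0:ℝ)..xg k, f x) + ∫ x in xg k..xg (k+1), f x :=
        (intervalIntegral.integral_add_adjacent_intervals
          (hfint 0 h0 (xg k) (hxmem k (by omega)))
          (hfint (xg k) (hxmem k (by omega)) (xg (k+1)) (hxmem (k+1) hk))).symm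
      have hsub : ∫ x in xg k..xg (k+1), f x
          = (∫ x in xg k..xg (k+1), T.indicator (fun _ => (1:ℝ)) x)
            - ∫ x in xg k..xg (k+1), Φ x :=
        intervalIntegral.integral_sub hindInt.intervalIntegrable
          (hΦint _ (hxmem k (by omega)) _ (hxmem (k+1) hk))
      rw [hadd, ih (by omega), hsub, key k hk, zero_add, hLdef]
      ring
  -- |F t| ≤ 1/N
  have hFb : ∀ t ∈ Set.Icc (0:ℝ) 1, |∫ x in (0:ℝ)..t, f x| ≤ 1/N := by
    intro t ht
    set i : ℕ := ⌊t * N⌋₊ with hidef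
    have htN : 0 ≤ t * N := mul_nonneg ht.1 hNpos.le
    have hiN : i ≤ N := by
      have h1 : t * N ≤ N := by nlinarith [ht.2]
      calc i = ⌊t * (N:ℝ)⌋₊ := rfl
        _ ≤ ⌊(N:ℝ)⌋₊ := Nat.floor_le_floor h1
        _ = N := Nat.floor_natCast N
    have hxi_le : xg i ≤ t := by
      rw [hxg]
      rw [div_le_iff₀ hNpos]
      exact Nat.floor_le htN
    have ht_lt : t - xg i ≤ 1/N := by
      have h2 : t * N < i + 1 := Nat.lt_floor_add_one _
      rw [hxg, sub_le_iff_le_add, ← add_div, le_div_iff₀ hNpos]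
      linarith
    have h0 : (0:ℝ) ∈ Set.Icc (0:ℝ) 1 := by norm_num
    have hsplit : ∫ x in (0:ℝ)..t, f x
        = (∫ x in (0:ℝ)..xg i, f x) + ∫ x in xg i..t, f x :=
      (intervalIntegral.integral_add_adjacent_intervals
        (hfint 0 h0 (xg i) (hxmem i hiN)) (hfint (xg i) (hxmem i hiN) t ht)).symm
    rw [hsplit, hF i hiN, zero_add]
    have hbound : ∀ x ∈ Set.uIoc (xg i) t, ‖f x‖ ≤ 1 := by
      intro x hx
      rw [Set.uIoc_of_le hxi_le] at hx
      have hx01 : x ∈ Set.Icc (0:ℝ) 1 :=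
        ⟨le_trans (hxmem i hiN).1 hx.1.le, le_trans hx.2 ht.2⟩
      have hΦx := hΦmem x hx01
      have hfx : f x = T.indicator (fun _ => (1:ℝ)) x - Φ x := rfl
      rw [Real.norm_eq_abs, hfx, abs_le]
      by_cases hxT : x ∈ T
      · simp only [Set.indicator_of_mem hxT]
        constructor <;> linarith [hΦx.1, hΦx.2]
      · simp only [Set.indicator_of_notMem hxT]
        constructor <;> linarith [hΦx.1, hΦx.2]
    have hnorm := intervalIntegral.norm_integral_le_of_norm_le_const hbound
    rw [Real.norm_eq_abs] at hnorm
    calc |∫ x in xg i..t, f x| ≤ 1 * |t - xg i| := hnorm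
      _ = t - xg i := by rw [one_mul, abs_of_nonneg (by linarith)]
      _ ≤ 1/N := ht_lt
  refine ⟨N, fun i => xg i, fun i => xg i + L i, T, hTdef, hTsub, ?_, ?_⟩
  · intro a ha b hb
    show |∫ x in a..b, f x| ≤ δ
    have hrw : ∫ x in a..b, f x
        = (∫ x in (0:ℝ)..b, f x) - ∫ x in (0:ℝ)..a, f x :=
      (intervalIntegral.integral_interval_sub_left
        (hfint 0 (by norm_num) b hb) (hfint 0 (by norm_num) a ha)).symm
    rw [hrw]
    have h1 := hFb a ha
    have h2 := hFb b hb
    have h3 := abs_sub (∫ x in (0:ℝ)..b, f x) (∫ x in (0:ℝ)..a, f x)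
    have : |(∫ x in (0:ℝ)..b, f x) - ∫ x in (0:ℝ)..a, f x|
        ≤ |∫ x in (0:ℝ)..b, f x| + |∫ x in (0:ℝ)..a, f x| := abs_sub _ _
    calc |(∫ x in (0:ℝ)..b, f x) - ∫ x in (0:ℝ)..a, f x|
        ≤ |∫ x in (0:ℝ)..b, f x| + |∫ x in (0:ℝ)..a, f x| := abs_sub _ _
      _ ≤ 1/N + 1/N := add_le_add h2 h1
      _ = 2/N := by ring
      _ ≤ δ := h2N
  · show ∫ x in (0:ℝ)..1, f x = 0
    rw [← hxN]
    exact hF N le_rfl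
end
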